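/- arXiv:2410.09051 — 17 statements merged into one kernel-verified Lean document; each statement's English description precedes it below -/
import Mathlib

section
/- Let D be a division ring and R a maximal subring of D. For any λ ∈ D, the following are equivalent: (i) λR ⊆ Rλ; (ii) Rλ ⊆ λR; (iii) λR = Rλ. -/
/-- If `λRλ⁻¹ ⊆ R` for a maximal subring `R` of a division ring, then `λ⁻¹Rλ ⊆ R`. -/
lemma stmt_1_key (D : Type*) [DivisionRing D] (R : Subring D)
    (hR : R ≠ ⊤) (hmax : ∀ S : Subring D, R < S → S = ⊤)
    (l : D) (hl : l ≠ 0) (h : ∀ r ∈ R, l * r * l⁻¹ ∈ R) :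
    ∀ r ∈ R, l⁻¹ * r * l ∈ R := by
  have h1 : l * l⁻¹ = 1 := mul_inv_cancel₀ hl
  have h2 : l⁻¹ * l = 1 := inv_mul_cancel₀ hl
  -- the preimage of R under conjugation x ↦ l x l⁻¹
  let S : Subring D :=
    { carrier := {x | l * x * l⁻¹ ∈ R}
      one_mem' := by simpa [h1] using R.one_mem
      mul_mem' := by
        intro x y hx hy
        have key : (l * x * l⁻¹) * (l * y * l⁻¹) = l * (x * y) * l⁻¹ := by
          simp [mul_assoc, inv_mul_cancel_left₀ hl, mul_inv_cancel_left₀ hl]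
        have := R.mul_mem hx hy
        rwa [key] at this
      zero_mem' := by simpa using R.zero_mem
      add_mem' := by
        intro x y hx hy
        have key : (l * x * l⁻¹) + (l * y * l⁻¹) = l * (x + y) * l⁻¹ := by
          rw [mul_add, add_mul]
        have := R.add_mem hx hy
        rwa [key] at this
      neg_mem' := by
        intro x hx
        have key : -(l * x * l⁻¹) = l * (-x) * l⁻¹ := by
          rw [mul_neg, neg_mul]
        have := R.neg_mem hx
        rwa [key] at this }
  have hRS : R ≤ S := fun r hr => h r hr
  have hSR : S = R := by
    rcases eq_or_lt_of_le hRS with heq | hlt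
    · exact heq.symm
    · exfalso
      apply hR
      have hStop := hmax S hlt
      ext d
      simp only [Subring.mem_top, iff_true]
      have hd : l⁻¹ * d * l ∈ S := by rw [hStop]; trivial
      have : l * (l⁻¹ * d * l) * l⁻¹ ∈ R := hd
      have key : l * (l⁻¹ * d * l) * l⁻¹ = d := by
        simp [mul_assoc, h1, inv_mul_cancel_left₀ hl, mul_inv_cancel_left₀ hl]
      rwa [key] at this
  intro r hr
  have hx : l⁻¹ * r * l ∈ S := by
    show l * (l⁻¹ * r * l) * l⁻¹ ∈ R
    have key : l * (l⁻¹ * r * l) * l⁻¹ = r := by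
      simp [mul_assoc, h1, inv_mul_cancel_left₀ hl, mul_inv_cancel_left₀ hl]
    rwa [key]
  rw [hSR] at hx
  exact hx

theorem stmt_1 (D : Type*) [DivisionRing D] (R : Subring D)
    (hR : R ≠ ⊤) (hmax : ∀ S : Subring D, R < S → S = ⊤)
    (l : D) :
    ((fun r => l * r) '' (R : Set D) ⊆ (fun r => r * l) '' (R : Set D) ↔
      (fun r => r * l) '' (R : Set D) ⊆ (fun r => l * r) '' (R : Set D)) ∧
    ((fun r => l * r) '' (R : Set D) ⊆ (fun r => r * l) '' (R : Set D) ↔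
      (fun r => l * r) '' (R : Set D) = (fun r => r * l) '' (R : Set D)) := by
  rcases eq_or_ne l 0 with rfl | hl
  · constructor
    · constructor
      · rintro _ x ⟨r, hr, rfl⟩
        exact ⟨1, R.one_mem, by simp⟩
      · rintro _ x ⟨r, hr, rfl⟩
        exact ⟨1, R.one_mem, by simp⟩
    · constructor
      · intro _
        ext x
        constructor
        · rintro ⟨r, hr, rfl⟩; exact ⟨1, R.one_mem, by simp⟩
        · rintro ⟨r, hr, rfl⟩; exact ⟨1, R.one_mem, by simp⟩
      · rintro _ x ⟨r, hr, rfl⟩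
        exact ⟨1, R.one_mem, by simp⟩
  · have h1 : l * l⁻¹ = 1 := mul_inv_cancel₀ hl
    have h2 : l⁻¹ * l = 1 := inv_mul_cancel₀ hl
    -- forward direction
    have fwd : (fun r => l * r) '' (R : Set D) ⊆ (fun r => r * l) '' (R : Set D) →
        (fun r => r * l) '' (R : Set D) ⊆ (fun r => l * r) '' (R : Set D) := by
      intro h
      have h' : ∀ r ∈ R, l * r * l⁻¹ ∈ R := by
        intro r hr
        obtain ⟨r', hr', hrr'⟩ := h ⟨r, hr, rfl⟩
        have : l * r * l⁻¹ = r' := by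
          simp only at hrr'
          rw [← hrr', mul_assoc, h1, mul_one]
        rwa [this]
      have key := stmt_1_key D R hR hmax l hl h'
      rintro x ⟨r, hr, rfl⟩
      refine ⟨l⁻¹ * r * l, key r hr, ?_⟩
      show l * (l⁻¹ * r * l) = r * l
      simp [mul_assoc, inv_mul_cancel_left₀ hl, mul_inv_cancel_left₀ hl]
    have bwd : (fun r => r * l) '' (R : Set D) ⊆ (fun r => l * r) '' (R : Set D) →
        (fun r => l * r) '' (R : Set D) ⊆ (fun r => r * l) '' (R : Set D) := by
      intro h
      have hl' : l⁻¹ ≠ 0 := inv_ne_zero hl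
      have h' : ∀ r ∈ R, l⁻¹ * r * (l⁻¹)⁻¹ ∈ R := by
        intro r hr
        obtain ⟨r', hr', hrr'⟩ := h ⟨r, hr, rfl⟩
        simp only at hrr'
        have : l⁻¹ * r * (l⁻¹)⁻¹ = r' := by
          rw [inv_inv, mul_assoc, ← hrr', ← mul_assoc, h2, one_mul]
        rwa [this]
      have key := stmt_1_key D R hR hmax l⁻¹ hl' h'
      rintro x ⟨r, hr, rfl⟩
      have hm : (l⁻¹)⁻¹ * r * l⁻¹ ∈ R := key r hr
      rw [inv_inv] at hm
      refine ⟨l * r * l⁻¹, hm, ?_⟩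
      show (l * r * l⁻¹) * l = l * r
      rw [mul_assoc, h2, mul_one]
    refine ⟨⟨fwd, bwd⟩, ⟨fun h => Set.Subset.antisymm h (fwd h), fun h => h.le⟩⟩
end

section
/- Let D be a division ring and R a maximal subring of D. If R is a left duo ring (every left ideal of R is a two-sided ideal), then R is a right duo ring. -/
theorem stmt_2 (D : Type*) [DivisionRing D] (R : Subring D)
    (hR : R ≠ ⊤) (hmax : ∀ S : Subring D, R < S → S = ⊤)
    (hduo : ∀ a ∈ R, ∀ r ∈ R, ∃ s ∈ R, a * r = s * a) :
    ∀ a ∈ R, ∀ r ∈ R, ∃ s ∈ R, r * a = a * s := by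
  intro a ha r hr
  by_cases h0 : a = 0
  · exact ⟨0, R.zero_mem, by simp [h0]⟩
  have key : ∀ x : D, a * (a⁻¹ * x * a) * a⁻¹ = x := by
    intro x
    simp [mul_assoc, mul_inv_cancel₀ h0, mul_inv_cancel_left₀ h0]
  set S : Subring D :=
    { carrier := {x | a * x * a⁻¹ ∈ R}
      zero_mem' := by simpa using R.zero_mem
      one_mem' := by simpa [mul_inv_cancel₀ h0] using R.one_mem
      add_mem' := fun {x y} hx hy => by
        simpa [mul_add, add_mul] using R.add_mem hx hy
      neg_mem' := fun {x} hx => by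
        simpa [mul_neg, neg_mul] using R.neg_mem hx
      mul_mem' := fun {x y} hx hy => by
        have : (a * x * a⁻¹) * (a * y * a⁻¹) = a * (x * y) * a⁻¹ := by
          simp [mul_assoc, inv_mul_cancel_left₀ h0]
        simpa [this] using R.mul_mem hx hy } with hS
  have hRS : R ≤ S := by
    intro x hx
    obtain ⟨s, hs, hsx⟩ := hduo a ha x hx
    show a * x * a⁻¹ ∈ R
    rw [hsx, mul_assoc, mul_inv_cancel₀ h0, mul_one]
    exact hs
  have hSR : S = R := by
    by_contra hne
    have hlt : R < S := lt_of_le_of_ne hRS (Ne.symm hne)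
    have htop := hmax S hlt
    apply hR
    rw [eq_top_iff]
    intro y _
    have hy : a⁻¹ * y * a ∈ S := by rw [htop]; trivial
    have h1 : a * (a⁻¹ * y * a) * a⁻¹ ∈ R := hy
    rwa [key y] at h1
  refine ⟨a⁻¹ * r * a, ?_, ?_⟩
  · have h1 : a⁻¹ * r * a ∈ S := by
      show a * (a⁻¹ * r * a) * a⁻¹ ∈ R
      rwa [key r]
    rwa [hSR] at h1
  · rw [← mul_assoc, ← mul_assoc, mul_inv_cancel₀ h0, one_mul]
end

section
/- Let D be a division ring and R a maximal subring of D. Then either there exists λ ∈ D \ R with λR = Rλ, or the normalizer N(R) = {x ∈ D : xR = Rx} equals U(R) ∪ {0}, where U(R) is the group of units of R. -/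
theorem stmt_3 (D : Type*) [DivisionRing D] (R : Subring D)
    (hR : R ≠ ⊤) (hmax : ∀ S : Subring D, R < S → S = ⊤) :
    (∃ l : D, l ∉ R ∧ (fun r => l * r) '' (R : Set D) = (fun r => r * l) '' (R : Set D)) ∨
    (∀ x : D, (fun r => x * r) '' (R : Set D) = (fun r => r * x) '' (R : Set D) ↔
      (x = 0 ∨ (x ∈ R ∧ ∃ y ∈ R, x * y = 1 ∧ y * x = 1))) := by
  by_cases hl : ∃ l : D, l ∉ R ∧
      (fun r => l * r) '' (R : Set D) = (fun r => r * l) '' (R : Set D)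
  · exact Or.inl hl
  · push_neg at hl
    right
    intro x
    constructor
    · intro hx
      by_cases hx0 : x = 0
      · exact Or.inl hx0
      · have hxR : x ∈ R := by
          by_contra h
          exact hl x h hx
        have hinv : (fun r => x⁻¹ * r) '' (R : Set D) = (fun r => r * x⁻¹) '' (R : Set D) := by
          ext a
          constructor
          · rintro ⟨r, hr, rfl⟩
            have hrx : r * x ∈ (fun r => x * r) '' (R : Set D) := by
              rw [hx]; exact ⟨r, hr, rfl⟩
            obtain ⟨s, hs, hse0⟩ := hrx
            have hse : x * s = r * x := hse0
            refine ⟨s, hs, ?_⟩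
            show s * x⁻¹ = x⁻¹ * r
            calc s * x⁻¹ = x⁻¹ * (x * s) * x⁻¹ := by
                  rw [← mul_assoc, inv_mul_cancel₀ hx0, one_mul]
              _ = x⁻¹ * (r * x) * x⁻¹ := by rw [hse]
              _ = x⁻¹ * r := by
                  rw [mul_assoc, mul_assoc, mul_inv_cancel₀ hx0, mul_one]
          · rintro ⟨r, hr, rfl⟩
            have hrx : x * r ∈ (fun r => r * x) '' (R : Set D) := by
              rw [← hx]; exact ⟨r, hr, rfl⟩
            obtain ⟨s, hs, hse0⟩ := hrx
            have hse : s * x = x * r := hse0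
            refine ⟨s, hs, ?_⟩
            show x⁻¹ * s = r * x⁻¹
            calc x⁻¹ * s = x⁻¹ * (s * x) * x⁻¹ := by
                  rw [mul_assoc, mul_assoc, mul_inv_cancel₀ hx0, mul_one]
              _ = x⁻¹ * (x * r) * x⁻¹ := by rw [hse]
              _ = r * x⁻¹ := by
                  rw [← mul_assoc, inv_mul_cancel₀ hx0, one_mul]
        have hxiR : x⁻¹ ∈ R := by
          by_contra h
          exact hl x⁻¹ h hinv
        exact Or.inr ⟨hxR, x⁻¹, hxiR, mul_inv_cancel₀ hx0, inv_mul_cancel₀ hx0⟩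
    · rintro (rfl | ⟨hxR, y, hyR, hxy, hyx⟩)
      · ext a
        constructor
        · rintro ⟨r, hr, rfl⟩
          exact ⟨0, R.zero_mem, by simp⟩
        · rintro ⟨r, hr, rfl⟩
          exact ⟨0, R.zero_mem, by simp⟩
      · ext a
        constructor
        · rintro ⟨r, hr, rfl⟩
          refine ⟨x * r * y, R.mul_mem (R.mul_mem hxR hr) hyR, ?_⟩
          show x * r * y * x = x * r
          rw [mul_assoc, hyx, mul_one]
        · rintro ⟨r, hr, rfl⟩
          refine ⟨y * (r * x), R.mul_mem hyR (R.mul_mem hr hxR), ?_⟩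
          show x * (y * (r * x)) = r * x
          rw [← mul_assoc, hxy, one_mul]
end

section
/- Let D be a division ring and R a subring of D. Suppose there exist λ₁,…,λₙ ∈ D with Rλᵢ = λᵢR for each i, such that D = Rλ₁ + Rλ₂ + ⋯ + Rλₙ. Then R is a division ring. -/
set_option maxHeartbeats 1000000
set_option synthInstance.maxHeartbeats 200000

section Aux
variable {D : Type*} [DivisionRing D] {R : Subring D}

theorem aux_smul_def (r : ↥R) (x : D) : r • x = (r : D) * x := by
  rw [Subring.smul_def, smul_eq_mul]

/-- The submodule `{x | μ * x ∈ N}` when `μ` left-normalizes `R`. -/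
def auxPull (N : Submodule ↥R D) (μ : D)
    (hμ : ∀ r : ↥R, ∃ r' : ↥R, μ * (r : D) = (r' : D) * μ) : Submodule ↥R D where
  carrier := {x | μ * x ∈ N}
  add_mem' := by
    intro x y hx hy
    simp only [Set.mem_setOf_eq, mul_add] at *
    exact N.add_mem hx hy
  zero_mem' := by simp
  smul_mem' := by
    intro r x hx
    simp only [Set.mem_setOf_eq, aux_smul_def] at *
    obtain ⟨r', hr'⟩ := hμ r
    rw [← mul_assoc, hr', mul_assoc]
    have := N.smul_mem r' hx
    rwa [aux_smul_def] at this

/-- The submodule `{d | ∃ v ∈ V, d - μ * v ∈ N}`. -/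
def auxPush (N V : Submodule ↥R D) (μ : D)
    (hμ : ∀ r : ↥R, ∃ r' : ↥R, (r : D) * μ = μ * (r' : D)) : Submodule ↥R D where
  carrier := {d | ∃ v ∈ V, d - μ * v ∈ N}
  zero_mem' := ⟨0, V.zero_mem, by simp⟩
  add_mem' := by
    rintro x y ⟨v, hv, hx⟩ ⟨w, hw, hy⟩
    refine ⟨v + w, V.add_mem hv hw, ?_⟩
    have h : x + y - μ * (v + w) = (x - μ * v) + (y - μ * w) := by
      rw [mul_add]; abel
    rw [h]
    exact N.add_mem hx hy
  smul_mem' := by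
    rintro r x ⟨v, hv, hx⟩
    obtain ⟨r', hr'⟩ := hμ r
    refine ⟨r' • v, V.smul_mem r' hv, ?_⟩
    have h1 : r • x - μ * (r' • v) = (r : D) * (x - μ * v) := by
      rw [aux_smul_def, aux_smul_def, ← mul_assoc, ← hr', mul_sub, mul_assoc]
    rw [h1]
    have := N.smul_mem r hx
    rwa [aux_smul_def] at this

end Aux

theorem stmt_4 (D : Type*) [DivisionRing D] (R : Subring D)
    (n : ℕ) (l : Fin n → D)
    (hnorm : ∀ i, (fun r => r * l i) '' (R : Set D) = (fun r => l i * r) '' (R : Set D))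
    (hgen : ∀ x : D, ∃ r : Fin n → D, (∀ i, r i ∈ R) ∧ x = ∑ i, r i * l i) :
    ∀ a ∈ R, a ≠ 0 → ∃ b ∈ R, a * b = 1 ∧ b * a = 1 := by
  intro a haR ha0
  -- normalizing facts
  have hconj1 : ∀ i (r : ↥R), ∃ r' : ↥R, l i * (r : D) = (r' : D) * l i := by
    intro i r
    have h : l i * (r : D) ∈ (fun r => l i * r) '' (R : Set D) := ⟨(r : D), r.2, rfl⟩
    rw [← hnorm i] at h
    obtain ⟨r', hr', h⟩ := h
    exact ⟨⟨r', hr'⟩, h.symm⟩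
  have hconj2 : ∀ i (r : ↥R), ∃ r' : ↥R, (r : D) * l i = l i * (r' : D) := by
    intro i r
    have h : (r : D) * l i ∈ (fun r => r * l i) '' (R : Set D) := ⟨(r : D), r.2, rfl⟩
    rw [hnorm i] at h
    obtain ⟨r', hr', h⟩ := h
    exact ⟨⟨r', hr'⟩, h.symm⟩
  -- D is finitely generated over R
  have hspan : Submodule.span ↥R (Set.range l) = (⊤ : Submodule ↥R D) := by
    rw [eq_top_iff]
    intro x _
    obtain ⟨r, hr, rfl⟩ := hgen x
    refine Submodule.sum_mem _ fun i _ => ?_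
    exact Submodule.smul_mem _ (⟨r i, hr i⟩ : ↥R) (Submodule.subset_span ⟨i, rfl⟩)
  have hfg : (⊤ : Submodule ↥R D).FG :=
    (Submodule.fg_def).2 ⟨Set.range l, Set.finite_range l, hspan⟩
  haveI : IsCoatomic (Submodule ↥R D) :=
    CompleteLattice.coatomic_of_top_compact ((Submodule.fg_iff_compact _).1 hfg)
  haveI : Nontrivial (Submodule ↥R D) := ⟨⊥, ⊤, bot_ne_top⟩
  obtain ⟨N, hN⟩ := IsCoatomic.exists_coatom (α := Submodule ↥R D)
  -- the pulled-back submodules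
  set K : Fin n → Submodule ↥R D := fun i => auxPull N (l i) (hconj1 i) with hK
  have hKmem : ∀ i (x : D), x ∈ K i ↔ l i * x ∈ N := fun i x => Iff.rfl
  -- intersection is trivial
  have hKinf : (⨅ i, K i) = ⊥ := by
    rw [eq_bot_iff]
    intro x hx
    simp only [Submodule.mem_iInf] at hx
    by_contra hx0
    rw [Submodule.mem_bot] at hx0
    have hall : ∀ d : D, d ∈ N := by
      intro d
      obtain ⟨r, hr, hre⟩ := hgen (d * x⁻¹)
      have hd : d = ∑ i, r i * (l i * x) := by
        have h : d = d * x⁻¹ * x := by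
          rw [mul_assoc, inv_mul_cancel₀ hx0, mul_one]
        rw [h, hre, Finset.sum_mul]
        exact Finset.sum_congr rfl fun i _ => (mul_assoc _ _ _)
      rw [hd]
      refine Submodule.sum_mem _ fun i _ => ?_
      exact N.smul_mem (⟨r i, hr i⟩ : ↥R) (hx i)
    exact hN.1 (eq_top_iff.2 fun d _ => hall d)
  -- each K i is either top or a coatom
  have hKfacts : ∀ i, l i = 0 ∨ IsCoatom (K i) := by
    intro i
    by_cases hli : l i = 0
    · exact Or.inl hli
    refine Or.inr ⟨?_, ?_⟩
    · -- K i ≠ ⊤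
      intro htop
      refine hN.1 (eq_top_iff.2 fun d _ => ?_)
      have h : (l i)⁻¹ * d ∈ K i := htop ▸ Submodule.mem_top
      rw [hKmem, ← mul_assoc, mul_inv_cancel₀ hli, one_mul] at h
      exact h
    · -- maximality
      intro V hV
      obtain ⟨v₀, hv₀V, hv₀K⟩ := SetLike.exists_of_lt hV
      set W : Submodule ↥R D := auxPush N V (l i) (hconj2 i) with hW
      have hNW : N < W := by
        constructor
        · intro d hd
          exact ⟨0, V.zero_mem, by simpa using hd⟩
        · intro hle
          exact hv₀K ((hKmem i v₀).2 (hle ⟨v₀, hv₀V, by simp⟩))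
      have hWtop : W = ⊤ := hN.2 W hNW
      rw [eq_top_iff]
      intro x _
      have hxW : l i * x ∈ W := hWtop ▸ Submodule.mem_top
      obtain ⟨v, hvV, hsub⟩ := hxW
      have h : x - v ∈ K i := by
        rw [hKmem, mul_sub]
        exact hsub
      have hxv : x - v ∈ V := le_of_lt hV h
      have h2 := V.add_mem hxv hvV
      rwa [sub_add_cancel] at h2
  -- Noetherianity of the quotients
  haveI hnoeth : ∀ i, IsNoetherian ↥R (D ⧸ K i) := by
    intro i
    rcases hKfacts i with h0 | hco
    · have hKtop : K i = ⊤ := by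
        rw [eq_top_iff]
        intro x _
        rw [hKmem, h0, zero_mul]
        exact N.zero_mem
      haveI : Subsingleton (D ⧸ K i) :=
        Submodule.Quotient.subsingleton_iff.2 hKtop
      exact isNoetherian_def.2 fun s => Subsingleton.elim (⊥ : Submodule ↥R (D ⧸ K i)) s ▸ Submodule.fg_bot
    · haveI : IsSimpleModule ↥R (D ⧸ K i) := isSimpleModule_iff_isCoatom.2 hco
      infer_instance
  -- D is Noetherian as R-module
  haveI : IsNoetherian ↥R D := by
    refine isNoetherian_of_injective (LinearMap.pi fun i => (K i).mkQ) ?_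
    rw [← LinearMap.ker_eq_bot, LinearMap.ker_pi]
    simp only [Submodule.ker_mkQ]
    exact hKinf
  -- the chain of spans of powers of a⁻¹
  set g : ℕ →o Submodule ↥R D :=
    ⟨fun k => Submodule.span ↥R (Set.range fun j : Fin (k + 1) => a⁻¹ ^ (j : ℕ)), by
      refine monotone_nat_of_le_succ fun k => Submodule.span_le.2 ?_
      rintro _ ⟨j, rfl⟩
      exact Submodule.subset_span ⟨⟨(j : ℕ), by omega⟩, rfl⟩⟩ with hg
  obtain ⟨m, hm⟩ := monotone_stabilizes_iff_noetherian.2 ‹_› g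
  have hbmem : a⁻¹ ^ (m + 1) ∈ g m := by
    rw [hm (m + 1) (Nat.le_succ m)]
    exact Submodule.subset_span ⟨Fin.last (m + 1), by simp⟩
  obtain ⟨c, hc⟩ := (Submodule.mem_span_range_iff_exists_fun _).1 hbmem
  -- assemble the inverse
  set bb : D := ∑ j : Fin (m + 1), (c j : D) * a ^ (m - (j : ℕ)) with hbb
  have hbmemR : bb ∈ R := R.sum_mem fun j _ => R.mul_mem (c j).2 (R.pow_mem haR _)
  have key : bb * a = 1 := by
    have h1 : (1 : D) = a⁻¹ ^ (m + 1) * a ^ (m + 1) := by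
      rw [inv_pow, inv_mul_cancel₀ (pow_ne_zero _ ha0)]
    have h2 : ∀ j : Fin (m + 1), a⁻¹ ^ (j : ℕ) * a ^ (m + 1) = a ^ (m + 1 - (j : ℕ)) := by
      intro j
      have h3 : a ^ (m + 1) = a ^ (j : ℕ) * a ^ (m + 1 - (j : ℕ)) := by
        rw [← pow_add]
        congr 1
        omega
      rw [h3, inv_pow, ← mul_assoc, inv_mul_cancel₀ (pow_ne_zero _ ha0), one_mul]
    calc bb * a
        = ∑ j : Fin (m + 1), (c j : D) * a ^ (m + 1 - (j : ℕ)) := by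
          rw [hbb, Finset.sum_mul]
          refine Finset.sum_congr rfl fun j _ => ?_
          rw [mul_assoc, ← pow_succ]
          have hj := j.isLt
          have he : m - (j : ℕ) + 1 = m + 1 - (j : ℕ) := by omega
          rw [he]
      _ = ∑ j : Fin (m + 1), ((c j : D) * a⁻¹ ^ (j : ℕ)) * a ^ (m + 1) := by
          refine Finset.sum_congr rfl fun j _ => ?_
          rw [mul_assoc, h2 j]
      _ = (∑ j : Fin (m + 1), (c j : D) * a⁻¹ ^ (j : ℕ)) * a ^ (m + 1) := by
          rw [Finset.sum_mul]
      _ = a⁻¹ ^ (m + 1) * a ^ (m + 1) := by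
          have h4 : (∑ j : Fin (m + 1), (c j : D) * a⁻¹ ^ (j : ℕ)) = a⁻¹ ^ (m + 1) := by
            rw [← hc]
            try exact Finset.sum_congr rfl fun j _ => (aux_smul_def _ _).symm
          rw [h4]
      _ = 1 := h1.symm
  have hinv : bb = a⁻¹ := by
    rw [← one_mul a⁻¹, ← key, mul_assoc, mul_inv_cancel₀ ha0, mul_one]
  exact ⟨bb, hbmemR, by rw [hinv, mul_inv_cancel₀ ha0], key⟩
end

section
/- Let D be a non-commutative division ring, R a maximal subring of D, and a a nonzero non-unit of R with aR = Ra. Then every nonzero left ideal of R contains a power of a, and similarly every nonzero right ideal of R contains a power of a. -/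
theorem stmt_5 (D : Type*) [DivisionRing D] (hnc : ∃ x y : D, x * y ≠ y * x)
    (R : Subring D) (hR : R ≠ ⊤) (hmax : ∀ S : Subring D, R < S → S = ⊤)
    (a : D) (haR : a ∈ R) (ha0 : a ≠ 0)
    (hanu : ¬∃ b ∈ R, a * b = 1 ∧ b * a = 1)
    (hcomm : (fun r => a * r) '' (R : Set D) = (fun r => r * a) '' (R : Set D)) :
    (∀ I : Set D, I ⊆ R → (∀ x ∈ I, ∀ y ∈ I, x + y ∈ I) →
      (∀ r ∈ R, ∀ x ∈ I, r * x ∈ I) → (∃ x ∈ I, x ≠ 0) →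
      ∃ n : ℕ, 1 ≤ n ∧ a ^ n ∈ I) ∧
    (∀ I : Set D, I ⊆ R → (∀ x ∈ I, ∀ y ∈ I, x + y ∈ I) →
      (∀ r ∈ R, ∀ x ∈ I, x * r ∈ I) → (∃ x ∈ I, x ≠ 0) →
      ∃ n : ℕ, 1 ≤ n ∧ a ^ n ∈ I) := by
  have hainv : a⁻¹ ∉ R := by
    intro h
    exact hanu ⟨a⁻¹, h, mul_inv_cancel₀ ha0, inv_mul_cancel₀ ha0⟩
  have hapow : ∀ n : ℕ, a ^ n ∈ R := fun n => R.pow_mem haR n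
  have key1 : ∀ r ∈ R, ∃ r' ∈ R, a * r = r' * a := by
    intro r hr
    have : a * r ∈ (fun r => r * a) '' (R : Set D) := hcomm ▸ ⟨r, hr, rfl⟩
    obtain ⟨r', hr', h⟩ := this
    exact ⟨r', hr', h.symm⟩
  have key2 : ∀ r ∈ R, ∃ r' ∈ R, r * a = a * r' := by
    intro r hr
    have : r * a ∈ (fun r => a * r) '' (R : Set D) := hcomm.symm ▸ ⟨r, hr, rfl⟩
    obtain ⟨r', hr', h⟩ := this
    exact ⟨r', hr', h.symm⟩
  have keyn1 : ∀ n : ℕ, ∀ r ∈ R, ∃ r' ∈ R, a ^ n * r = r' * a ^ n := by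
    intro n
    induction n with
    | zero => intro r hr; exact ⟨r, hr, by simp⟩
    | succ n ih =>
      intro r hr
      obtain ⟨t, ht, h1⟩ := ih r hr
      obtain ⟨s, hs, h2⟩ := key1 t ht
      refine ⟨s, hs, ?_⟩
      rw [pow_succ', mul_assoc, h1, ← mul_assoc, h2, mul_assoc, ← pow_succ']
  have keyn2 : ∀ n : ℕ, ∀ r ∈ R, ∃ r' ∈ R, r * a ^ n = a ^ n * r' := by
    intro n
    induction n with
    | zero => intro r hr; exact ⟨r, hr, by simp⟩
    | succ n ih =>
      intro r hr
      obtain ⟨t, ht, h1⟩ := ih r hr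
      obtain ⟨s, hs, h2⟩ := key2 t ht
      refine ⟨s, hs, ?_⟩
      rw [pow_succ, ← mul_assoc, h1, mul_assoc, h2, ← mul_assoc, ← pow_succ]
  constructor
  · -- left ideals
    let T : Subring D :=
      { carrier := {x | ∃ n : ℕ, a ^ n * x ∈ R},
        one_mem' := ⟨0, by simpa using R.one_mem⟩,
        zero_mem' := ⟨0, by simpa using R.zero_mem⟩,
        add_mem' := by
          rintro x y ⟨n, hn⟩ ⟨m, hm⟩
          refine ⟨n + m, ?_⟩
          have h1 : a ^ (n + m) * x = a ^ m * (a ^ n * x) := by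
            rw [add_comm, pow_add, mul_assoc]
          have h2 : a ^ (n + m) * y = a ^ n * (a ^ m * y) := by
            rw [pow_add, mul_assoc]
          rw [mul_add, h1, h2]
          exact R.add_mem (R.mul_mem (hapow m) hn) (R.mul_mem (hapow n) hm)
        mul_mem' := by
          rintro x y ⟨n, hn⟩ ⟨m, hm⟩
          refine ⟨n + m, ?_⟩
          obtain ⟨r', hr', hcr⟩ := keyn1 m _ hn
          have : a ^ (n + m) * (x * y) = r' * (a ^ m * y) := by
            rw [add_comm, pow_add]
            calc a ^ m * a ^ n * (x * y) = (a ^ m * (a ^ n * x)) * y := by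
                  simp only [mul_assoc]
              _ = (r' * a ^ m) * y := by rw [hcr]
              _ = r' * (a ^ m * y) := by rw [mul_assoc]
          rw [this]
          exact R.mul_mem hr' hm
        neg_mem' := by
          rintro x ⟨n, hn⟩
          exact ⟨n, by rw [mul_neg]; exact R.neg_mem hn⟩ }
    have memT : ∀ x : D, x ∈ T ↔ ∃ n : ℕ, a ^ n * x ∈ R := fun x => Iff.rfl
    have hRT : R < T := by
      constructor
      · intro r hr
        exact (memT r).2 ⟨0, by simpa using hr⟩
      · intro hle
        exact hainv (hle ((memT a⁻¹).2 ⟨1, by simpa [mul_inv_cancel₀ ha0] using R.one_mem⟩))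
    have hTtop : T = ⊤ := hmax T hRT
    intro I hIR hadd hmul ⟨x, hxI, hx0⟩
    have hxinv : x⁻¹ ∈ T := hTtop ▸ Subring.mem_top _
    obtain ⟨n, hn⟩ := (memT x⁻¹).1 hxinv
    have han : a ^ n ∈ I := by
      have : (a ^ n * x⁻¹) * x = a ^ n := by
        rw [mul_assoc, inv_mul_cancel₀ hx0, mul_one]
      exact this ▸ hmul _ hn _ hxI
    refine ⟨n + 1, le_add_self, ?_⟩
    have : a ^ (n + 1) = a * a ^ n := by rw [pow_succ']
    rw [this]
    exact hmul a haR _ han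
  · -- right ideals
    let T : Subring D :=
      { carrier := {x | ∃ n : ℕ, x * a ^ n ∈ R},
        one_mem' := ⟨0, by simpa using R.one_mem⟩,
        zero_mem' := ⟨0, by simpa using R.zero_mem⟩,
        add_mem' := by
          rintro x y ⟨n, hn⟩ ⟨m, hm⟩
          refine ⟨n + m, ?_⟩
          have h1 : x * a ^ (n + m) = (x * a ^ n) * a ^ m := by
            rw [pow_add, mul_assoc]
          have h2 : y * a ^ (n + m) = (y * a ^ m) * a ^ n := by
            rw [add_comm, pow_add, mul_assoc]
          rw [add_mul, h1, h2]
          exact R.add_mem (R.mul_mem hn (hapow m)) (R.mul_mem hm (hapow n))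
        mul_mem' := by
          rintro x y ⟨n, hn⟩ ⟨m, hm⟩
          refine ⟨n + m, ?_⟩
          obtain ⟨r', hr', hcr⟩ := keyn2 n _ hm
          have : (x * y) * a ^ (n + m) = (x * a ^ n) * r' := by
            rw [add_comm, pow_add]
            calc x * y * (a ^ m * a ^ n) = x * ((y * a ^ m) * a ^ n) := by
                  simp only [mul_assoc]
              _ = x * (a ^ n * r') := by rw [hcr]
              _ = (x * a ^ n) * r' := by simp only [mul_assoc]
          rw [this]
          exact R.mul_mem hn hr'
        neg_mem' := by
          rintro x ⟨n, hn⟩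
          exact ⟨n, by rw [neg_mul]; exact R.neg_mem hn⟩ }
    have memT : ∀ x : D, x ∈ T ↔ ∃ n : ℕ, x * a ^ n ∈ R := fun x => Iff.rfl
    have hRT : R < T := by
      constructor
      · intro r hr
        exact (memT r).2 ⟨0, by simpa using hr⟩
      · intro hle
        exact hainv (hle ((memT a⁻¹).2 ⟨1, by simpa [inv_mul_cancel₀ ha0] using R.one_mem⟩))
    have hTtop : T = ⊤ := hmax T hRT
    intro I hIR hadd hmul ⟨x, hxI, hx0⟩
    have hxinv : x⁻¹ ∈ T := hTtop ▸ Subring.mem_top _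
    obtain ⟨n, hn⟩ := (memT x⁻¹).1 hxinv
    have han : a ^ n ∈ I := by
      have : x * (x⁻¹ * a ^ n) = a ^ n := by
        rw [← mul_assoc, mul_inv_cancel₀ hx0, one_mul]
      exact this ▸ hmul _ hn _ hxI
    refine ⟨n + 1, le_add_self, ?_⟩
    have : a ^ (n + 1) = a ^ n * a := by rw [pow_succ]
    rw [this]
    exact hmul a haR _ han
end

section
/- Let D be a non-commutative division ring, R a maximal subring of D, and a a nonzero non-unit of R with aR = Ra. Then every element of D can be written as a⁻ⁿ r for some n ≥ 0 and r ∈ R, and also as s a⁻ᵐ for some m ≥ 0 and s ∈ R. In particular D = R[a⁻¹]. -/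
theorem stmt_6 (D : Type*) [DivisionRing D] (hnc : ∃ x y : D, x * y ≠ y * x)
    (R : Subring D) (hR : R ≠ ⊤) (hmax : ∀ S : Subring D, R < S → S = ⊤)
    (a : D) (haR : a ∈ R) (ha0 : a ≠ 0)
    (hanu : ¬∃ b ∈ R, a * b = 1 ∧ b * a = 1)
    (hcomm : (fun r => a * r) '' (R : Set D) = (fun r => r * a) '' (R : Set D)) :
    (∀ x : D, ∃ (n : ℕ) (r : D), r ∈ R ∧ x = (a⁻¹) ^ n * r) ∧
    (∀ x : D, ∃ (m : ℕ) (s : D), s ∈ R ∧ x = s * (a⁻¹) ^ m) ∧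
    Subring.closure ((R : Set D) ∪ {a⁻¹}) = ⊤ := by
  have hainv : a⁻¹ ∉ R := fun h =>
    hanu ⟨a⁻¹, h, mul_inv_cancel₀ ha0, inv_mul_cancel₀ ha0⟩
  -- basic swap lemmas
  have swap1 : ∀ r ∈ R, ∃ r' ∈ R, a⁻¹ * r = r' * a⁻¹ := by
    intro r hr
    have hmem : r * a ∈ (fun r => a * r) '' (R : Set D) := by
      rw [hcomm]; exact ⟨r, hr, rfl⟩
    obtain ⟨r', hr', h⟩ := hmem
    refine ⟨r', hr', ?_⟩
    have h' : r' = a⁻¹ * (r * a) := by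
      rw [← h]; rw [inv_mul_cancel_left₀ ha0]
    rw [h', mul_assoc, mul_assoc, mul_inv_cancel₀ ha0, mul_one]
  have swap2 : ∀ r ∈ R, ∃ r' ∈ R, r * a⁻¹ = a⁻¹ * r' := by
    intro r hr
    have hmem : a * r ∈ (fun r => r * a) '' (R : Set D) := by
      rw [← hcomm]; exact ⟨r, hr, rfl⟩
    obtain ⟨r', hr', h⟩ := hmem
    refine ⟨r', hr', ?_⟩
    have h' : r' = (a * r) * a⁻¹ := by
      rw [← h]; rw [mul_inv_cancel_right₀ ha0]
    rw [h', ← mul_assoc, ← mul_assoc, inv_mul_cancel₀ ha0, one_mul]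
  -- power versions
  have pswap1 : ∀ n : ℕ, ∀ r ∈ R, ∃ r' ∈ R, (a⁻¹) ^ n * r = r' * (a⁻¹) ^ n := by
    intro n
    induction n with
    | zero => exact fun r hr => ⟨r, hr, by simp⟩
    | succ n ih =>
      intro r hr
      obtain ⟨r1, hr1, h1⟩ := swap1 r hr
      obtain ⟨r2, hr2, h2⟩ := ih r1 hr1
      refine ⟨r2, hr2, ?_⟩
      calc (a⁻¹) ^ (n + 1) * r = (a⁻¹) ^ n * (a⁻¹ * r) := by rw [pow_succ, mul_assoc]
        _ = (a⁻¹) ^ n * (r1 * a⁻¹) := by rw [h1]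
        _ = ((a⁻¹) ^ n * r1) * a⁻¹ := by rw [mul_assoc]
        _ = (r2 * (a⁻¹) ^ n) * a⁻¹ := by rw [h2]
        _ = r2 * (a⁻¹) ^ (n + 1) := by rw [mul_assoc, pow_succ]
  have pswap2 : ∀ n : ℕ, ∀ r ∈ R, ∃ r' ∈ R, r * (a⁻¹) ^ n = (a⁻¹) ^ n * r' := by
    intro n
    induction n with
    | zero => exact fun r hr => ⟨r, hr, by simp⟩
    | succ n ih =>
      intro r hr
      obtain ⟨r1, hr1, h1⟩ := swap2 r hr
      obtain ⟨r2, hr2, h2⟩ := ih r1 hr1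
      refine ⟨r2, hr2, ?_⟩
      calc r * (a⁻¹) ^ (n + 1) = (r * a⁻¹) * (a⁻¹) ^ n := by rw [pow_succ', ← mul_assoc]
        _ = (a⁻¹ * r1) * (a⁻¹) ^ n := by rw [h1]
        _ = a⁻¹ * (r1 * (a⁻¹) ^ n) := by rw [mul_assoc]
        _ = a⁻¹ * ((a⁻¹) ^ n * r2) := by rw [h2]
        _ = (a⁻¹) ^ (n + 1) * r2 := by rw [pow_succ', mul_assoc]
  have hpow : ∀ {n m : ℕ}, n ≤ m → (a⁻¹) ^ m * a ^ (m - n) = (a⁻¹) ^ n := by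
    intro n m h
    have h1 : (a⁻¹) ^ m = (a⁻¹) ^ n * (a⁻¹) ^ (m - n) := by
      rw [← pow_add, Nat.add_sub_cancel' h]
    have h2 : (a⁻¹) ^ (m - n) * a ^ (m - n) = 1 := by
      rw [inv_pow]; exact inv_mul_cancel₀ (pow_ne_zero _ ha0)
    rw [h1, mul_assoc, h2, mul_one]
  -- the left subring S
  let S : Subring D :=
  { carrier := {x | ∃ n : ℕ, ∃ r : D, r ∈ R ∧ x = (a⁻¹) ^ n * r}
    zero_mem' := ⟨0, 0, R.zero_mem, by simp⟩
    one_mem' := ⟨0, 1, R.one_mem, by simp⟩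
    add_mem' := by
      rintro x y ⟨n, r, hr, rfl⟩ ⟨m, s, hs, rfl⟩
      rcases le_total n m with h | h
      · exact ⟨m, a ^ (m - n) * r + s,
          R.add_mem (R.mul_mem (pow_mem haR _) hr) hs,
          by rw [mul_add, ← mul_assoc, hpow h]⟩
      · exact ⟨n, r + a ^ (n - m) * s,
          R.add_mem hr (R.mul_mem (pow_mem haR _) hs),
          by rw [mul_add, ← mul_assoc, hpow h]⟩
    neg_mem' := by
      rintro x ⟨n, r, hr, rfl⟩
      exact ⟨n, -r, R.neg_mem hr, by rw [mul_neg]⟩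
    mul_mem' := by
      rintro x y ⟨n, r, hr, rfl⟩ ⟨m, s, hs, rfl⟩
      obtain ⟨r', hr', h⟩ := pswap2 m r hr
      refine ⟨n + m, r' * s, R.mul_mem hr' hs, ?_⟩
      calc (a⁻¹) ^ n * r * ((a⁻¹) ^ m * s)
          = (a⁻¹) ^ n * (r * (a⁻¹) ^ m) * s := by rw [mul_assoc, mul_assoc, mul_assoc]
        _ = (a⁻¹) ^ n * ((a⁻¹) ^ m * r') * s := by rw [h]
        _ = (a⁻¹) ^ (n + m) * (r' * s) := by
            rw [pow_add, mul_assoc, mul_assoc, ← mul_assoc (a⁻¹ ^ n)] }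
  have hRS : R < S := by
    refine lt_of_le_of_ne (fun r hr => ⟨0, r, hr, by simp⟩) ?_
    intro hEq
    have : a⁻¹ ∈ S := ⟨1, 1, R.one_mem, by simp⟩
    rw [← hEq] at this
    exact hainv this
  have hS : S = ⊤ := hmax S hRS
  -- the right subring T
  let T : Subring D :=
  { carrier := {x | ∃ m : ℕ, ∃ s : D, s ∈ R ∧ x = s * (a⁻¹) ^ m}
    zero_mem' := ⟨0, 0, R.zero_mem, by simp⟩
    one_mem' := ⟨0, 1, R.one_mem, by simp⟩
    add_mem' := by
      rintro x y ⟨n, r, hr, rfl⟩ ⟨m, s, hs, rfl⟩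
      rcases le_total n m with h | h
      · refine ⟨m, r * a ^ (m - n) + s,
          R.add_mem (R.mul_mem hr (pow_mem haR _)) hs, ?_⟩
        have key : a ^ (m - n) * (a⁻¹) ^ m = (a⁻¹) ^ n := by
          have h1 : (a⁻¹) ^ m = (a⁻¹) ^ (m - n) * (a⁻¹) ^ n := by
            rw [← pow_add, Nat.sub_add_cancel h]
          have h2 : a ^ (m - n) * (a⁻¹) ^ (m - n) = 1 := by
            rw [inv_pow]; exact mul_inv_cancel₀ (pow_ne_zero _ ha0)
          rw [h1, ← mul_assoc, h2, one_mul]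
        rw [add_mul, mul_assoc, key]
      · refine ⟨n, r + s * a ^ (n - m),
          R.add_mem hr (R.mul_mem hs (pow_mem haR _)), ?_⟩
        have key : a ^ (n - m) * (a⁻¹) ^ n = (a⁻¹) ^ m := by
          have h1 : (a⁻¹) ^ n = (a⁻¹) ^ (n - m) * (a⁻¹) ^ m := by
            rw [← pow_add, Nat.sub_add_cancel h]
          have h2 : a ^ (n - m) * (a⁻¹) ^ (n - m) = 1 := by
            rw [inv_pow]; exact mul_inv_cancel₀ (pow_ne_zero _ ha0)
          rw [h1, ← mul_assoc, h2, one_mul]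
        rw [add_mul, mul_assoc, key]
    neg_mem' := by
      rintro x ⟨n, r, hr, rfl⟩
      exact ⟨n, -r, R.neg_mem hr, by rw [neg_mul]⟩
    mul_mem' := by
      rintro x y ⟨n, r, hr, rfl⟩ ⟨m, s, hs, rfl⟩
      obtain ⟨s', hs', h⟩ := pswap1 n s hs
      refine ⟨n + m, r * s', R.mul_mem hr hs', ?_⟩
      calc r * (a⁻¹) ^ n * (s * (a⁻¹) ^ m)
          = r * ((a⁻¹) ^ n * s) * (a⁻¹) ^ m := by
            rw [mul_assoc, mul_assoc, mul_assoc]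
        _ = r * (s' * (a⁻¹) ^ n) * (a⁻¹) ^ m := by rw [h]
        _ = (r * s') * (a⁻¹) ^ (n + m) := by
            rw [pow_add, mul_assoc, mul_assoc, ← mul_assoc r] }
  have hRT : R < T := by
    refine lt_of_le_of_ne (fun r hr => ⟨0, r, hr, by simp⟩) ?_
    intro hEq
    have : a⁻¹ ∈ T := ⟨1, 1, R.one_mem, by simp⟩
    rw [← hEq] at this
    exact hainv this
  have hT : T = ⊤ := hmax T hRT
  refine ⟨?_, ?_, ?_⟩
  · intro x
    have hx : x ∈ S := by rw [hS]; trivial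
    exact hx
  · intro x
    have hx : x ∈ T := by rw [hT]; trivial
    exact hx
  · apply hmax
    refine lt_of_le_of_ne
      (fun r hr => Subring.subset_closure (Or.inl hr)) ?_
    intro hEq
    have : a⁻¹ ∈ Subring.closure ((R : Set D) ∪ {a⁻¹}) :=
      Subring.subset_closure (Or.inr rfl)
    rw [← hEq] at this
    exact hainv this
end

section
/- Let D be a non-commutative division ring, R a maximal subring of D, and a a nonzero non-unit of R with aR = Ra. Then every nonzero prime (two-sided) ideal of R contains a. -/
/-- `I` is a two-sided ideal of the subring `R` of `D`, viewed as a set. -/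
def IsIdealOf {D : Type*} [DivisionRing D] (R : Subring D) (I : Set D) : Prop :=
  I ⊆ R ∧ (0 : D) ∈ I ∧ (∀ x ∈ I, ∀ y ∈ I, x + y ∈ I) ∧ (∀ x ∈ I, -x ∈ I) ∧
    (∀ r ∈ R, ∀ x ∈ I, r * x ∈ I ∧ x * r ∈ I)

theorem stmt_7 (D : Type*) [DivisionRing D] (hnc : ∃ x y : D, x * y ≠ y * x)
    (R : Subring D) (hR : R ≠ ⊤) (hmax : ∀ S : Subring D, R < S → S = ⊤)
    (a : D) (haR : a ∈ R) (ha0 : a ≠ 0)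
    (hanu : ¬∃ b ∈ R, a * b = 1 ∧ b * a = 1)
    (hcomm : (fun r => a * r) '' (R : Set D) = (fun r => r * a) '' (R : Set D)) :
    ∀ P : Set D, IsIdealOf R P → P ≠ (R : Set D) →
      (∀ I J : Set D, IsIdealOf R I → IsIdealOf R J →
        (∀ x ∈ I, ∀ y ∈ J, x * y ∈ P) → I ⊆ P ∨ J ⊆ P) →
      (∃ x ∈ P, x ≠ 0) → a ∈ P := by
  intro P hP hPne hprime hex
  obtain ⟨x, hxP, hx0⟩ := hex
  have haR' : ∀ n : ℕ, a ^ n ∈ R := fun n => pow_mem haR n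
  -- commuting lemmas from aR = Ra
  have comm1 : ∀ r ∈ R, ∃ s ∈ R, r * a = a * s := by
    intro r hr
    have h : r * a ∈ (fun r => a * r) '' (R : Set D) := by
      rw [hcomm]; exact ⟨r, hr, rfl⟩
    obtain ⟨s, hs, hsa⟩ := h
    exact ⟨s, hs, hsa.symm⟩
  have comm2 : ∀ r ∈ R, ∃ s ∈ R, a * r = s * a := by
    intro r hr
    have h : a * r ∈ (fun r => r * a) '' (R : Set D) := by
      rw [← hcomm]; exact ⟨r, hr, rfl⟩
    obtain ⟨s, hs, hsa⟩ := h
    exact ⟨s, hs, hsa.symm⟩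
  have powcomm1 : ∀ n : ℕ, ∀ r ∈ R, ∃ s ∈ R, r * a ^ n = a ^ n * s := by
    intro n
    induction n with
    | zero => intro r hr; exact ⟨r, hr, by simp⟩
    | succ n ih =>
      intro r hr
      obtain ⟨s, hs, hsa⟩ := ih r hr
      obtain ⟨t, ht, hta⟩ := comm1 s hs
      refine ⟨t, ht, ?_⟩
      calc r * a ^ (n + 1) = (r * a ^ n) * a := by rw [pow_succ, mul_assoc]
        _ = a ^ n * (s * a) := by rw [hsa, mul_assoc]
        _ = a ^ n * (a * t) := by rw [hta]
        _ = a ^ (n + 1) * t := by rw [pow_succ, mul_assoc]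
  have powcomm2 : ∀ n : ℕ, ∀ r ∈ R, ∃ s ∈ R, a ^ n * r = s * a ^ n := by
    intro n
    induction n with
    | zero => intro r hr; exact ⟨r, hr, by simp⟩
    | succ n ih =>
      intro r hr
      obtain ⟨s, hs, hsa⟩ := comm2 r hr
      obtain ⟨t, ht, hta⟩ := ih s hs
      refine ⟨t, ht, ?_⟩
      calc a ^ (n + 1) * r = a ^ n * (a * r) := by rw [pow_succ, mul_assoc]
        _ = (a ^ n * s) * a := by rw [hsa, mul_assoc]
        _ = (t * a ^ n) * a := by rw [hta]
        _ = t * a ^ (n + 1) := by rw [pow_succ, mul_assoc]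
  -- the subring S = ∪ₙ a⁻ⁿ R
  let S : Subring D :=
    { carrier := {x : D | ∃ n : ℕ, a ^ n * x ∈ R}
      zero_mem' := ⟨0, by simpa using R.zero_mem⟩
      one_mem' := ⟨0, by simpa using R.one_mem⟩
      add_mem' := by
        rintro u v ⟨n, hn⟩ ⟨m, hm⟩
        refine ⟨n + m, ?_⟩
        have h1 : a ^ (n + m) * u = a ^ m * (a ^ n * u) := by
          rw [add_comm, pow_add, mul_assoc]
        have h2 : a ^ (n + m) * v = a ^ n * (a ^ m * v) := by
          rw [pow_add, mul_assoc]
        rw [mul_add, h1, h2]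
        exact add_mem (mul_mem (haR' m) hn) (mul_mem (haR' n) hm)
      neg_mem' := by
        rintro u ⟨n, hn⟩
        exact ⟨n, by rw [mul_neg]; exact neg_mem hn⟩
      mul_mem' := by
        rintro u v ⟨n, hn⟩ ⟨m, hm⟩
        obtain ⟨s, hs, hsa⟩ := powcomm2 m _ hn
        refine ⟨n + m, ?_⟩
        have h : a ^ (n + m) * (u * v) = s * (a ^ m * v) := by
          calc a ^ (n + m) * (u * v) = (a ^ m * (a ^ n * u)) * v := by
                rw [add_comm, pow_add]; simp [mul_assoc]
            _ = (s * a ^ m) * v := by rw [hsa]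
            _ = s * (a ^ m * v) := by rw [mul_assoc]
        rw [h]
        exact mul_mem hs hm }
  have hle : R ≤ S := fun r hr => ⟨0, by simpa using hr⟩
  have hainvS : a⁻¹ ∈ S := ⟨1, by rw [pow_one, mul_inv_cancel₀ ha0]; exact R.one_mem⟩
  have hainvR : a⁻¹ ∉ R := by
    intro h
    exact hanu ⟨a⁻¹, h, mul_inv_cancel₀ ha0, inv_mul_cancel₀ ha0⟩
  have hltS : R < S := lt_of_le_of_ne hle (by
    intro h
    exact hainvR (h ▸ hainvS))
  have hStop : S = ⊤ := hmax S hltS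
  -- get n with a ^ n ∈ P
  have hxinv : x⁻¹ ∈ S := hStop ▸ Subring.mem_top _
  obtain ⟨n, hn⟩ := hxinv
  have hanP : a ^ n ∈ P := by
    have h := (hP.2.2.2.2 _ hn x hxP).1
    rwa [mul_assoc, inv_mul_cancel₀ hx0, mul_one] at h
  -- ideals a^k R
  have hIk : ∀ k : ℕ, IsIdealOf R ((fun r => a ^ k * r) '' (R : Set D)) := by
    intro k
    refine ⟨?_, ⟨0, R.zero_mem, by simp⟩, ?_, ?_, ?_⟩
    · rintro _ ⟨r, hr, rfl⟩; exact mul_mem (haR' k) hr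
    · rintro _ ⟨r, hr, rfl⟩ _ ⟨s, hs, rfl⟩
      exact ⟨r + s, add_mem hr hs, by show a ^ k * (r + s) = a ^ k * r + a ^ k * s; rw [mul_add]⟩
    · rintro _ ⟨r, hr, rfl⟩
      exact ⟨-r, neg_mem hr, by show a ^ k * -r = -(a ^ k * r); rw [mul_neg]⟩
    · rintro r hr _ ⟨s, hs, rfl⟩
      constructor
      · obtain ⟨t, ht, hta⟩ := powcomm1 k r hr
        refine ⟨t * s, mul_mem ht hs, ?_⟩
        show a ^ k * (t * s) = r * (a ^ k * s)
        rw [← mul_assoc, ← hta, mul_assoc]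
      · exact ⟨s * r, mul_mem hs hr, by rw [mul_assoc]⟩
  -- descend from a ^ n ∈ P to a ∈ P
  have key : ∀ m : ℕ, a ^ m ∈ P → a ∈ P := by
    intro m
    induction m with
    | zero =>
      intro h1
      exfalso
      apply hPne
      apply Set.Subset.antisymm hP.1
      intro r hr
      have h := (hP.2.2.2.2 r hr 1 (by simpa using h1)).1
      simpa using h
    | succ m ih =>
      intro h
      have hpr := hprime _ _ (hIk 1) (hIk m) (by
        rintro _ ⟨r, hr, rfl⟩ _ ⟨s, hs, rfl⟩
        obtain ⟨t, ht, hta⟩ := powcomm1 m r hr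
        have heq : (a ^ 1 * r) * (a ^ m * s) = a ^ (m + 1) * (t * s) := by
          calc (a ^ 1 * r) * (a ^ m * s) = a * ((r * a ^ m) * s) := by
                simp [mul_assoc]
            _ = a * ((a ^ m * t) * s) := by rw [hta]
            _ = a ^ (m + 1) * (t * s) := by rw [pow_succ']; simp [mul_assoc]
        show a ^ 1 * r * (a ^ m * s) ∈ P
        rw [heq]
        exact (hP.2.2.2.2 (t * s) (mul_mem ht hs) _ h).2)
      rcases hpr with hsub | hsub
      · have : a ∈ (fun r => a ^ 1 * r) '' (R : Set D) := ⟨1, R.one_mem, by simp⟩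
        exact hsub this
      · exact ih (hsub ⟨1, R.one_mem, by simp⟩)
  exact key n hanP
end

section
/- Let D be a non-commutative division ring, R a maximal subring of D, and a a nonzero non-unit of R with aR = Ra. Then a lies in the Jacobson radical of R. -/
theorem stmt_8 (D : Type*) [DivisionRing D] (hnc : ∃ x y : D, x * y ≠ y * x)
    (R : Subring D) (hR : R ≠ ⊤) (hmax : ∀ S : Subring D, R < S → S = ⊤)
    (a : D) (haR : a ∈ R) (ha0 : a ≠ 0)
    (hanu : ¬∃ b ∈ R, a * b = 1 ∧ b * a = 1)
    (hcomm : (fun r => a * r) '' (R : Set D) = (fun r => r * a) '' (R : Set D)) :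
    (⟨a, haR⟩ : R) ∈ (⊥ : Ideal R).jacobson := by
  -- push a past elements of R
  have hAR : ∀ r ∈ R, ∃ s ∈ R, a * r = s * a := by
    intro r hr
    have : a * r ∈ (fun r => r * a) '' (R : Set D) := by
      rw [← hcomm]; exact ⟨r, hr, rfl⟩
    obtain ⟨s, hs, h⟩ := this
    exact ⟨s, hs, h.symm⟩
  have hRA : ∀ r ∈ R, ∃ s ∈ R, r * a = a * s := by
    intro r hr
    have : r * a ∈ (fun r => a * r) '' (R : Set D) := by
      rw [hcomm]; exact ⟨r, hr, rfl⟩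
    obtain ⟨s, hs, h⟩ := this
    exact ⟨s, hs, h.symm⟩
  have hpow : ∀ (n : ℕ), ∀ r ∈ R, ∃ s ∈ R, a ^ n * r = s * a ^ n := by
    intro n
    induction n with
    | zero => intro r hr; exact ⟨r, hr, by simp⟩
    | succ n ih =>
      intro r hr
      obtain ⟨s, hs, h⟩ := ih r hr
      obtain ⟨t, ht, h2⟩ := hAR s hs
      refine ⟨t, ht, ?_⟩
      rw [pow_succ', mul_assoc, h, ← mul_assoc, h2, mul_assoc, ← pow_succ']
  -- membership in R is monotone in the power of a
  have hstep : ∀ (n : ℕ) (x : D), a ^ n * x ∈ R → a ^ (n + 1) * x ∈ R := by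
    intro n x hx
    obtain ⟨s, hs, h⟩ := hRA _ hx
    have : a ^ (n + 1) * x = a * (a ^ n * x) := by rw [pow_succ', mul_assoc]
    rw [this]
    exact R.mul_mem haR hx
  have hmono : ∀ (n m : ℕ), n ≤ m → ∀ x : D, a ^ n * x ∈ R → a ^ m * x ∈ R := by
    intro n m hnm
    induction m, hnm using Nat.le_induction with
    | base => exact fun x hx => hx
    | succ m hm ih => exact fun x hx => hstep m x (ih x hx)
  -- the subring T = { x | ∃ n, a^n x ∈ R }
  set T : Subring D :=
    { carrier := {x | ∃ n : ℕ, a ^ n * x ∈ R}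
      one_mem' := ⟨0, by simpa using R.one_mem⟩
      zero_mem' := ⟨0, by simpa using R.zero_mem⟩
      mul_mem' := by
        rintro x y ⟨n, hn⟩ ⟨m, hm⟩
        obtain ⟨s, hs, h⟩ := hpow m _ hn
        refine ⟨m + n, ?_⟩
        have : a ^ (m + n) * (x * y) = (a ^ m * (a ^ n * x)) * y := by
          rw [pow_add, mul_assoc, mul_assoc, mul_assoc]
        rw [this, h, mul_assoc]
        exact R.mul_mem hs hm
      add_mem' := by
        rintro x y ⟨n, hn⟩ ⟨m, hm⟩
        refine ⟨max n m, ?_⟩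
        rw [mul_add]
        exact R.add_mem (hmono n _ (le_max_left n m) x hn)
          (hmono m _ (le_max_right n m) y hm)
      neg_mem' := by
        rintro x ⟨n, hn⟩
        exact ⟨n, by rw [mul_neg]; exact R.neg_mem hn⟩ } with hT
  -- a⁻¹ ∉ R
  have hainv : a⁻¹ ∉ R := by
    intro h
    exact hanu ⟨a⁻¹, h, mul_inv_cancel₀ ha0, inv_mul_cancel₀ ha0⟩
  -- R < T, hence T = ⊤
  have hRT : R ≤ T := by
    intro x hx
    exact ⟨0, by simpa using hx⟩
  have haT : a⁻¹ ∈ T := ⟨1, by rw [pow_one, mul_inv_cancel₀ ha0]; exact R.one_mem⟩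
  have hTtop : T = ⊤ := hmax T (lt_of_le_of_ne hRT (fun h => hainv (h ▸ haT)))
  have hall : ∀ x : D, ∃ n : ℕ, a ^ n * x ∈ R := by
    intro x
    have : x ∈ T := hTtop ▸ Subring.mem_top x
    exact this
  -- key lemma: 1 - r * a is a unit of R for every r ∈ R
  have key : ∀ r : R, IsUnit ((1 : R) - r * ⟨a, haR⟩) := by
    intro r
    set x : D := 1 - (r : D) * a with hx
    have hxR : x ∈ R := R.sub_mem R.one_mem (R.mul_mem r.2 haR)
    have hxne : x ≠ 0 := by
      intro h
      have hra : (r : D) * a = 1 := by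
        have h1 : (1 : D) - (r : D) * a = 0 := by rw [← hx]; exact h
        exact (sub_eq_zero.mp h1).symm
      exact hanu ⟨r, r.2, by
        have h2 : (a * r - 1) * a = 0 := by
          rw [sub_mul, mul_assoc, hra, mul_one, one_mul, sub_self]
        have := (mul_eq_zero.mp h2).resolve_right ha0
        exact sub_eq_zero.mp this, hra⟩
    -- descent
    have hdesc : ∀ (n : ℕ) (y : D), y * x = 1 → a ^ n * y ∈ R → y ∈ R := by
      intro n
      induction n with
      | zero => intro y _ hy; simpa using hy
      | succ n ih =>
        intro y hy hny
        apply ih y hy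
        set s : D := a ^ (n + 1) * y with hs
        have hsR : s ∈ R := hny
        have hsx : s * x = a ^ (n + 1) := by
          rw [hs, mul_assoc, hy, mul_one]
        have hseq : s = a ^ (n + 1) + s * ((r : D) * a) := by
          have : s * (1 - (r : D) * a) = a ^ (n + 1) := hsx
          rw [mul_sub, mul_one] at this
          exact sub_eq_iff_eq_add.mp this
        obtain ⟨t, ht, hteq⟩ := hRA (s * r) (R.mul_mem hsR r.2)
        have hs2 : s = a * (a ^ n + t) := by
          rw [hseq, ← mul_assoc, hteq, pow_succ', mul_add]
        have hcancel : a * (a ^ n * y) = a * (a ^ n + t) := by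
          rw [← mul_assoc, ← pow_succ', ← hs, hs2]
        have : a ^ n * y = a ^ n + t := mul_left_cancel₀ ha0 hcancel
        rw [this]
        exact R.add_mem (R.pow_mem haR n) ht
    have hxinv : x⁻¹ ∈ R := by
      obtain ⟨n, hn⟩ := hall x⁻¹
      exact hdesc n x⁻¹ (inv_mul_cancel₀ hxne) hn
    refine isUnit_iff_exists.mpr ⟨⟨x⁻¹, hxinv⟩, ?_, ?_⟩
    · ext; simpa using mul_inv_cancel₀ hxne
    · ext; simpa using inv_mul_cancel₀ hxne
  -- conclude: a is in every maximal ideal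
  rw [Ideal.jacobson, Ideal.mem_sInf]
  rintro J ⟨-, hJ⟩
  by_contra hna
  have hsup : J ⊔ Ideal.span {(⟨a, haR⟩ : R)} = ⊤ := by
    apply hJ.out.2
    refine lt_of_le_of_ne le_sup_left (fun h => hna ?_)
    have : (⟨a, haR⟩ : R) ∈ J ⊔ Ideal.span {(⟨a, haR⟩ : R)} :=
      Ideal.mem_sup_right (Ideal.subset_span rfl)
    rwa [← h] at this
  have h1 : (1 : R) ∈ J ⊔ Ideal.span {(⟨a, haR⟩ : R)} := hsup ▸ Submodule.mem_top
  obtain ⟨m, hm, z, hz, hmz⟩ := Submodule.mem_sup.mp h1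
  obtain ⟨c, hc⟩ := Submodule.mem_span_singleton.mp hz
  have hmu : m = 1 - c * ⟨a, haR⟩ := by
    rw [← hmz, ← hc, smul_eq_mul, add_sub_cancel_right]
  have : IsUnit m := hmu ▸ key c
  exact hJ.out.1 (J.eq_top_of_isUnit_mem hm this)
end

section
/- Let D be a non-commutative division ring, R a maximal subring of D which is not a division ring, and suppose there exists a nonzero non-unit a ∈ R with aR = Ra. Then for every λ in the normalizer N(R) = {x ∈ D : xR = Rx}, either λ ∈ R or λ⁻¹ ∈ R. -/
namespace Stmt9Aux

variable {D : Type*} [DivisionRing D]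

/-- The additive subgroup of sums `∑_{i ≤ n} μ^i * r_i` with `r_i ∈ R`. -/
def A (R : Subring D) (μ : D) (n : ℕ) : AddSubgroup D :=
  AddSubgroup.closure {x | ∃ i ≤ n, ∃ r ∈ R, x = μ ^ i * r}

variable {R : Subring D}

lemma mem_gen {μ : D} {n i : ℕ} (hi : i ≤ n) {r : D} (hr : r ∈ R) :
    μ ^ i * r ∈ A R μ n :=
  AddSubgroup.subset_closure ⟨i, hi, r, hr, rfl⟩

lemma A_mono {μ : D} {n m : ℕ} (h : n ≤ m) : A R μ n ≤ A R μ m := by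
  refine (AddSubgroup.closure_le _).2 ?_
  rintro x ⟨i, hi, r, hr, rfl⟩
  exact mem_gen (le_trans hi h) hr

lemma A_mul_right {μ : D} {n : ℕ} {x s : D} (hx : x ∈ A R μ n) (hs : s ∈ R) :
    x * s ∈ A R μ n := by
  refine AddSubgroup.closure_induction (p := fun y _ => y * s ∈ A R μ n) ?_ ?_ ?_ ?_ hx
  · rintro y ⟨i, hi, r, hr, rfl⟩
    rw [mul_assoc]
    exact mem_gen hi (R.mul_mem hr hs)
  · simpa using zero_mem (A R μ _)
  · intro u v _ _ hu hv; rw [add_mul]; exact add_mem hu hv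
  · intro u _ hu; rw [neg_mul]; exact neg_mem hu

/-- straightening powers: `r * μ^j = μ^j * s`. -/
lemma powR {μ : D} (hcR : ∀ r ∈ R, ∃ s ∈ R, r * μ = μ * s) (j : ℕ) :
    ∀ r ∈ R, ∃ s ∈ R, r * μ ^ j = μ ^ j * s := by
  induction j with
  | zero => intro r hr; exact ⟨r, hr, by simp⟩
  | succ j ih =>
    intro r hr
    obtain ⟨s, hs, hrs⟩ := ih r hr
    obtain ⟨t, ht, hst⟩ := hcR s hs
    refine ⟨t, ht, ?_⟩
    rw [pow_succ, ← mul_assoc, hrs, mul_assoc, hst, ← mul_assoc]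

lemma A_mul {μ : D} (hcR : ∀ r ∈ R, ∃ s ∈ R, r * μ = μ * s) {n m : ℕ} {x y : D}
    (hx : x ∈ A R μ n) (hy : y ∈ A R μ m) : x * y ∈ A R μ (n + m) := by
  refine AddSubgroup.closure_induction (p := fun x _ => x * y ∈ A R μ (n + m)) ?_ ?_ ?_ ?_ hx
  · rintro x ⟨i, hi, r, hr, rfl⟩
    refine AddSubgroup.closure_induction
      (p := fun y _ => (μ ^ i * r) * y ∈ A R μ (n + m)) ?_ ?_ ?_ ?_ hy
    · rintro z ⟨j, hj, s, hs, rfl⟩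
      obtain ⟨t, ht, hrt⟩ := powR hcR j r hr
      have e1 : μ ^ i * r * (μ ^ j * s) = μ ^ i * (r * μ ^ j) * s := by
        rw [mul_assoc, mul_assoc, mul_assoc]
      have e2 : μ ^ i * (μ ^ j * t) * s = μ ^ (i + j) * (t * s) := by
        rw [pow_add, mul_assoc, mul_assoc, mul_assoc]
      rw [e1, hrt, e2]
      exact mem_gen (add_le_add hi hj) (R.mul_mem ht hs)
    · simpa using zero_mem (A R μ _)
    · intro u v _ _ hu hv; rw [mul_add]; exact add_mem hu hv
    · intro u _ hu; rw [mul_neg]; exact neg_mem hu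
  · simpa using zero_mem (A R μ _)
  · intro u v _ _ hu hv; rw [add_mul]; exact add_mem hu hv
  · intro u _ hu; rw [neg_mul]; exact neg_mem hu

/-- The subring `R[μ] = ⋃ₙ A R μ n`. -/
def SS (R : Subring D) (μ : D) (hcR : ∀ r ∈ R, ∃ s ∈ R, r * μ = μ * s) : Subring D where
  carrier := {x | ∃ n, x ∈ A R μ n}
  zero_mem' := ⟨0, zero_mem _⟩
  one_mem' := ⟨0, by simpa using mem_gen (le_refl 0) R.one_mem⟩
  add_mem' := by
    rintro x y ⟨n, hn⟩ ⟨m, hm⟩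
    exact ⟨max n m, add_mem (A_mono (le_max_left _ _) hn) (A_mono (le_max_right _ _) hm)⟩
  neg_mem' := by rintro x ⟨n, hn⟩; exact ⟨n, neg_mem hn⟩
  mul_mem' := by rintro x y ⟨n, hn⟩ ⟨m, hm⟩; exact ⟨n + m, A_mul hcR hn hm⟩

lemma exists_A (hmax : ∀ S : Subring D, R < S → S = ⊤) {μ : D} (hμR : μ ∉ R)
    (hcR : ∀ r ∈ R, ∃ s ∈ R, r * μ = μ * s) : ∀ x : D, ∃ n, x ∈ A R μ n := by
  have hle : R ≤ Subring.closure (insert μ (R : Set D)) := fun r hr =>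
    Subring.subset_closure (Set.mem_insert_of_mem _ hr)
  have hmem : μ ∈ Subring.closure (insert μ (R : Set D)) :=
    Subring.subset_closure (Set.mem_insert _ _)
  have htop : Subring.closure (insert μ (R : Set D)) = ⊤ :=
    hmax _ (lt_of_le_of_ne hle (fun h => hμR (h ▸ hmem)))
  have h2 : Subring.closure (insert μ (R : Set D)) ≤ SS R μ hcR := by
    refine Subring.closure_le.2 ?_
    rintro x (rfl | hx)
    · exact ⟨1, by simpa using mem_gen (le_refl 1) R.one_mem⟩
    · exact ⟨0, by simpa using mem_gen (le_refl 0) hx⟩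
  intro x
  exact h2 (htop ▸ Subring.mem_top x)

lemma pow_raise {a : D} (haR : a ∈ R) {n : ℕ} {x : D} (h : a ^ n * x ∈ R) (j : ℕ) :
    a ^ (n + j) * x ∈ R := by
  induction j with
  | zero => simpa using h
  | succ j ih =>
    have e : a ^ (n + (j + 1)) * x = a * (a ^ (n + j) * x) := by
      rw [show n + (j + 1) = (n + j) + 1 from rfl, pow_succ', mul_assoc]
    rw [e]
    exact R.mul_mem haR ih

/-- The key subring `T = {x | ∃ n, aⁿ x ∈ R}` equals `D`. -/
lemma exists_pow_mul_mem (hmax : ∀ S : Subring D, R < S → S = ⊤)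
    {a : D} (haR : a ∈ R) (ha0 : a ≠ 0)
    (hanu : ¬∃ b ∈ R, a * b = 1 ∧ b * a = 1)
    (hcL : ∀ r ∈ R, ∃ s ∈ R, a * r = s * a) :
    ∀ x : D, ∃ n : ℕ, a ^ n * x ∈ R := by
  have hpowL : ∀ (m : ℕ), ∀ r ∈ R, ∃ s ∈ R, a ^ m * r = s * a ^ m := by
    intro m
    induction m with
    | zero => intro r hr; exact ⟨r, hr, by simp⟩
    | succ m ih =>
      intro r hr
      obtain ⟨s, hs, hrs⟩ := ih r hr
      obtain ⟨t, ht, hst⟩ := hcL s hs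
      refine ⟨t, ht, ?_⟩
      rw [pow_succ', mul_assoc, hrs, ← mul_assoc, hst, mul_assoc]
  let T : Subring D :=
    { carrier := {x | ∃ n : ℕ, a ^ n * x ∈ R}
      zero_mem' := ⟨0, by simpa using R.zero_mem⟩
      one_mem' := ⟨0, by simpa using R.one_mem⟩
      add_mem' := by
        rintro x y ⟨n, hn⟩ ⟨m, hm⟩
        refine ⟨n + m, ?_⟩
        have hx : a ^ (n + m) * x ∈ R := pow_raise haR hn m
        have hy : a ^ (n + m) * y ∈ R := by
          have := pow_raise haR hm n
          rwa [add_comm m n] at this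
        rw [mul_add]
        exact R.add_mem hx hy
      neg_mem' := by
        rintro x ⟨n, hn⟩
        exact ⟨n, by rw [mul_neg]; exact R.neg_mem hn⟩
      mul_mem' := by
        rintro x y ⟨n, hn⟩ ⟨m, hm⟩
        obtain ⟨s, hs, hsr⟩ := hpowL m _ hn
        refine ⟨m + n, ?_⟩
        have e : a ^ (m + n) * (x * y) = (a ^ m * (a ^ n * x)) * y := by
          rw [pow_add, mul_assoc, mul_assoc, mul_assoc]
        rw [e, hsr, mul_assoc]
        exact R.mul_mem hs hm }
  have haiT : a⁻¹ ∈ T := ⟨1, by rw [pow_one, mul_inv_cancel₀ ha0]; exact R.one_mem⟩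
  have haiR : a⁻¹ ∉ R := fun h => hanu ⟨a⁻¹, h, mul_inv_cancel₀ ha0, inv_mul_cancel₀ ha0⟩
  have hle : R ≤ T := fun r hr => ⟨0, by simpa using hr⟩
  have htop : T = ⊤ := hmax _ (lt_of_le_of_ne hle (fun h => haiR (h ▸ haiT)))
  intro x
  exact (htop ▸ Subring.mem_top x : x ∈ T)

lemma pow_shift {μ : D} (hμ0 : μ ≠ 0) {m : ℕ} {x : D} (hx : x ∈ A R μ⁻¹ m) :
    μ ^ m * x ∈ A R μ m := by
  refine AddSubgroup.closure_induction (p := fun x _ => μ ^ m * x ∈ A R μ m) ?_ ?_ ?_ ?_ hx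
  · rintro x ⟨j, hj, r, hr, rfl⟩
    have e : μ ^ m * (μ⁻¹ ^ j * r) = μ ^ (m - j) * r := by
      rw [← mul_assoc, inv_pow]
      congr 1
      rw [show m = (m - j) + j from (Nat.sub_add_cancel hj).symm, pow_add,
        mul_inv_cancel_right₀ (pow_ne_zero _ hμ0)]
      congr 1
      omega
    rw [e]
    exact mem_gen (Nat.sub_le _ _) hr
  · simpa using zero_mem (A R μ _)
  · intro u v _ _ hu hv; rw [mul_add]; exact add_mem hu hv
  · intro u _ hu; rw [mul_neg]; exact neg_mem hu

lemma left_mul {μ : D} {n : ℕ} {x : D} (hx : x ∈ A R μ n) : μ * x ∈ A R μ (n + 1) := by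
  refine AddSubgroup.closure_induction (p := fun x _ => μ * x ∈ A R μ (n + 1)) ?_ ?_ ?_ ?_ hx
  · rintro x ⟨i, hi, r, hr, rfl⟩
    rw [← mul_assoc, ← pow_succ']
    exact mem_gen (by omega) hr
  · simpa using zero_mem (A R μ _)
  · intro u v _ _ hu hv; rw [mul_add]; exact add_mem hu hv
  · intro u _ hu; rw [mul_neg]; exact neg_mem hu

lemma step_down {μ : D} {L : ℕ} (h : μ ^ (L + 1) ∈ A R μ L) :
    A R μ (L + 1) ≤ A R μ L := by
  refine (AddSubgroup.closure_le _).2 ?_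
  rintro x ⟨i, hi, r, hr, rfl⟩
  rcases Nat.lt_or_ge i (L + 1) with hlt | hge
  · exact mem_gen (by omega) hr
  · have : i = L + 1 := by omega
    subst this
    exact A_mul_right h hr

lemma pow_mem_L {μ : D} {L : ℕ} (h : μ ^ (L + 1) ∈ A R μ L) (k : ℕ) :
    μ ^ k ∈ A R μ L := by
  induction k with
  | zero => simpa using mem_gen (Nat.zero_le L) R.one_mem
  | succ k ih =>
    have := left_mul ih
    rw [← pow_succ'] at this
    exact step_down h this

lemma A_le_L {μ : D} {L : ℕ} (h : μ ^ (L + 1) ∈ A R μ L) (n : ℕ) :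
    A R μ n ≤ A R μ L := by
  refine (AddSubgroup.closure_le _).2 ?_
  rintro x ⟨i, _, r, hr, rfl⟩
  exact A_mul_right (pow_mem_L h i) hr

end Stmt9Aux

open Stmt9Aux in
theorem stmt_9 (D : Type*) [DivisionRing D] (hnc : ∃ x y : D, x * y ≠ y * x)
    (R : Subring D) (hR : R ≠ ⊤) (hmax : ∀ S : Subring D, R < S → S = ⊤)
    (hnd : ∃ a ∈ R, a ≠ 0 ∧ ¬∃ b ∈ R, a * b = 1 ∧ b * a = 1)
    (a : D) (haR : a ∈ R) (ha0 : a ≠ 0)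
    (hanu : ¬∃ b ∈ R, a * b = 1 ∧ b * a = 1)
    (hcomm : (fun r => a * r) '' (R : Set D) = (fun r => r * a) '' (R : Set D)) :
    ∀ l : D, (fun r => l * r) '' (R : Set D) = (fun r => r * l) '' (R : Set D) →
      l ∈ R ∨ l⁻¹ ∈ R := by
  intro l hl
  by_cases hl0 : l = 0
  · left; rw [hl0]; exact R.zero_mem
  by_cases hlR : l ∈ R
  · left; exact hlR
  by_cases hliR : l⁻¹ ∈ R
  · right; exact hliR
  exfalso
  -- basic straightening facts
  have hcLa : ∀ r ∈ R, ∃ s ∈ R, a * r = s * a := by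
    intro r hr
    have h1 : a * r ∈ (fun r => r * a) '' (R : Set D) := by
      rw [← hcomm]; exact ⟨r, hr, rfl⟩
    obtain ⟨s, hs, hsr⟩ := h1
    exact ⟨s, hs, hsr.symm⟩
  have hcRl : ∀ r ∈ R, ∃ s ∈ R, r * l = l * s := by
    intro r hr
    have h1 : r * l ∈ (fun r => l * r) '' (R : Set D) := by
      rw [hl]; exact ⟨r, hr, rfl⟩
    obtain ⟨s, hs, hsr⟩ := h1
    exact ⟨s, hs, hsr.symm⟩
  have hcLl : ∀ r ∈ R, ∃ s ∈ R, l * r = s * l := by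
    intro r hr
    have h1 : l * r ∈ (fun r => r * l) '' (R : Set D) := by
      rw [← hl]; exact ⟨r, hr, rfl⟩
    obtain ⟨s, hs, hsr⟩ := h1
    exact ⟨s, hs, hsr.symm⟩
  have hcRli : ∀ r ∈ R, ∃ s ∈ R, r * l⁻¹ = l⁻¹ * s := by
    intro r hr
    obtain ⟨s, hs, hls⟩ := hcLl r hr
    refine ⟨s, hs, ?_⟩
    have : l⁻¹ * (l * r) * l⁻¹ = l⁻¹ * (s * l) * l⁻¹ := by rw [hls]
    rw [← mul_assoc, inv_mul_cancel₀ hl0, one_mul, mul_assoc, mul_assoc,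
      mul_inv_cancel₀ hl0, mul_one] at this
    exact this
  -- l is "integral": l ∈ A R l⁻¹ L for some L
  obtain ⟨L, hLmem⟩ := exists_A hmax hliR hcRli l
  have hint : l ^ (L + 1) ∈ A R l L := by
    have := pow_shift hl0 hLmem
    rwa [← pow_succ] at this
  -- T-lemma
  have hT := exists_pow_mul_mem hmax haR ha0 hanu hcLa
  -- everything lies in A R l L
  have hall : ∀ x : D, x ∈ A R l L := by
    intro x
    obtain ⟨n, hn⟩ := exists_A hmax hlR hcRl x
    exact A_le_L hint n hn
  -- uniform power: ∃ n, ∀ i ≤ L, a^n * l^i ∈ R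
  have huni : ∀ M : ℕ, ∃ n : ℕ, ∀ i ≤ M, a ^ n * l ^ i ∈ R := by
    intro M
    induction M with
    | zero =>
      obtain ⟨n, hn⟩ := hT (l ^ 0)
      exact ⟨n, fun i hi => by rw [Nat.le_zero.mp hi]; exact hn⟩
    | succ M ih =>
      obtain ⟨n, hn⟩ := ih
      obtain ⟨m, hm⟩ := hT (l ^ (M + 1))
      refine ⟨n + m, fun i hi => ?_⟩
      rcases Nat.lt_or_ge i (M + 1) with hlt | hge
      · exact pow_raise haR (hn i (by omega)) m
      · have : i = M + 1 := by omega
        subst this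
        have := pow_raise haR hm n
        rwa [add_comm m n] at this
  obtain ⟨n, hn⟩ := huni L
  -- final: a^n * x ∈ R for all x
  have hfin : ∀ x : D, a ^ n * x ∈ R := by
    intro x
    have hx := hall x
    refine AddSubgroup.closure_induction (p := fun x _ => a ^ n * x ∈ R) ?_ ?_ ?_ ?_ hx
    · rintro y ⟨i, hi, r, hr, rfl⟩
      rw [← mul_assoc]
      exact R.mul_mem (hn i hi) hr
    · simpa using R.zero_mem
    · intro u v _ _ hu hv; rw [mul_add]; exact R.add_mem hu hv
    · intro u _ hu; rw [mul_neg]; exact R.neg_mem hu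
  apply hR
  rw [Subring.eq_top_iff']
  intro x
  have := hfin ((a ^ n)⁻¹ * x)
  rwa [mul_inv_cancel_left₀ (pow_ne_zero n ha0)] at this
end

section
/- Let D be a non-commutative division ring with center F, and let R be a maximal subring of D with F ⊄ R. Then the centralizer of R in D equals F, and the center of R equals R ∩ F. -/
theorem stmt_10 (D : Type*) [DivisionRing D] (hnc : ∃ x y : D, x * y ≠ y * x)
    (R : Subring D) (hR : R ≠ ⊤) (hmax : ∀ S : Subring D, R < S → S = ⊤)
    (hF : ¬ (Subring.center D ≤ R)) :
    {x : D | ∀ r ∈ R, x * r = r * x} = (Subring.center D : Set D) ∧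
    {x : D | x ∈ R ∧ ∀ r ∈ R, x * r = r * x} = (R : Set D) ∩ (Subring.center D : Set D) := by
  obtain ⟨c, hc, hcR⟩ := SetLike.not_le_iff_exists.mp hF
  have key : {x : D | ∀ r ∈ R, x * r = r * x} = (Subring.center D : Set D) := by
    ext x
    simp only [Set.mem_setOf_eq, SetLike.mem_coe]
    constructor
    · intro h
      set S := Subring.centralizer ({x} : Set D) with hS
      have hle : R ≤ S := by
        intro r hr
        rw [Subring.mem_centralizer_iff]
        intro g hg
        rw [Set.mem_singleton_iff] at hg
        subst hg
        exact h r hr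
      have hcS : c ∈ S := by
        rw [Subring.mem_centralizer_iff]
        intro g hg
        rw [Set.mem_singleton_iff] at hg
        subst hg
        exact Subring.mem_center_iff.mp hc g
      have hRS : R < S := lt_of_le_of_ne hle (fun heq => hcR (heq ▸ hcS))
      have hStop := hmax S hRS
      rw [Subring.mem_center_iff]
      intro g
      have hg : g ∈ S := hStop ▸ Subring.mem_top g
      rw [Subring.mem_centralizer_iff] at hg
      exact (hg x rfl).symm
    · intro h r _
      exact (Subring.mem_center_iff.mp h r).symm
  refine ⟨key, ?_⟩
  ext x
  simp only [Set.mem_setOf_eq, Set.mem_inter_iff, SetLike.mem_coe]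
  constructor
  · rintro ⟨hx, hcomm⟩
    refine ⟨hx, ?_⟩
    have : x ∈ {x : D | ∀ r ∈ R, x * r = r * x} := hcomm
    rw [key] at this
    exact this
  · rintro ⟨hx, hcen⟩
    exact ⟨hx, fun r _ => (Subring.mem_center_iff.mp hcen r).symm⟩
end

section
/- Let D be a non-commutative division ring with center F, and let R be a maximal subring of D with F ⊆ R. Then the centralizer of R in D is contained in R, hence equals the center of R, and it is a field (a commutative division ring). -/
theorem stmt_11 (D : Type*) [DivisionRing D] (hnc : ∃ x y : D, x * y ≠ y * x)
    (R : Subring D) (hR : R ≠ ⊤) (hmax : ∀ S : Subring D, R < S → S = ⊤)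
    (hF : Subring.center D ≤ R) :
    ({x : D | ∀ r ∈ R, x * r = r * x} ⊆ (R : Set D)) ∧
    ({x : D | ∀ r ∈ R, x * r = r * x} = {x : D | x ∈ R ∧ ∀ r ∈ R, x * r = r * x}) ∧
    (∀ x ∈ {x : D | ∀ r ∈ R, x * r = r * x}, ∀ y ∈ {x : D | ∀ r ∈ R, x * r = r * x},
      x * y = y * x) ∧
    (∀ x ∈ {x : D | ∀ r ∈ R, x * r = r * x}, x⁻¹ ∈ {x : D | ∀ r ∈ R, x * r = r * x}) := by
  have key : {x : D | ∀ r ∈ R, x * r = r * x} ⊆ (R : Set D) := by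
    intro x hx
    set S : Subring D := Subring.centralizer {x} with hS
    have hRS : R ≤ S := by
      intro r hr
      rw [Subring.mem_centralizer_iff]
      intro g hg
      rcases hg with rfl
      exact hx r hr
    by_cases hST : S = ⊤
    · -- x is central
      apply hF
      rw [Subring.mem_center_iff]
      intro g
      have : g ∈ S := hST ▸ Subring.mem_top g
      rw [Subring.mem_centralizer_iff] at this
      exact (this x rfl).symm
    · have : R = S := by
        by_contra hne
        exact hST (hmax S (lt_of_le_of_ne hRS hne))
      have hxS : x ∈ S := by
        rw [Subring.mem_centralizer_iff]
        intro g hg; rcases hg with rfl; rfl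
      rw [this]; exact hxS
  refine ⟨key, ?_, ?_, ?_⟩
  · ext x
    simp only [Set.mem_setOf_eq]
    exact ⟨fun h => ⟨key h, h⟩, fun h => h.2⟩
  · intro x hx y hy
    exact (hy x (key hx)).symm
  · intro x hx r hr
    by_cases hx0 : x = 0
    · simp [hx0]
    · have h := hx r hr
      have : x⁻¹ * (x * r) * x⁻¹ = x⁻¹ * (r * x) * x⁻¹ := by rw [h]
      calc x⁻¹ * r = x⁻¹ * (r * x) * x⁻¹ := by
            rw [mul_assoc, mul_assoc, mul_inv_cancel₀ hx0, mul_one]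
        _ = x⁻¹ * (x * r) * x⁻¹ := by rw [h]
        _ = r * x⁻¹ := by rw [← mul_assoc, inv_mul_cancel₀ hx0, one_mul]
end

section
/- Let D be a non-commutative division ring with center F and R a maximal subring of D such that F is strictly contained in the center of R. Then for every β in the center of R that is not in F, one has R = C_D(β), the centralizer of β in D; in particular R is a division ring. -/
theorem stmt_12 (D : Type*) [DivisionRing D] (hnc : ∃ x y : D, x * y ≠ y * x)
    (R : Subring D) (hR : R ≠ ⊤) (hmax : ∀ S : Subring D, R < S → S = ⊤)
    (hF : (Subring.center D : Set D) ⊂ {x : D | x ∈ R ∧ ∀ r ∈ R, x * r = r * x}) :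
    ∀ β : D, β ∈ R → (∀ r ∈ R, β * r = r * β) → β ∉ Subring.center D →
      ((R : Set D) = {x : D | x * β = β * x}) ∧
      (∀ r ∈ R, r ≠ 0 → ∃ s ∈ R, r * s = 1 ∧ s * r = 1) := by
  intro β hβR hβcomm hβF
  set S : Subring D := Subring.centralizer {β} with hS
  have hRS : R ≤ S := by
    intro r hr
    rw [Subring.mem_centralizer_iff]
    intro g hg
    rw [Set.mem_singleton_iff] at hg
    subst hg
    exact hβcomm r hr
  have hSne : S ≠ ⊤ := by
    intro h
    apply hβF
    rw [Subring.mem_center_iff]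
    intro g
    have : g ∈ S := h ▸ Subring.mem_top g
    rw [Subring.mem_centralizer_iff] at this
    exact (this β rfl).symm
  have hRSeq : R = S := by
    by_contra hne
    exact hSne (hmax S (lt_of_le_of_ne hRS hne))
  have hmem : ∀ x : D, x ∈ R ↔ x * β = β * x := by
    intro x
    rw [hRSeq]
    rw [Subring.mem_centralizer_iff]
    constructor
    · intro h; exact (h β rfl).symm
    · intro h g hg
      rw [Set.mem_singleton_iff] at hg; subst hg; exact h.symm
  constructor
  · ext x
    simpa using hmem x
  · intro r hr hr0
    refine ⟨r⁻¹, ?_, mul_inv_cancel₀ hr0, inv_mul_cancel₀ hr0⟩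
    rw [hmem]
    have hc : r * β = β * r := (hmem r).mp hr
    have : r⁻¹ * (β * r) * r⁻¹ = r⁻¹ * (r * β) * r⁻¹ := by rw [hc]
    calc r⁻¹ * β = r⁻¹ * β * r * r⁻¹ := by
            rw [mul_assoc, mul_inv_cancel₀ hr0, mul_one]
      _ = r⁻¹ * r * β * r⁻¹ := by
            rw [mul_assoc r⁻¹ β r, ← hc, ← mul_assoc]
      _ = β * r⁻¹ := by rw [inv_mul_cancel₀ hr0, one_mul]
end

section
/- Let D be a non-commutative division ring with center F, and R a maximal subring of D which is a division ring and does not contain F. Then R ∩ F is a maximal subring of F, and R ∩ F is a field. -/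
open Polynomial

/-- Conjugation by a unit (given explicitly with its inverse) as a ring hom. -/
private def conjHom {A : Type*} [Ring A] (u v : A) (huv : u * v = 1) (hvu : v * u = 1) :
    A →+* A where
  toFun a := u * a * v
  map_one' := by rw [mul_one, huv]
  map_mul' a b := by
    simp only [mul_assoc]
    rw [← mul_assoc v u, hvu, one_mul]
  map_zero' := by simp
  map_add' a b := by rw [mul_add, add_mul]

set_option maxHeartbeats 1000000 in
set_option synthInstance.maxHeartbeats 400000 in
private lemma center_le_aux (D : Type*) [DivisionRing D]
    (R : Subring D) (hmax : ∀ S : Subring D, R < S → S = ⊤)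
    (hdiv : ∀ x ∈ R, x ≠ 0 → ∃ y ∈ R, x * y = 1 ∧ y * x = 1)
    (S : Subring D) (hS : S ≤ Subring.center D)
    (hsub : (R : Set D) ∩ (Subring.center D : Set D) ⊆ (S : Set D))
    (s : D) (hsS : s ∈ S) (hsR : s ∉ R) :
    ∀ f ∈ Subring.center D, f ∈ S := by
  classical
  -- R is a division ring
  letI : DivisionRing ↥R := DivisionRing.ofIsUnitOrEqZero (fun a => by
    rcases eq_or_ne a 0 with h | h
    · exact Or.inr h
    · left
      obtain ⟨y, hyR, hxy, hyx⟩ := hdiv (a : D) a.2 (by simpa using h)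
      exact ⟨⟨a, ⟨y, hyR⟩, Subtype.ext hxy, Subtype.ext hyx⟩, rfl⟩)
  have hsc : ∀ g : D, g * s = s * g := Subring.mem_center_iff.mp (hS hsS)
  have hs0 : s ≠ 0 := fun h => hsR (h ▸ R.zero_mem)
  -- the evaluation map at s
  have hsc' : ∀ a : ↥R, Commute (R.subtype a) s := fun a => hsc (R.subtype a)
  set φ : Polynomial ↥R →+* D := eval₂RingHom' R.subtype s hsc' with hφ
  have hφC : ∀ a : ↥R, φ (C a) = (a : D) := fun a => eval₂_C _ _
  have hφX : φ X = s := eval₂_X _ _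
  -- the subring generated by R and s is everything
  have hT : Subring.closure ((R : Set D) ∪ {s}) = ⊤ := by
    apply hmax
    refine lt_of_le_of_ne ?_ ?_
    · exact fun x hx => Subring.subset_closure (Or.inl hx)
    · intro h
      exact hsR (h ▸ Subring.subset_closure (Or.inr rfl))
  -- φ is surjective
  have hsurj : ∀ d : D, ∃ p : Polynomial ↥R, φ p = d := by
    intro d
    have hle : Subring.closure ((R : Set D) ∪ {s}) ≤ φ.range := by
      rw [Subring.closure_le]
      rintro x (hx | hx)
      · exact ⟨C ⟨x, hx⟩, hφC _⟩
      · exact ⟨X, by simp only [Set.mem_singleton_iff] at hx; rw [hφX, hx]⟩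
    exact hle (hT ▸ Subring.mem_top d)
  -- there is a nonzero polynomial killed by φ
  have hker : ∃ k : ℕ, ∃ p : Polynomial ↥R, p ≠ 0 ∧ φ p = 0 ∧ p.natDegree = k := by
    obtain ⟨q, hq⟩ := hsurj s⁻¹
    refine ⟨(X * q - 1).natDegree, X * q - 1, ?_, ?_, rfl⟩
    · intro h
      have := congrArg (fun p => coeff p 0) h
      simp [mul_coeff_zero] at this
    · rw [map_sub, map_mul, hφX, hq, map_one, mul_inv_cancel₀ hs0, sub_self]
  set n := Nat.find hker with hn
  obtain ⟨m₀, hm₀ne, hm₀ker, hm₀deg⟩ := Nat.find_spec hker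
  rw [← hn] at hm₀deg
  -- minimality in degree form
  have hmin : ∀ q : Polynomial ↥R, φ q = 0 → q.degree < (n : ℕ) → q = 0 := by
    intro q hq hdq
    by_contra hq0
    have h1 : q.natDegree < n := (natDegree_lt_iff_degree_lt hq0).mpr hdq
    exact Nat.find_min hker h1 ⟨q, hq0, hq, rfl⟩
  -- make it monic
  have hlc : m₀.leadingCoeff ≠ 0 := leadingCoeff_ne_zero.mpr hm₀ne
  set m : Polynomial ↥R := C (m₀.leadingCoeff)⁻¹ * m₀ with hm
  have hmcoeff : m.coeff n = 1 := by
    rw [hm, coeff_C_mul, ← hm₀deg, coeff_natDegree, inv_mul_cancel₀ hlc]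
  have hmdegle : m.natDegree ≤ n := hm₀deg ▸ natDegree_C_mul_le _ _
  have hmdeg : m.natDegree = n :=
    le_antisymm hmdegle (le_natDegree_of_ne_zero (hmcoeff ▸ one_ne_zero))
  have hmonic : m.Monic := by
    unfold Polynomial.Monic
    rw [leadingCoeff, hmdeg, hmcoeff]
  have hmker : φ m = 0 := by rw [hm, map_mul, hm₀ker, mul_zero]
  have hmdegree : m.degree = (n : ℕ) := by
    rw [degree_eq_natDegree hmonic.ne_zero, hmdeg]
  -- now the main argument
  intro f hf
  have hfc : ∀ g : D, g * f = f * g := Subring.mem_center_iff.mp hf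
  obtain ⟨p₀, hp₀⟩ := hsurj f
  set p : Polynomial ↥R := p₀ %ₘ m with hp
  have hφp : φ p = f := by
    have h1 := modByMonic_add_div p₀ m
    have h2 : φ (p + m * (p₀ /ₘ m)) = f := by rw [h1, hp₀]
    rwa [map_add, map_mul, hmker, zero_mul, add_zero] at h2
  have hpdeg : p.degree < (n : ℕ) := hmdegree ▸ degree_modByMonic_lt p₀ hmonic
  -- coefficients of p commute with R
  have hcoeffR : ∀ u ∈ R, ∀ i : ℕ, u * (p.coeff i : D) = (p.coeff i : D) * u := by
    intro u hu i
    rcases eq_or_ne u 0 with rfl | hu0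
    · rw [zero_mul, mul_zero]
    obtain ⟨v, hvR, huv, hvu⟩ := hdiv u hu hu0
    set ρ : ↥R →+* ↥R := conjHom (⟨u, hu⟩ : ↥R) ⟨v, hvR⟩
      (Subtype.ext huv) (Subtype.ext hvu) with hρ
    have hρa : ∀ a : ↥R, ((ρ a : ↥R) : D) = u * (a : D) * v := fun a => rfl
    -- φ (p.map ρ) = u * φ p * v
    have key : φ (p.map ρ) = u * φ p * v := by
      have hvs : Commute v s := hsc v
      rw [hφ, eval₂RingHom'_apply, eval₂RingHom'_apply, eval₂_map, eval₂_eq_sum,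
        eval₂_eq_sum, sum_def, sum_def, Finset.mul_sum, Finset.sum_mul]
      refine Finset.sum_congr rfl (fun i _ => ?_)
      simp only [RingHom.coe_comp, Function.comp_apply]
      have h6 : (R.subtype (ρ (p.coeff i)) : D) = u * (p.coeff i : D) * v := rfl
      rw [h6]
      simp only [mul_assoc]
      rw [(hvs.pow_right i).eq]
      rfl
    have hker2 : φ (p.map ρ - p) = 0 := by
      rw [map_sub, key, hφp, hfc u, mul_assoc, huv, mul_one, sub_self]
    have hdeg2 : (p.map ρ - p).degree < (n : ℕ) :=
      lt_of_le_of_lt (degree_sub_le _ _) (max_lt (lt_of_le_of_lt degree_map_le hpdeg) hpdeg)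
    have heq : p.map ρ = p := sub_eq_zero.mp (hmin _ hker2 hdeg2)
    have h3 : ρ (p.coeff i) = p.coeff i := by
      rw [← coeff_map, heq]
    have h4 : u * (p.coeff i : D) * v = (p.coeff i : D) := by
      rw [← hρa, h3]
    have h5 : u * (p.coeff i : D) * v * u = (p.coeff i : D) * u := by rw [h4]
    rwa [mul_assoc (u * (p.coeff i : D)) v u, hvu, mul_one] at h5
  -- coefficients of p are central
  have hcoeffC : ∀ i : ℕ, (p.coeff i : D) ∈ Subring.center D := by
    intro i
    rw [Subring.mem_center_iff]
    have hcent : Subring.closure ((R : Set D) ∪ {s}) ≤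
        Subring.centralizer {(p.coeff i : D)} := by
      rw [Subring.closure_le]
      rintro x (hx | hx)
      · exact Subring.mem_centralizer_iff.mpr (fun g hg => by
          rw [Set.mem_singleton_iff] at hg
          rw [hg]
          exact (hcoeffR x hx i).symm)
      · rw [Set.mem_singleton_iff] at hx
        subst hx
        exact Subring.mem_centralizer_iff.mpr (fun g hg => by
          rw [Set.mem_singleton_iff] at hg
          rw [hg]
          exact hsc _)
    intro g
    have hg : g ∈ Subring.centralizer {(p.coeff i : D)} := hcent (hT ▸ Subring.mem_top g)
    exact (Subring.mem_centralizer_iff.mp hg _ rfl).symm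
  -- conclude
  have : f = ∑ i ∈ p.support, (p.coeff i : D) * s ^ i := by
    rw [← hφp, hφ, eval₂RingHom'_apply, eval₂_eq_sum, sum_def]
    rfl
  rw [this]
  exact Subring.sum_mem S (fun i _ =>
    S.mul_mem (hsub ⟨(p.coeff i).2, hcoeffC i⟩) (S.pow_mem hsS i))

theorem stmt_13 (D : Type*) [DivisionRing D] (hnc : ∃ x y : D, x * y ≠ y * x)
    (R : Subring D) (hR : R ≠ ⊤) (hmax : ∀ S : Subring D, R < S → S = ⊤)
    (hdiv : ∀ x ∈ R, x ≠ 0 → ∃ y ∈ R, x * y = 1 ∧ y * x = 1)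
    (hF : ¬ (Subring.center D ≤ R)) :
    ((R : Set D) ∩ (Subring.center D : Set D) ≠ (Subring.center D : Set D)) ∧
    (∀ S : Subring D, S ≤ Subring.center D →
      (R : Set D) ∩ (Subring.center D : Set D) ⊆ (S : Set D) →
      (S : Set D) = (R : Set D) ∩ (Subring.center D : Set D) ∨ S = Subring.center D) ∧
    (∀ x ∈ (R : Set D) ∩ (Subring.center D : Set D), x ≠ 0 →
      x⁻¹ ∈ (R : Set D) ∩ (Subring.center D : Set D)) := by
  refine ⟨?_, ?_, ?_⟩
  · intro h
    apply hF
    intro x hx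
    have hx' : x ∈ (R : Set D) ∩ (Subring.center D : Set D) := h.symm ▸ hx
    exact hx'.1
  · intro S hS hsub
    by_cases hle : (S : Set D) ⊆ (R : Set D)
    · left
      apply Set.Subset.antisymm
      · exact fun x hx => ⟨hle hx, hS hx⟩
      · exact hsub
    · right
      obtain ⟨s, hsS, hsR⟩ := Set.not_subset.mp hle
      exact le_antisymm hS (fun f hf =>
        center_le_aux D R hmax hdiv S hS hsub s hsS hsR f hf)
  · rintro x ⟨hxR, hxF⟩ hx0
    obtain ⟨y, hyR, hxy, hyx⟩ := hdiv x hxR hx0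
    have hxy' : x⁻¹ = y := inv_eq_of_mul_eq_one_right hxy
    refine ⟨hxy' ▸ hyR, ?_⟩
    simp only [SetLike.mem_coe] at hxF ⊢
    rw [Subring.mem_center_iff] at hxF ⊢
    intro g
    have h1 : Commute x g := (hxF g).symm
    exact (h1.inv_left₀.symm).eq
end

section
/- Let D be a non-commutative division ring with center F, and R a maximal subring of D which is not a division ring and does not contain F. Then R ∩ F is a maximal subring of F and R ∩ F is not a field. -/
open Finset

open Finset

namespace Stmt14Aux

variable {D : Type*} [DivisionRing D]

lemma tpow_comm {t : D} (htc : ∀ d : D, t * d = d * t) (k : ℕ) (d : D) :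
    t ^ k * d = d * t ^ k := by
  induction k with
  | zero => simp
  | succ n ih => rw [pow_succ, mul_assoc, htc d, ← mul_assoc, ih, mul_assoc]

lemma inv_comm {x : D} (hx : ∀ d : D, x * d = d * x) (d : D) : x⁻¹ * d = d * x⁻¹ := by
  rcases eq_or_ne x 0 with h | h
  · simp [h]
  · calc x⁻¹ * d = x⁻¹ * (d * (x * x⁻¹)) := by rw [mul_inv_cancel₀ h, mul_one]
    _ = x⁻¹ * (d * x * x⁻¹) := by rw [mul_assoc d]
    _ = x⁻¹ * (x * d * x⁻¹) := by rw [← hx d]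
    _ = x⁻¹ * (x * (d * x⁻¹)) := by rw [mul_assoc x]
    _ = d * x⁻¹ := by rw [← mul_assoc, inv_mul_cancel₀ h, one_mul]

/-- representation as polynomial in central `t` with coefficients in `R` -/
def Rep (R : Subring D) (t d : D) : Prop :=
  ∃ n : ℕ, ∃ v : ℕ → D, (∀ i, v i ∈ R) ∧ d = ∑ i ∈ range n, v i * t ^ i

variable {R : Subring D} {t : D}

lemma sum_pad (v : ℕ → D) (n N : ℕ) (hnN : n ≤ N) :
    ∑ i ∈ range n, v i * t ^ i
      = ∑ i ∈ range N, (if i < n then v i else 0) * t ^ i := by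
  have h1 : ∑ i ∈ range n, v i * t ^ i
      = ∑ i ∈ range n, (if i < n then v i else 0) * t ^ i :=
    Finset.sum_congr rfl fun i hi => by rw [if_pos (mem_range.1 hi)]
  rw [h1]
  exact Finset.sum_subset (Finset.range_subset_range.2 hnN) (fun i _ hi => by
    rw [if_neg (by simpa using hi), zero_mul])

lemma rep_zero : Rep R t 0 :=
  ⟨0, fun _ => 0, fun _ => R.zero_mem, by simp⟩

lemma rep_of_mem {r : D} (hr : r ∈ R) : Rep R t r :=
  ⟨1, fun _ => r, fun _ => hr, by simp⟩

lemma rep_t : Rep R t t := by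
  refine ⟨2, fun i => if i = 1 then 1 else 0, fun i => by dsimp only; split; exacts [R.one_mem, R.zero_mem], ?_⟩
  rw [Finset.sum_range_succ, Finset.sum_range_succ]
  simp

lemma Rep.add {d e : D} (hd : Rep R t d) (he : Rep R t e) : Rep R t (d + e) := by
  obtain ⟨n, v, hv, rfl⟩ := hd
  obtain ⟨m, w, hw, rfl⟩ := he
  refine ⟨max n m, fun i => (if i < n then v i else 0) + (if i < m then w i else 0),
    fun i => add_mem (by split; exacts [hv i, R.zero_mem]) (by split; exacts [hw i, R.zero_mem]), ?_⟩
  rw [sum_pad v n (max n m) (le_max_left _ _), sum_pad w m (max n m) (le_max_right _ _),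
    ← Finset.sum_add_distrib]
  exact Finset.sum_congr rfl fun i _ => by rw [add_mul]

lemma Rep.neg {d : D} (hd : Rep R t d) : Rep R t (-d) := by
  obtain ⟨n, v, hv, rfl⟩ := hd
  exact ⟨n, fun i => -v i, fun i => R.neg_mem (hv i),
    by rw [← Finset.sum_neg_distrib]; exact Finset.sum_congr rfl fun i _ => by rw [neg_mul]⟩

lemma Rep.mul_r (htc : ∀ d : D, t * d = d * t) {d : D} (hd : Rep R t d) {r : D} (hr : r ∈ R) :
    Rep R t (d * r) := by
  obtain ⟨n, v, hv, rfl⟩ := hd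
  refine ⟨n, fun i => v i * r, fun i => R.mul_mem (hv i) hr, ?_⟩
  rw [Finset.sum_mul]
  exact Finset.sum_congr rfl fun i _ => by rw [mul_assoc, tpow_comm htc i r, ← mul_assoc]

lemma Rep.mul_t {d : D} (hd : Rep R t d) : Rep R t (d * t) := by
  obtain ⟨n, v, hv, rfl⟩ := hd
  refine ⟨n + 1, fun i => if i = 0 then 0 else v (i - 1),
    fun i => by dsimp only; split; exacts [R.zero_mem, hv _], ?_⟩
  rw [Finset.sum_mul,
    Finset.sum_range_succ' (fun i => (if i = 0 then (0:D) else v (i - 1)) * t ^ i) n]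
  simp only [Nat.add_sub_cancel, Nat.succ_ne_zero, if_false, if_pos rfl, zero_mul, add_zero,
    reduceIte]
  exact Finset.sum_congr rfl fun i _ => by rw [mul_assoc, ← pow_succ]

lemma Rep.mul_tpow {d : D} (hd : Rep R t d) (k : ℕ) : Rep R t (d * t ^ k) := by
  induction k with
  | zero => simpa using hd
  | succ n ih => rw [pow_succ, ← mul_assoc]; exact ih.mul_t

lemma rep_sum {N : ℕ} {f : ℕ → D} (hf : ∀ i ∈ range N, Rep R t (f i)) :
    Rep R t (∑ i ∈ range N, f i) := by
  induction N with
  | zero => simpa using (rep_zero : Rep R t 0)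
  | succ n ih =>
      rw [Finset.sum_range_succ]
      exact (ih fun i hi => hf i (by simp at hi ⊢; omega)).add (hf n (by simp))

lemma Rep.mul (htc : ∀ d : D, t * d = d * t) {d e : D} (hd : Rep R t d) (he : Rep R t e) :
    Rep R t (d * e) := by
  obtain ⟨m, w, hw, rfl⟩ := he
  rw [Finset.mul_sum]
  refine rep_sum fun i _ => ?_
  rw [← mul_assoc]
  exact (hd.mul_r htc (hw i)).mul_tpow i

lemma rep_all (hmax : ∀ S : Subring D, R < S → S = ⊤)
    (htc : ∀ d : D, t * d = d * t) (htR : t ∉ R) (d : D) : Rep R t d := by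
  have hle : R ≤ Subring.closure (insert t (R : Set D)) :=
    fun x hx => Subring.subset_closure (Set.mem_insert_of_mem _ hx)
  have htop : Subring.closure (insert t (R : Set D)) = ⊤ := by
    refine hmax _ (lt_of_le_of_ne hle fun h => htR ?_)
    have ht : t ∈ Subring.closure (insert t (R : Set D)) :=
      Subring.subset_closure (Set.mem_insert _ _)
    rwa [← h] at ht
  have hd : d ∈ Subring.closure (insert t (R : Set D)) := htop ▸ Subring.mem_top d
  induction hd using Subring.closure_induction with
  | mem x hx =>
      rcases hx with rfl | hx
      · exact rep_t
      · exact rep_of_mem hx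
  | zero => exact rep_zero
  | one => exact rep_of_mem R.one_mem
  | add x y hx hy h1 h2 => exact h1.add h2
  | neg x hx h => exact h.neg
  | mul x y hx hy h1 h2 => exact h1.mul htc h2

end Stmt14Aux

namespace Stmt14Aux

variable {D : Type*} [DivisionRing D]

/-- iterated absorption sets for the denominator ideal of a central element η -/
def absorb (R : Subring D) (η : D) : ℕ → Set D
  | 0 => (R : Set D)
  | n + 1 => {d | ∀ w : D, w ∈ R → w * η ∈ R → w * d ∈ absorb R η n}

section Core

variable {R : Subring D} {η : D}

lemma den_mul_r (hηc : ∀ d : D, η * d = d * η) {w r : D}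
    (hwR : w ∈ R) (hwη : w * η ∈ R) (hr : r ∈ R) :
    w * r ∈ R ∧ (w * r) * η ∈ R := by
  refine ⟨R.mul_mem hwR hr, ?_⟩
  have h : (w * r) * η = (w * η) * r := by
    rw [mul_assoc, ← hηc r, ← mul_assoc]
  rw [h]
  exact R.mul_mem hwη hr

lemma absorb_R : ∀ n, ∀ r ∈ R, r ∈ absorb R η n := by
  intro n
  induction n with
  | zero => exact fun r hr => hr
  | succ n ih =>
      intro r hr w hwR hwη
      exact ih _ (R.mul_mem hwR hr)

lemma absorb_mono : ∀ n, absorb R η n ⊆ absorb R η (n + 1) := by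
  intro n
  induction n with
  | zero => exact fun r hr w hwR hwη => R.mul_mem hwR hr
  | succ n ih => exact fun d hd w hwR hwη => ih (hd w hwR hwη)

lemma absorb_mono_le {m n : ℕ} (h : m ≤ n) : absorb R η m ⊆ absorb R η n := by
  induction h with
  | refl => exact fun _ h => h
  | step _ ih => exact fun d hd => absorb_mono _ (ih hd)

lemma absorb_add : ∀ n, ∀ d e : D, d ∈ absorb R η n → e ∈ absorb R η n →
    d + e ∈ absorb R η n := by
  intro n
  induction n with
  | zero => exact fun d e hd he => R.add_mem hd he
  | succ n ih =>
      intro d e hd he w hwR hwη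
      rw [mul_add]
      exact ih _ _ (hd w hwR hwη) (he w hwR hwη)

lemma absorb_neg : ∀ n, ∀ d : D, d ∈ absorb R η n → -d ∈ absorb R η n := by
  intro n
  induction n with
  | zero => exact fun d hd => R.neg_mem hd
  | succ n ih =>
      intro d hd w hwR hwη
      rw [mul_neg]
      exact ih _ (hd w hwR hwη)

lemma absorb_mul (hηc : ∀ d : D, η * d = d * η) :
    ∀ m n, ∀ d e : D, d ∈ absorb R η m → e ∈ absorb R η n →
    d * e ∈ absorb R η (m + n) := by
  intro m
  induction m with
  | zero =>
      intro n
      simp only [Nat.zero_add]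
      induction n with
      | zero => exact fun d e hd he => R.mul_mem hd he
      | succ n ih =>
          intro d e hd he
          intro w hwR hwη
          rw [← mul_assoc]
          have hwd := den_mul_r hηc hwR hwη hd
          exact he (w * d) hwd.1 hwd.2
  | succ m ih =>
      intro n d e hd he
      have hc : m + 1 + n = (m + n) + 1 := by omega
      rw [hc]
      intro w hwR hwη
      rw [← mul_assoc]
      exact ih n (w * d) e (hd w hwR hwη) he

/-- The key contradiction: a central element η with η ∉ R, η⁻¹ ∉ R that has a nonzero
denominator in R is impossible when R is a maximal subring. -/
lemma core (hmax : ∀ S : Subring D, R < S → S = ⊤) (hηc : ∀ d : D, η * d = d * η)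
    (hηR : η ∉ R) (hηiR : η⁻¹ ∉ R) (w₀ : D) (hw₀R : w₀ ∈ R) (hw₀ : w₀ ≠ 0)
    (hw₀η : w₀ * η ∈ R) : False := by
  have hη0 : η ≠ 0 := fun h => hηR (h ▸ R.zero_mem)
  have hηic : ∀ d : D, η⁻¹ * d = d * η⁻¹ := inv_comm hηc
  -- the subring Z of elements absorbed into R by iterated denominators
  let Z : Subring D :=
    { carrier := {d | ∃ n, d ∈ absorb R η n}
      one_mem' := ⟨0, R.one_mem⟩
      zero_mem' := ⟨0, R.zero_mem⟩
      mul_mem' := by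
        rintro x y ⟨m, hm⟩ ⟨n, hn⟩
        exact ⟨m + n, absorb_mul hηc m n x y hm hn⟩
      add_mem' := by
        rintro x y ⟨m, hm⟩ ⟨n, hn⟩
        exact ⟨max m n, absorb_add _ _ _ (absorb_mono_le (le_max_left m n) hm)
          (absorb_mono_le (le_max_right m n) hn)⟩
      neg_mem' := by
        rintro x ⟨n, hn⟩
        exact ⟨n, absorb_neg _ _ hn⟩ }
  have hZle : R ≤ Z := fun x hx => ⟨0, hx⟩
  have hηZ : η ∈ Z := ⟨1, fun w hwR hwη => hwη⟩
  have hZtop : Z = ⊤ := hmax Z (lt_of_le_of_ne hZle fun h => hηR (h ▸ hηZ))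
  obtain ⟨k, hk⟩ : ∃ n, η⁻¹ ∈ absorb R η n := by
    have h : η⁻¹ ∈ Z := hZtop ▸ Subring.mem_top η⁻¹
    exact h
  -- the subring E of elements stabilizing the denominator set
  let E : Subring D :=
    { carrier := {d | ∀ w : D, w ∈ R → w * η ∈ R → (w * d ∈ R ∧ (w * d) * η ∈ R)}
      one_mem' := by
        intro w hwR hwη
        simpa using ⟨hwR, hwη⟩
      zero_mem' := by
        intro w hwR hwη
        simp only [mul_zero, zero_mul]
        exact ⟨R.zero_mem, R.zero_mem⟩
      mul_mem' := by
        intro x y hx hy w hwR hwη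
        have hwx := hx w hwR hwη
        have h2 := hy (w * x) hwx.1 hwx.2
        rw [← mul_assoc]
        exact h2
      add_mem' := by
        intro x y hx hy w hwR hwη
        have h1 := hx w hwR hwη
        have h2 := hy w hwR hwη
        rw [mul_add, add_mul]
        exact ⟨R.add_mem h1.1 h2.1, R.add_mem h1.2 h2.2⟩
      neg_mem' := by
        intro x hx w hwR hwη
        have h1 := hx w hwR hwη
        rw [mul_neg, neg_mul]
        exact ⟨R.neg_mem h1.1, R.neg_mem h1.2⟩ }
  have hREle : R ≤ E := fun r hr w hwR hwη => den_mul_r hηc hwR hwη hr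
  rcases hREle.lt_or_eq with hlt | heq
  · -- E = ⊤ : every denominator absorbs all negative powers, giving w₀ * D ⊆ R
    have hEtop : E = ⊤ := hmax E hlt
    have hstep : ∀ w : D, w ∈ R → w * η ∈ R → (w * η⁻¹ ∈ R ∧ (w * η⁻¹) * η ∈ R) := by
      intro w hwR hwη
      have h : η⁻¹ ∈ E := hEtop ▸ Subring.mem_top η⁻¹
      exact h w hwR hwη
    have hiter : ∀ j : ℕ, ∀ w : D, w ∈ R → w * η ∈ R →
        (w * (η⁻¹) ^ j ∈ R ∧ (w * (η⁻¹) ^ j) * η ∈ R) := by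
      intro j
      induction j with
      | zero => intro w hwR hwη; simpa using ⟨hwR, hwη⟩
      | succ j ih =>
          intro w hwR hwη
          have h1 := hstep w hwR hwη
          have h2 := ih (w * η⁻¹) h1.1 h1.2
          rw [pow_succ', ← mul_assoc]
          exact h2
    obtain ⟨n, v, hv, hrep⟩ : Rep R η⁻¹ (w₀⁻¹ * η) := rep_all hmax hηic hηiR _
    have hηmem : η ∈ R := by
      have h1 : η = w₀ * (w₀⁻¹ * η) := by rw [← mul_assoc, mul_inv_cancel₀ hw₀, one_mul]
      rw [h1, hrep, Finset.mul_sum]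
      refine Subring.sum_mem R fun i _ => ?_
      rw [← mul_assoc]
      have hwv := den_mul_r hηc hw₀R hw₀η (hv i)
      exact (hiter i (w₀ * v i) hwv.1 hwv.2).1
    exact hηR hηmem
  · -- E = R : descend the absorption level of η⁻¹ down to 0
    have hdesc : ∀ m : ℕ, ∀ e : D, e * η ∈ R → e ∈ absorb R η (m + 1) → e ∈ absorb R η m := by
      intro m
      induction m with
      | zero =>
          intro e heη he
          have heE : e ∈ E := by
            intro w hwR hwη
            refine ⟨he w hwR hwη, ?_⟩
            rw [mul_assoc]
            exact R.mul_mem hwR heη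
          rw [← heq] at heE
          exact heE
      | succ m ih =>
          intro e heη he
          intro w hwR hwη
          refine ih (w * e) ?_ (he w hwR hwη)
          rw [mul_assoc]
          exact R.mul_mem hwR heη
    have hdown : ∀ j : ℕ, η⁻¹ ∈ absorb R η j → η⁻¹ ∈ absorb R η 0 := by
      intro j
      induction j with
      | zero => exact fun h => h
      | succ j ih =>
          exact fun h => ih (hdesc j η⁻¹ (by rw [inv_mul_cancel₀ hη0]; exact R.one_mem) h)
    exact hηiR (hdown k hk)

end Core

end Stmt14Aux

namespace Stmt14Aux

variable {D : Type*} [DivisionRing D]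

lemma ml {R : Subring D} (hmax : ∀ S : Subring D, R < S → S = ⊤) {a : D} (haR : a ∈ R)
    (ha0 : a ≠ 0) (hano : ¬∃ b ∈ R, a * b = 1 ∧ b * a = 1)
    {t : D} (htc : ∀ d : D, t * d = d * t) (htR : t ∉ R) (htiR : t⁻¹ ∉ R) :
    ∃ γ : D, (∀ d : D, γ * d = d * γ) ∧ γ ∉ R ∧ ∃ w : D, w ≠ 0 ∧ w ∈ R ∧ w * γ ∈ R := by
  classical
  have ht0 : t ≠ 0 := fun h => htR (h ▸ R.zero_mem)
  have htic : ∀ d : D, t⁻¹ * d = d * t⁻¹ := inv_comm htc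
  have hipow : ∀ k m : ℕ, k ≤ m → (t⁻¹) ^ k * t ^ m = t ^ (m - k) := by
    intro k m hkm
    have h1 : t ^ m = t ^ k * t ^ (m - k) := by rw [← pow_add]; congr 1; omega
    rw [h1, inv_pow, inv_mul_cancel_left₀ (pow_ne_zero k ht0)]
  -- existence of a relation with nonzero top coefficient
  have hQex : ∃ n : ℕ, ∃ v : ℕ → D, (∀ i, v i ∈ R) ∧
      (∑ i ∈ range (n + 1), v i * t ^ i) = 0 ∧ v n ≠ 0 := by
    obtain ⟨m, v, hv, hrep⟩ : Rep R t⁻¹ t := rep_all hmax htic htiR t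
    have hsum : t ^ (m + 1) = ∑ k ∈ range m, v k * t ^ (m - k) := by
      have h2 : t ^ (m + 1) = t * t ^ m := pow_succ' t m
      have h3 : t * t ^ m = (∑ i ∈ range m, v i * t⁻¹ ^ i) * t ^ m :=
        congrArg (fun z => z * t ^ m) hrep
      rw [h2, h3, Finset.sum_mul]
      refine Finset.sum_congr rfl fun k hk => ?_
      rw [mul_assoc, hipow k m (le_of_lt (mem_range.1 hk))]
    have hrefl : ∑ k ∈ range m, v k * t ^ (m - k)
        = ∑ j ∈ range m, v (m - 1 - j) * t ^ (j + 1) := by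
      rw [← Finset.sum_range_reflect (fun j => v (m - 1 - j) * t ^ (j + 1)) m]
      refine Finset.sum_congr rfl fun k hk => ?_
      have hk' := mem_range.1 hk
      show v k * t ^ (m - k) = v (m - 1 - (m - 1 - k)) * t ^ ((m - 1 - k) + 1)
      have e1 : m - 1 - (m - 1 - k) = k := by omega
      have e2 : (m - 1 - k) + 1 = m - k := by omega
      rw [e1, e2]
    refine ⟨m + 1, fun i => if i = m + 1 then 1 else if i = 0 then 0 else -(v (m - i)),
      fun i => by dsimp only; split; · exact R.one_mem
                  · split; exacts [R.zero_mem, R.neg_mem (hv _)], ?_, by simp⟩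
    rw [Finset.sum_range_succ]
    have hmid : ∀ i ∈ range (m + 1),
        (if i = m + 1 then (1:D) else if i = 0 then 0 else -(v (m - i))) * t ^ i
        = (if i = 0 then 0 else -(v (m - i))) * t ^ i := by
      intro i hi
      rw [if_neg (by have := mem_range.1 hi; omega)]
    rw [Finset.sum_congr rfl hmid]
    dsimp only
    rw [if_pos rfl, one_mul,
      Finset.sum_range_succ' (fun i => (if i = 0 then (0:D) else -(v (m - i))) * t ^ i) m]
    simp only [Nat.succ_ne_zero, if_false, if_pos rfl, zero_mul, add_zero, reduceIte]
    have hstep : ∀ j ∈ range m, -v (m - (j + 1)) * t ^ (j + 1) = -(v (m - 1 - j) * t ^ (j + 1)) := by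
      intro j hj
      have e1 : m - (j + 1) = m - 1 - j := by omega
      rw [e1, neg_mul]
    rw [Finset.sum_congr rfl hstep, Finset.sum_neg_distrib, ← hrefl, ← hsum]
    rw [neg_add_cancel]
  set nstar := Nat.find hQex with hnstar
  obtain ⟨v, hvR, hvsum, hvtop⟩ : ∃ v : ℕ → D, (∀ i, v i ∈ R) ∧
      (∑ i ∈ range (nstar + 1), v i * t ^ i) = 0 ∧ v nstar ≠ 0 := Nat.find_spec hQex
  have hnpos : 0 < nstar := by
    rcases Nat.eq_zero_or_pos nstar with h | h
    · exfalso
      apply hvtop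
      rw [h] at hvsum ⊢
      simpa using hvsum
    · exact h
  -- no nonzero relation below nstar
  have lemZ : ∀ u : ℕ → D, (∀ i, u i ∈ R) → (∑ i ∈ range nstar, u i * t ^ i) = 0 →
      ∀ i, i < nstar → u i = 0 := by
    intro u huR husum
    by_contra hcon
    push_neg at hcon
    obtain ⟨i₀, hi₀, hne⟩ := hcon
    have hjP : u (Nat.findGreatest (fun i => u i ≠ 0) (nstar - 1)) ≠ 0 :=
      Nat.findGreatest_spec (P := fun i => u i ≠ 0) (show i₀ ≤ nstar - 1 by omega) hne
    have hjle' : Nat.findGreatest (fun i => u i ≠ 0) (nstar - 1) ≤ nstar - 1 :=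
      Nat.findGreatest_le _
    have hjmax' : ∀ i, Nat.findGreatest (fun i => u i ≠ 0) (nstar - 1) < i →
        i ≤ nstar - 1 → u i = 0 := fun i h1 h2 => by
      by_contra h3
      exact Nat.findGreatest_is_greatest h1 h2 h3
    obtain ⟨j, hjle, hjP, hjmax⟩ :
        ∃ j, j ≤ nstar - 1 ∧ u j ≠ 0 ∧ ∀ i, j < i → i ≤ nstar - 1 → u i = 0 :=
      ⟨_, hjle', hjP, hjmax'⟩
    have htrunc : ∑ i ∈ range (j + 1), u i * t ^ i = ∑ i ∈ range nstar, u i * t ^ i := by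
      refine Finset.sum_subset (Finset.range_subset_range.2 (by omega)) fun i hi hni => ?_
      have h1 : ¬ i < j + 1 := by simpa using hni
      have h2 : i < nstar := mem_range.1 hi
      rw [hjmax i (by omega) (by omega), zero_mul]
    exact Nat.find_min hQex (show j < nstar by omega) ⟨u, huR, htrunc.trans husum, hjP⟩
  set wb := v nstar with hwb
  have hwb0 : wb ≠ 0 := hvtop
  have hwbR : wb ∈ R := hvR nstar
  -- commutation identities from uniqueness of the minimal relation
  have hcomm : ∀ r : D, r ∈ R → ∀ i, i < nstar + 1 → wb * (r * v i) = v i * (r * wb) := by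
    intro r hr
    have h1 : ∑ i ∈ range (nstar + 1), (wb * (r * v i)) * t ^ i = 0 := by
      have hterm : ∀ i ∈ range (nstar + 1),
          (wb * (r * v i)) * t ^ i = wb * (r * (v i * t ^ i)) := fun i _ => by
        rw [mul_assoc, mul_assoc]
      rw [Finset.sum_congr rfl hterm, ← Finset.mul_sum, ← Finset.mul_sum, hvsum,
        mul_zero, mul_zero]
    have h2 : ∑ i ∈ range (nstar + 1), (v i * (r * wb)) * t ^ i = 0 := by
      have hterm : ∀ i ∈ range (nstar + 1),
          (v i * (r * wb)) * t ^ i = (v i * t ^ i) * (r * wb) := fun i _ => by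
        rw [mul_assoc, ← tpow_comm htc i (r * wb), ← mul_assoc]
      rw [Finset.sum_congr rfl hterm, ← Finset.sum_mul, hvsum, zero_mul]
    have hrel : ∑ i ∈ range (nstar + 1), (wb * (r * v i) - v i * (r * wb)) * t ^ i = 0 := by
      have hterm : ∀ i ∈ range (nstar + 1),
          (wb * (r * v i) - v i * (r * wb)) * t ^ i
          = (wb * (r * v i)) * t ^ i - (v i * (r * wb)) * t ^ i := fun i _ => by rw [sub_mul]
      rw [Finset.sum_congr rfl hterm, Finset.sum_sub_distrib, h1, h2, sub_zero]
    have hrel' : ∑ i ∈ range nstar, (wb * (r * v i) - v i * (r * wb)) * t ^ i = 0 := by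
      rw [Finset.sum_range_succ] at hrel
      have htop : wb * (r * v nstar) - v nstar * (r * wb) = 0 := by
        rw [← hwb, sub_self]
      rw [htop, zero_mul, add_zero] at hrel
      exact hrel
    have hz := lemZ (fun i => wb * (r * v i) - v i * (r * wb))
      (fun i => R.sub_mem (R.mul_mem hwbR (R.mul_mem hr (hvR i)))
        (R.mul_mem (hvR i) (R.mul_mem hr hwbR))) hrel'
    intro i hi
    rcases Nat.lt_or_ge i nstar with h | h
    · exact sub_eq_zero.1 (hz i h)
    · have hieq : i = nstar := by omega
      subst hieq
      rw [← hwb]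
  have hwbv : ∀ i, i < nstar + 1 → wb * v i = v i * wb := by
    intro i hi
    have := hcomm 1 R.one_mem i hi
    simpa using this
  have hinv : ∀ i, i < nstar + 1 → wb⁻¹ * v i = v i * wb⁻¹ := by
    intro i hi
    apply mul_left_cancel₀ hwb0
    have hl : wb * (wb⁻¹ * v i) = v i := by rw [← mul_assoc, mul_inv_cancel₀ hwb0, one_mul]
    have hr2 : wb * (v i * wb⁻¹) = v i := by
      rw [← mul_assoc, hwbv i hi, mul_assoc, mul_inv_cancel₀ hwb0, mul_one]
    rw [hl, hr2]
  have hγr : ∀ i, i < nstar + 1 → ∀ r : D, r ∈ R →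
      (wb⁻¹ * v i) * r = r * (wb⁻¹ * v i) := by
    intro i hi r hr
    have h1 : wb * ((wb⁻¹ * v i) * r) = v i * r := by
      rw [← mul_assoc, ← mul_assoc, mul_inv_cancel₀ hwb0, one_mul]
    have h2 : wb * (r * (wb⁻¹ * v i)) = v i * r := by
      calc wb * (r * (wb⁻¹ * v i)) = wb * (r * (v i * wb⁻¹)) := by rw [hinv i hi]
      _ = wb * ((r * v i) * wb⁻¹) := by rw [← mul_assoc r (v i) wb⁻¹]
      _ = (wb * (r * v i)) * wb⁻¹ := by rw [← mul_assoc wb (r * v i) wb⁻¹]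
      _ = (v i * (r * wb)) * wb⁻¹ := by rw [hcomm r hr i hi]
      _ = v i * ((r * wb) * wb⁻¹) := by rw [mul_assoc (v i) (r * wb) wb⁻¹]
      _ = v i * (r * (wb * wb⁻¹)) := by rw [mul_assoc r wb wb⁻¹]
      _ = v i * r := by rw [mul_inv_cancel₀ hwb0, mul_one]
    exact mul_left_cancel₀ hwb0 (h1.trans h2.symm)
  have hγcen : ∀ i, i < nstar + 1 → ∀ d : D, (wb⁻¹ * v i) * d = d * (wb⁻¹ * v i) := by
    intro i hi d
    obtain ⟨n, u, hu, rfl⟩ := rep_all hmax htc htR d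
    rw [Finset.mul_sum, Finset.sum_mul]
    refine Finset.sum_congr rfl fun k _ => ?_
    calc (wb⁻¹ * v i) * (u k * t ^ k)
        = ((wb⁻¹ * v i) * u k) * t ^ k := (mul_assoc (wb⁻¹ * v i) (u k) (t ^ k)).symm
    _ = (u k * (wb⁻¹ * v i)) * t ^ k := by rw [hγr i hi (u k) (hu k)]
    _ = u k * ((wb⁻¹ * v i) * t ^ k) := mul_assoc (u k) (wb⁻¹ * v i) (t ^ k)
    _ = u k * (t ^ k * (wb⁻¹ * v i)) := by rw [← tpow_comm htc k (wb⁻¹ * v i)]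
    _ = (u k * t ^ k) * (wb⁻¹ * v i) := (mul_assoc (u k) (t ^ k) (wb⁻¹ * v i)).symm
  by_cases hall : ∀ i, i < nstar → wb⁻¹ * v i ∈ R
  · -- monic case: every coefficient central lands in R, contradiction with hnd
    exfalso
    have hγsum : ∑ i ∈ range (nstar + 1), (wb⁻¹ * v i) * t ^ i = 0 := by
      have h1 : wb * ∑ i ∈ range (nstar + 1), (wb⁻¹ * v i) * t ^ i
          = ∑ i ∈ range (nstar + 1), v i * t ^ i := by
        rw [Finset.mul_sum]
        exact Finset.sum_congr rfl fun i _ => by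
          rw [← mul_assoc, ← mul_assoc, mul_inv_cancel₀ hwb0, one_mul]
      have h2 := h1.trans hvsum
      rcases mul_eq_zero.1 h2 with h | h
      · exact absurd h hwb0
      · exact h
    have hmon : t ^ nstar = -∑ i ∈ range nstar, (wb⁻¹ * v i) * t ^ i := by
      have h3 := hγsum
      rw [Finset.sum_range_succ] at h3
      have h4 : wb⁻¹ * v nstar = 1 := by rw [← hwb, inv_mul_cancel₀ hwb0]
      rw [h4, one_mul] at h3
      exact eq_neg_of_add_eq_zero_right h3
    -- bounded-degree representations
    have hT_sum : ∀ (N : ℕ) (f : ℕ → D),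
        (∀ k ∈ range N, ∃ u : ℕ → D, (∀ i, u i ∈ R) ∧ f k = ∑ i ∈ range nstar, u i * t ^ i) →
        ∃ u : ℕ → D, (∀ i, u i ∈ R) ∧ (∑ k ∈ range N, f k) = ∑ i ∈ range nstar, u i * t ^ i := by
      intro N
      induction N with
      | zero =>
          intro f _
          exact ⟨fun _ => 0, fun _ => R.zero_mem, by simp⟩
      | succ N ih =>
          intro f hf
          obtain ⟨u1, hu1, hU1⟩ := ih f (fun k hk => hf k (by simp at hk ⊢; omega))
          obtain ⟨u2, hu2, hU2⟩ := hf N (by simp)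
          refine ⟨fun i => u1 i + u2 i, fun i => R.add_mem (hu1 i) (hu2 i), ?_⟩
          rw [Finset.sum_range_succ, hU1, hU2, ← Finset.sum_add_distrib]
          exact Finset.sum_congr rfl fun i _ => (add_mul _ _ _).symm
    have hT_mono : ∀ (k : ℕ) (r : D), r ∈ R →
        ∃ u : ℕ → D, (∀ i, u i ∈ R) ∧ r * t ^ k = ∑ i ∈ range nstar, u i * t ^ i := by
      intro k
      induction k using Nat.strong_induction_on with
      | _ k ih =>
        intro r hr
        by_cases hk : k < nstar
        · refine ⟨fun i => if i = k then r else 0,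
            fun i => by dsimp only; split; exacts [hr, R.zero_mem], ?_⟩
          have h1 : ∀ i ∈ range nstar,
              (if i = k then r else 0) * t ^ i = if i = k then r * t ^ i else 0 := by
            intro i _
            split <;> simp
          rw [Finset.sum_congr rfl h1, Finset.sum_ite_eq' (range nstar) k (fun i => r * t ^ i),
            if_pos (mem_range.2 hk)]
        · push_neg at hk
          have h1 : r * t ^ k
              = ∑ i ∈ range nstar, -(r * (wb⁻¹ * v i)) * t ^ (i + (k - nstar)) := by
            have h2 : k = nstar + (k - nstar) := by omega
            calc r * t ^ k = r * (t ^ nstar * t ^ (k - nstar)) := by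
                  rw [← pow_add, ← h2]
            _ = (r * t ^ nstar) * t ^ (k - nstar) := by rw [mul_assoc]
            _ = (r * -∑ i ∈ range nstar, (wb⁻¹ * v i) * t ^ i) * t ^ (k - nstar) := by
                  rw [← hmon]
            _ = (-∑ i ∈ range nstar, r * ((wb⁻¹ * v i) * t ^ i)) * t ^ (k - nstar) := by
                  rw [mul_neg, Finset.mul_sum]
            _ = -∑ i ∈ range nstar, (r * ((wb⁻¹ * v i) * t ^ i)) * t ^ (k - nstar) := by
                  rw [neg_mul, Finset.sum_mul]
            _ = ∑ i ∈ range nstar, -((r * ((wb⁻¹ * v i) * t ^ i)) * t ^ (k - nstar)) := by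
                  rw [Finset.sum_neg_distrib]
            _ = ∑ i ∈ range nstar, -(r * (wb⁻¹ * v i)) * t ^ (i + (k - nstar)) := by
                  refine Finset.sum_congr rfl fun i _ => ?_
                  simp only [neg_mul, pow_add, mul_assoc]
          rw [h1]
          refine hT_sum nstar _ fun i hi => ?_
          have hlt : i + (k - nstar) < k := by
            have := mem_range.1 hi
            omega
          exact ih (i + (k - nstar)) hlt (-(r * (wb⁻¹ * v i)))
            (R.neg_mem (R.mul_mem hr (hall i (mem_range.1 hi))))
    have hT_all : ∀ d : D, ∃ u : ℕ → D, (∀ i, u i ∈ R) ∧ d = ∑ i ∈ range nstar, u i * t ^ i := by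
      intro d
      obtain ⟨n, u, hu, rfl⟩ := rep_all hmax htc htR d
      exact hT_sum n _ fun k _ => hT_mono k (u k) (hu k)
    obtain ⟨u, hu, hrepa⟩ := hT_all a⁻¹
    have hu'R : ∀ i, (a * u i - (if i = 0 then 1 else 0)) ∈ R := fun i =>
      R.sub_mem (R.mul_mem haR (hu i)) (by split; exacts [R.one_mem, R.zero_mem])
    have h1 : ∑ i ∈ range nstar, (a * u i) * t ^ i = 1 := by
      have hone : (1 : D) = a * a⁻¹ := (mul_inv_cancel₀ ha0).symm
      rw [hone, hrepa, Finset.mul_sum]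
      exact Finset.sum_congr rfl fun i _ => mul_assoc a (u i) (t ^ i)
    have h2 : ∑ i ∈ range nstar, (if i = 0 then (1:D) else 0) * t ^ i = 1 := by
      have hterm : ∀ i ∈ range nstar,
          (if i = 0 then (1:D) else 0) * t ^ i = if i = 0 then 1 * t ^ i else 0 := by
        intro i _
        split <;> simp
      rw [Finset.sum_congr rfl hterm, Finset.sum_ite_eq' (range nstar) 0 (fun i => 1 * t ^ i),
        if_pos (mem_range.2 hnpos)]
      simp
    have hu'sum : ∑ i ∈ range nstar, (a * u i - (if i = 0 then 1 else 0)) * t ^ i = 0 := by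
      have hterm : ∀ i ∈ range nstar,
          (a * u i - (if i = 0 then 1 else 0)) * t ^ i
          = (a * u i) * t ^ i - (if i = 0 then (1:D) else 0) * t ^ i := fun i _ => by
        rw [sub_mul]
      rw [Finset.sum_congr rfl hterm, Finset.sum_sub_distrib, h1, h2, sub_self]
    have h0 := lemZ _ hu'R hu'sum 0 hnpos
    have hab : a * u 0 = 1 := by
      have h0' : a * u 0 - 1 = 0 := by simpa using h0
      have := sub_eq_zero.1 h0'
      exact this
    have hba : u 0 * a = 1 := by
      have hu0 : u 0 = a⁻¹ := by
        calc u 0 = (a⁻¹ * a) * u 0 := by rw [inv_mul_cancel₀ ha0, one_mul]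
        _ = a⁻¹ * (a * u 0) := by rw [mul_assoc]
        _ = a⁻¹ := by rw [hab, mul_one]
      rw [hu0, inv_mul_cancel₀ ha0]
    exact hano ⟨u 0, hu 0, hab, hba⟩
  · push_neg at hall
    obtain ⟨i, hi, hγnR⟩ := hall
    refine ⟨wb⁻¹ * v i, hγcen i (by omega), hγnR, wb, hwb0, hwbR, ?_⟩
    rw [← mul_assoc, mul_inv_cancel₀ hwb0, one_mul]
    exact hvR i

end Stmt14Aux

namespace Stmt14Aux

variable {D : Type*} [DivisionRing D]

lemma md {R : Subring D} (hmax : ∀ S : Subring D, R < S → S = ⊤) {a : D} (haR : a ∈ R)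
    (ha0 : a ≠ 0) (hano : ¬∃ b ∈ R, a * b = 1 ∧ b * a = 1)
    {t : D} (htc : ∀ d : D, t * d = d * t) (htR : t ∉ R) :
    ∃ γ : D, (∀ d : D, γ * d = d * γ) ∧ γ ∉ R ∧ γ⁻¹ ∈ R := by
  by_cases hti : t⁻¹ ∈ R
  · exact ⟨t, htc, htR, hti⟩
  · obtain ⟨γ, hγc, hγR, w, hw0, hwR, hwγ⟩ := ml hmax haR ha0 hano htc htR hti
    by_cases hγi : γ⁻¹ ∈ R
    · exact ⟨γ, hγc, hγR, hγi⟩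
    · exact (core hmax hγc hγR hγi w hwR hw0 hwγ).elim

end Stmt14Aux



set_option maxHeartbeats 1000000 in
theorem stmt_14 (D : Type*) [DivisionRing D] (hnc : ∃ x y : D, x * y ≠ y * x)
    (R : Subring D) (hR : R ≠ ⊤) (hmax : ∀ S : Subring D, R < S → S = ⊤)
    (hnd : ∃ a ∈ R, a ≠ 0 ∧ ¬∃ b ∈ R, a * b = 1 ∧ b * a = 1)
    (hF : ¬ (Subring.center D ≤ R)) :
    ((R : Set D) ∩ (Subring.center D : Set D) ≠ (Subring.center D : Set D)) ∧
    (∀ S : Subring D, S ≤ Subring.center D →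
      (R : Set D) ∩ (Subring.center D : Set D) ⊆ (S : Set D) →
      (S : Set D) = (R : Set D) ∩ (Subring.center D : Set D) ∨ S = Subring.center D) ∧
    (∃ x ∈ (R : Set D) ∩ (Subring.center D : Set D), x ≠ 0 ∧
      x⁻¹ ∉ (R : Set D) ∩ (Subring.center D : Set D)) := by
  classical
  obtain ⟨a, haR, ha0, hano⟩ := hnd
  obtain ⟨c, hcZ, hcR⟩ : ∃ c, c ∈ Subring.center D ∧ c ∉ R := by
    by_contra h
    push_neg at h
    exact hF fun x hx => h x hx
  have hcc : ∀ d : D, c * d = d * c := fun d => (Subring.mem_center_iff.mp hcZ d).symm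
  refine ⟨?_, ?_, ?_⟩
  · -- (1) R ∩ F ≠ F
    intro h
    apply hF
    intro x hx
    have hx' : x ∈ (R : Set D) ∩ (Subring.center D : Set D) := by
      rw [h]; exact hx
    exact hx'.1
  · -- (2) maximality of R ∩ F in F
    intro S hS hRS
    by_cases hSR : (S : Set D) ⊆ (R : Set D)
    · left
      exact Set.Subset.antisymm (fun x hx => ⟨hSR hx, hS hx⟩) hRS
    · right
      rw [Set.not_subset] at hSR
      obtain ⟨s, hsS, hsR⟩ := hSR
      have hsZ : s ∈ Subring.center D := hS hsS
      have hsc : ∀ d : D, s * d = d * s := fun d => (Subring.mem_center_iff.mp hsZ d).symm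
      obtain ⟨γ, hγc, hγR, hγi⟩ := Stmt14Aux.md hmax haR ha0 hano hsc hsR
      have hγ0 : γ ≠ 0 := fun h => hγR (h ▸ R.zero_mem)
      have hx0 : γ⁻¹ ≠ 0 := inv_ne_zero hγ0
      have hxc : ∀ d : D, γ⁻¹ * d = d * γ⁻¹ := Stmt14Aux.inv_comm hγc
      have hxZ : γ⁻¹ ∈ Subring.center D := Subring.mem_center_iff.mpr fun g => (hxc g).symm
      have hxS : γ⁻¹ ∈ S := hRS ⟨hγi, hxZ⟩
      have hKex : ∃ K : ℕ, s * (γ⁻¹) ^ K ∈ R := by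
        obtain ⟨n, v, hv, hrep⟩ := Stmt14Aux.rep_all hmax hγc hγR s
        refine ⟨n, ?_⟩
        rw [hrep, Finset.sum_mul]
        refine Subring.sum_mem R fun k hk => ?_
        have hkn : k < n := Finset.mem_range.1 hk
        have h1 : γ ^ k * (γ⁻¹) ^ n = (γ⁻¹) ^ (n - k) := by
          have h2 : (γ⁻¹ : D) ^ n = (γ⁻¹) ^ k * (γ⁻¹) ^ (n - k) := by
            rw [← pow_add]
            congr 1
            omega
          rw [h2, ← mul_assoc, inv_pow, mul_inv_cancel₀ (pow_ne_zero k hγ0), one_mul]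
        rw [mul_assoc, h1]
        exact R.mul_mem (hv k) (Subring.pow_mem R hγi _)
      have hKspec : s * (γ⁻¹) ^ (Nat.find hKex) ∈ R := Nat.find_spec hKex
      have hK0 : Nat.find hKex ≠ 0 := by
        intro h
        apply hsR
        rw [h, pow_zero, mul_one] at hKspec
        exact hKspec
      obtain ⟨σ, hσdef⟩ : ∃ σ : D, σ = s * (γ⁻¹) ^ (Nat.find hKex - 1) := ⟨_, rfl⟩
      have hσR : σ ∉ R := by
        intro h
        rw [hσdef] at h
        exact Nat.find_min hKex (show Nat.find hKex - 1 < Nat.find hKex by omega) h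
      have hσc : ∀ d : D, σ * d = d * σ := by
        intro d
        rw [hσdef]
        calc s * (γ⁻¹) ^ (Nat.find hKex - 1) * d
            = s * ((γ⁻¹) ^ (Nat.find hKex - 1) * d) := mul_assoc _ _ _
        _ = s * (d * (γ⁻¹) ^ (Nat.find hKex - 1)) := by
              rw [Stmt14Aux.tpow_comm hxc (Nat.find hKex - 1) d]
        _ = (s * d) * (γ⁻¹) ^ (Nat.find hKex - 1) := (mul_assoc _ _ _).symm
        _ = (d * s) * (γ⁻¹) ^ (Nat.find hKex - 1) := by rw [hsc d]
        _ = d * (s * (γ⁻¹) ^ (Nat.find hKex - 1)) := mul_assoc _ _ _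
      have hσx : σ * γ⁻¹ ∈ R := by
        rw [hσdef, mul_assoc, ← pow_succ]
        have he : Nat.find hKex - 1 + 1 = Nat.find hKex := by omega
        rw [he]
        exact hKspec
      by_cases hσi : σ⁻¹ ∈ R
      · -- conclude S = center
        refine le_antisymm hS ?_
        intro f hf
        have hσ0 : σ ≠ 0 := fun h => hσR (h ▸ R.zero_mem)
        obtain ⟨L, u, hu, hrepf⟩ := Stmt14Aux.rep_all hmax hσc hσR f
        have hg : f * (σ⁻¹) ^ L ∈ R := by
          rw [hrepf, Finset.sum_mul]
          refine Subring.sum_mem R fun k hk => ?_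
          have hkL : k < L := Finset.mem_range.1 hk
          have h1 : σ ^ k * (σ⁻¹) ^ L = (σ⁻¹) ^ (L - k) := by
            have h2 : (σ⁻¹ : D) ^ L = (σ⁻¹) ^ k * (σ⁻¹) ^ (L - k) := by
              rw [← pow_add]
              congr 1
              omega
            rw [h2, ← mul_assoc, inv_pow, mul_inv_cancel₀ (pow_ne_zero k hσ0), one_mul]
          rw [mul_assoc, h1]
          exact R.mul_mem (hu k) (Subring.pow_mem R hσi _)
        have hfc : ∀ d : D, f * d = d * f := fun d => (Subring.mem_center_iff.mp hf d).symm
        have hσic : ∀ d : D, σ⁻¹ * d = d * σ⁻¹ := Stmt14Aux.inv_comm hσc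
        have hgZ : f * (σ⁻¹) ^ L ∈ Subring.center D := by
          refine Subring.mem_center_iff.mpr fun g => ?_
          calc g * (f * (σ⁻¹) ^ L) = (g * f) * (σ⁻¹) ^ L := (mul_assoc _ _ _).symm
          _ = (f * g) * (σ⁻¹) ^ L := by rw [← hfc g]
          _ = f * (g * (σ⁻¹) ^ L) := mul_assoc _ _ _
          _ = f * ((σ⁻¹) ^ L * g) := by rw [← Stmt14Aux.tpow_comm hσic L g]
          _ = (f * (σ⁻¹) ^ L) * g := (mul_assoc _ _ _).symm
        have hgS : f * (σ⁻¹) ^ L ∈ S := hRS ⟨hg, hgZ⟩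
        have hσS : σ ∈ S := by
          rw [hσdef]
          exact S.mul_mem hsS (Subring.pow_mem S hxS _)
        have hfin : f = (f * (σ⁻¹) ^ L) * σ ^ L := by
          rw [mul_assoc, inv_pow, inv_mul_cancel₀ (pow_ne_zero L hσ0), mul_one]
        rw [hfin]
        exact S.mul_mem hgS (Subring.pow_mem S hσS L)
      · -- impossible by `core`
        exfalso
        have hw : γ⁻¹ * σ ∈ R := by
          rw [← hσc γ⁻¹]
          exact hσx
        exact Stmt14Aux.core hmax hσc hσR hσi γ⁻¹ hγi hx0 hw
  · -- (3) R ∩ F is not a field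
    obtain ⟨γ, hγc, hγR, hγi⟩ := Stmt14Aux.md hmax haR ha0 hano hcc hcR
    have hγ0 : γ ≠ 0 := fun h => hγR (h ▸ R.zero_mem)
    have hxc : ∀ d : D, γ⁻¹ * d = d * γ⁻¹ := Stmt14Aux.inv_comm hγc
    refine ⟨γ⁻¹, ⟨hγi, Subring.mem_center_iff.mpr fun g => (hxc g).symm⟩,
      inv_ne_zero hγ0, ?_⟩
    rw [inv_inv]
    intro hmem
    exact hγR hmem.1
end

section
/- Let D be a division ring with center F. If there exists an element β ∈ D \ F that is algebraic over F, then D has a maximal subring. -/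
open MulOpposite

section Aux
variable {D : Type*} [DivisionRing D]

/-- `x ↦ d * x * β ^ m` as a `ℤ`-linear endomorphism. -/
def rsingle (β d : D) (m : ℕ) : Module.End ℤ D :=
  ((AddMonoidHom.mulLeft d).comp (AddMonoidHom.mulRight (β ^ m))).toIntLinearMap

@[simp] lemma rsingle_apply (β d : D) (m : ℕ) (x : D) :
    rsingle β d m x = d * x * β ^ m := by
  simp [rsingle, mul_assoc]

lemma rsingle_add (β : D) (d e : D) (m : ℕ) :
    rsingle β (d + e) m = rsingle β d m + rsingle β e m := by
  ext x; simp [add_mul]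

@[simp] lemma rsingle_zero (β : D) (m : ℕ) : rsingle β 0 m = 0 := by
  ext x; simp

lemma rsingle_neg (β : D) (d : D) (m : ℕ) : rsingle β (-d) m = - rsingle β d m := by
  ext x; simp

lemma rsingle_mul (β : D) (d e : D) (m l : ℕ) :
    rsingle β d m * rsingle β e l = rsingle β (d * e) (l + m) := by
  ext x
  simp only [Module.End.mul_apply, rsingle_apply, pow_add, mul_assoc]

/-- Powers of `β` reduce to combinations `∑ gᵢ βⁱ` with central `gᵢ`. -/
lemma pow_reduce (β : D) (n : ℕ) (a : Fin n → D)
    (ha : ∀ i, a i ∈ Subring.center D)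
    (hβ : β ^ n = ∑ i, a i * β ^ (i : ℕ)) :
    ∀ m : ℕ, ∃ g : Fin n → D, (∀ i, g i ∈ Subring.center D) ∧
      β ^ m = ∑ i, g i * β ^ (i : ℕ) := by
  intro m
  induction m using Nat.strong_induction_on with
  | _ m ih =>
    rcases lt_or_ge m n with hm | hm
    · refine ⟨fun i => if i = ⟨m, hm⟩ then 1 else 0, fun i => ?_, ?_⟩
      · dsimp only; split <;> simp [Subring.one_mem, Subring.zero_mem]
      · rw [Finset.sum_congr rfl (fun i _ => ?_), Finset.sum_ite_eq'
          Finset.univ (⟨m, hm⟩ : Fin n) (fun i => β ^ (i : ℕ))]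
        · simp
        · split <;> simp_all
    · have h1 : β ^ m = β ^ (m - n) * β ^ n := by
        rw [← pow_add]; congr 1; omega
      have h2 : β ^ m = ∑ i, a i * β ^ (m - n + (i : ℕ)) := by
        rw [h1, hβ, Finset.mul_sum]
        refine Finset.sum_congr rfl fun i _ => ?_
        rw [← mul_assoc, Subring.mem_center_iff.mp (ha i) (β ^ (m - n)), mul_assoc,
          ← pow_add]
      have key : ∀ i : Fin n, ∃ g : Fin n → D, (∀ j, g j ∈ Subring.center D) ∧
          β ^ (m - n + (i : ℕ)) = ∑ j, g j * β ^ (j : ℕ) := fun i => ih _ (by omega)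
      choose g hg hg2 using key
      refine ⟨fun j => ∑ i, a i * g i j, fun j =>
        Subring.sum_mem _ fun i _ => Subring.mul_mem _ (ha i) (hg i j), ?_⟩
      rw [h2]
      simp only [hg2, Finset.mul_sum, Finset.sum_mul, mul_assoc]
      rw [Finset.sum_comm]

variable (β : D) (n : ℕ) (a : Fin n → D) (hn : 0 < n)
  (ha : ∀ i, a i ∈ Subring.center D)
  (hβr : β ^ n = ∑ i, a i * β ^ (i : ℕ))

/-- The set of operators `x ↦ ∑ dᵢ x βⁱ`. -/
def opSet : Set (Module.End ℤ D) :=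
  {f | ∃ d : Fin n → D, f = ∑ i, rsingle β (d i) (i : ℕ)}

lemma opSet_zero : (0 : Module.End ℤ D) ∈ opSet β n :=
  ⟨0, by ext x; simp⟩

lemma opSet_add {f g} (hf : f ∈ opSet β n) (hg : g ∈ opSet β n) :
    f + g ∈ opSet β n := by
  obtain ⟨d, rfl⟩ := hf; obtain ⟨e, rfl⟩ := hg
  refine ⟨d + e, ?_⟩
  rw [← Finset.sum_add_distrib]
  refine Finset.sum_congr rfl fun i _ => ?_
  ext x; simp [add_mul]

lemma opSet_neg {f} (hf : f ∈ opSet β n) : -f ∈ opSet β n := by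
  obtain ⟨d, rfl⟩ := hf
  refine ⟨-d, ?_⟩
  rw [← Finset.sum_neg_distrib]
  refine Finset.sum_congr rfl fun i _ => ?_
  ext x; simp

include ha hβr in
lemma opSet_single (d : D) (m : ℕ) : rsingle β d m ∈ opSet β n := by
  obtain ⟨g, hg, hg2⟩ := pow_reduce β n a ha hβr m
  refine ⟨fun i => d * g i, ?_⟩
  ext x
  simp only [rsingle_apply, LinearMap.coe_sum, Finset.sum_apply, hg2, Finset.mul_sum]
  refine Finset.sum_congr rfl fun i _ => ?_
  rw [← mul_assoc, mul_assoc d x (g i), Subring.mem_center_iff.mp (hg i) x, ← mul_assoc]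

lemma opSet_sum {ι : Type*} (s : Finset ι) (h : ι → Module.End ℤ D)
    (hh : ∀ i ∈ s, h i ∈ opSet β n) : ∑ i ∈ s, h i ∈ opSet β n := by
  classical
  induction s using Finset.induction_on with
  | empty => simpa using opSet_zero β n
  | insert _ _ hx ih =>
    rw [Finset.sum_insert hx]
    exact opSet_add β n (hh _ (Finset.mem_insert_self _ _))
      (ih fun i hi => hh _ (Finset.mem_insert_of_mem hi))

include hn ha hβr in
lemma opSet_one : (1 : Module.End ℤ D) ∈ opSet β n := by
  have : (1 : Module.End ℤ D) = rsingle β 1 0 := by ext x; simp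
  rw [this]; exact opSet_single β n a ha hβr 1 0

include ha hβr in
lemma opSet_mul {f g} (hf : f ∈ opSet β n) (hg : g ∈ opSet β n) :
    f * g ∈ opSet β n := by
  obtain ⟨d, rfl⟩ := hf; obtain ⟨e, rfl⟩ := hg
  rw [Finset.sum_mul_sum]
  refine opSet_sum β n _ _ fun i _ => opSet_sum β n _ _ fun j _ => ?_
  rw [rsingle_mul β _ _ _ _]
  exact opSet_single β n a ha hβr _ _

/-- The operator ring `A`. -/
def opRing : Subring (Module.End ℤ D) where
  carrier := opSet β n
  zero_mem' := opSet_zero β n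
  one_mem' := opSet_one β n a hn ha hβr
  add_mem' := opSet_add β n
  neg_mem' := opSet_neg β n
  mul_mem' := opSet_mul β n a ha hβr

instance opModule : Module ↥(opRing β n a hn ha hβr) D :=
  Module.compHom D (Subring.subtype _)

lemma opRing_smul_def (f : ↥(opRing β n a hn ha hβr)) (x : D) :
    f • x = (f : Module.End ℤ D) x := rfl

lemma opRing_mem_single (d : D) (m : ℕ) : rsingle β d m ∈ opRing β n a hn ha hβr :=
  opSet_single β n a ha hβr d m

instance opRing_isSimple : IsSimpleModule ↥(opRing β n a hn ha hβr) D := by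
  refine { eq_bot_or_eq_top := ?_ }
  intro N
  rcases eq_or_ne N ⊥ with h | h
  · exact Or.inl h
  · right
    obtain ⟨x, hxN, hx0⟩ := Submodule.exists_mem_ne_zero_of_ne_bot h
    rw [Submodule.eq_top_iff']
    intro y
    have : y = (⟨rsingle β (y * x⁻¹) 0, opRing_mem_single β n a hn ha hβr _ _⟩ :
        ↥(opRing β n a hn ha hβr)) • x := by
      rw [opRing_smul_def]; simp [mul_assoc, inv_mul_cancel₀ hx0]
    rw [this]
    exact N.smul_mem _ hxN

/-- Every `A`-endomorphism of `D` is right multiplication by a centralizing element. -/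
lemma opRing_end (e : D →ₗ[↥(opRing β n a hn ha hβr)] D) :
    e 1 ∈ Subring.centralizer ({β} : Set D) ∧ ∀ y, e y = y * e 1 := by
  have key : ∀ (d y : D), e (d * y * β ^ 0) = d * e y * β ^ 0 := by
    intro d y
    have := e.map_smul (⟨rsingle β d 0, opRing_mem_single β n a hn ha hβr d 0⟩ :
      ↥(opRing β n a hn ha hβr)) y
    simpa only [opRing_smul_def, rsingle_apply] using this
  have key1 : ∀ (y : D), e (y * β) = e y * β := by
    intro y
    have := e.map_smul (⟨rsingle β 1 1, opRing_mem_single β n a hn ha hβr 1 1⟩ :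
      ↥(opRing β n a hn ha hβr)) y
    simpa only [opRing_smul_def, rsingle_apply, one_mul, pow_one] using this
  have hform : ∀ y, e y = y * e 1 := by
    intro y
    have := key y 1
    simpa using this
  refine ⟨Subring.mem_centralizer_iff.mpr ?_, hform⟩
  intro g hg
  rcases hg with rfl
  have h1 := key1 1
  rw [one_mul, hform g] at h1
  exact h1


lemma opRing_mem (f : Module.End ℤ D) :
    f ∈ opRing β n a hn ha hβr ↔ ∃ d : Fin n → D, f = ∑ i, rsingle β (d i) (i : ℕ) :=
  Iff.rfl

/-- The centralizer of `β` as a subfield (division subring). -/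
def cenSubfield (β : D) : Subfield D :=
  { Subring.centralizer ({β} : Set D) with
    inv_mem' := fun x hx => Set.inv_mem_centralizer₀ hx }

lemma mem_cenSubfield {β x : D} :
    x ∈ cenSubfield β ↔ β * x = x * β := by
  constructor
  · intro h; exact (h β rfl)
  · intro h; intro g hg; rcases hg with rfl; exact h

/-- Right `C`-module structure on `D`, `C` the centralizer of `β`. -/
instance cenModule (β : D) : Module (↥(cenSubfield β))ᵐᵒᵖ D :=
  Module.compHom D (RingHom.op (cenSubfield β).subtype)

lemma cenModule_smul_def (β : D) (c : ↥(cenSubfield β)) (x : D) :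
    (op c) • x = x * (c : D) := rfl

/-- A subring containing the centralizer, as a `Cᵐᵒᵖ`-submodule. -/
def subringToM (β : D) (R : Subring D)
    (hR : Subring.centralizer ({β} : Set D) ≤ R) : Submodule (↥(cenSubfield β))ᵐᵒᵖ D where
  carrier := R
  add_mem' := fun h h' => R.add_mem h h'
  zero_mem' := R.zero_mem
  smul_mem' := fun c x hx => by
    rw [← op_unop c, cenModule_smul_def]
    exact R.mul_mem hx (hR (unop c).2)


include n a hn ha hβr in
set_option maxHeartbeats 1000000 in
theorem main_finite : Module.Finite (↥(cenSubfield β))ᵐᵒᵖ D := by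
  classical
  by_contra hinf
  have hrank : ((n + 1 : ℕ) : Cardinal) ≤ Module.rank (↥(cenSubfield β))ᵐᵒᵖ D := by
    by_contra h
    exact hinf (Module.rank_lt_aleph0_iff.mp
      ((lt_of_not_ge h).trans (Cardinal.nat_lt_aleph0 _)))
  obtain ⟨x, hx⟩ := exists_linearIndependent_of_le_rank hrank
  -- the chain of annihilator-style submodules
  let J : ℕ → Submodule D (Fin n → D) := fun k =>
    { carrier := {d | ∀ i : Fin (n + 1), (i : ℕ) < k →
        ∑ m, d m * x i * β ^ (m : ℕ) = 0}
      add_mem' := by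
        intro d e hd he i hi
        simp only [Pi.add_apply, add_mul, Finset.sum_add_distrib, hd i hi, he i hi, add_zero]
      zero_mem' := by intro i hi; simp
      smul_mem' := by
        intro c d hd i hi
        have h0 := hd i hi
        calc ∑ m, (c • d) m * x i * β ^ (m : ℕ)
            = ∑ m, c * (d m * x i * β ^ (m : ℕ)) := by
              refine Finset.sum_congr rfl fun m _ => ?_
              simp [mul_assoc]
          _ = c * ∑ m, d m * x i * β ^ (m : ℕ) := by rw [Finset.mul_sum]
          _ = 0 := by rw [h0, mul_zero] }
  have hJle : ∀ k, J (k + 1) ≤ J k := by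
    intro k d hd i hi
    exact hd i (by omega)
  have hstat : ∃ j ≤ n, J j ≤ J (j + 1) := by
    by_contra hcon
    push_neg at hcon
    have hchain : ∀ j, j ≤ n + 1 → Module.finrank D ↥(J j) + j ≤ n := by
      intro j hj
      induction j with
      | zero =>
        simpa using (Submodule.finrank_le (J 0)).trans_eq (Module.finrank_fin_fun D)
      | succ j ih =>
        have h1 := ih (by omega)
        have hlt : J (j + 1) < J j := lt_of_le_of_ne (hJle j)
          (fun h => hcon j (by omega) (le_of_eq h.symm))
        have := Submodule.finrank_lt_finrank_of_lt hlt
        omega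
    have := hchain (n + 1) le_rfl
    omega
  obtain ⟨j, hjn, hj⟩ := hstat
  set A := opRing β n a hn ha hβr with hA
  set jj : Fin (n + 1) := ⟨j, by omega⟩ with hjj
  -- semisimplicity of (Fin j → D) over A
  haveI hss : IsSemisimpleModule ↥A (Fin j → D) := by
    refine isSemisimpleModule_of_isSemisimpleModule_submodule'
      (p := fun i : Fin j => LinearMap.range (LinearMap.single ↥A (fun _ : Fin j => D) i)) ?_
      (LinearMap.iSup_range_single _ _)
    intro i
    exact IsSemisimpleModule.congr
      (LinearEquiv.ofInjective _ (Pi.single_injective (M := fun _ : Fin j => D) i)).symm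
  -- the maps
  let φ : ↥A →ₗ[↥A] (Fin j → D) :=
    LinearMap.pi fun i : Fin j => LinearMap.toSpanSingleton ↥A D (x (Fin.castLE (by omega) i))
  let g : ↥A →ₗ[↥A] D := LinearMap.toSpanSingleton ↥A D (x jj)
  have hsmul_eq : ∀ (f : ↥A) (y : D), ∃ d : Fin n → D,
      ((f : Module.End ℤ D) = ∑ i, rsingle β (d i) (i : ℕ)) := by
    intro f y
    exact (opRing_mem β n a hn ha hβr _).mp f.2
  have hker : LinearMap.ker φ ≤ LinearMap.ker g := by
    intro f hf
    obtain ⟨d, hd⟩ := (opRing_mem β n a hn ha hβr _).mp f.2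
    have happ : ∀ y : D, f • y = ∑ m, d m * y * β ^ (m : ℕ) := by
      intro y
      rw [opRing_smul_def, hd]
      simp
    have hdJ : d ∈ J j := by
      intro i hi
      have hz : φ f (⟨(i : ℕ), hi⟩ : Fin j) = 0 := by
        rw [LinearMap.mem_ker.mp hf]; rfl
      have h2 : f • x (Fin.castLE (by omega) (⟨(i : ℕ), hi⟩ : Fin j)) = 0 := hz
      rw [happ] at h2
      have hcast : Fin.castLE (by omega : j ≤ n + 1) (⟨(i : ℕ), hi⟩ : Fin j) = i := by
        ext; rfl
      rwa [hcast] at h2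
    have := hj hdJ jj (by simp [hjj])
    rw [LinearMap.mem_ker]
    show f • x jj = 0
    rw [happ]
    exact this
  obtain ⟨W', hW'⟩ := exists_isCompl (LinearMap.range φ)
  let π := (LinearMap.range φ).linearProjOfIsCompl W' hW'
  let ψ : ↥(LinearMap.range φ) →ₗ[↥A] D :=
    ((LinearMap.ker φ).liftQ g hker).comp (φ.quotKerEquivRange.symm : _ →ₗ[↥A] _)
  let θ : (Fin j → D) →ₗ[↥A] D := ψ.comp π
  have hθφ : ∀ f : ↥A, θ (φ f) = g f := by
    intro f
    have h1 : π (φ f) = ⟨φ f, LinearMap.mem_range_self φ f⟩ :=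
      Submodule.linearProjOfIsCompl_apply_left hW' ⟨φ f, LinearMap.mem_range_self φ f⟩
    show ψ (π (φ f)) = g f
    rw [h1]
    show ((LinearMap.ker φ).liftQ g hker) (φ.quotKerEquivRange.symm
      ⟨φ f, LinearMap.mem_range_self φ f⟩) = g f
    rw [LinearMap.quotKerEquivRange_symm_apply_image]
    exact Submodule.liftQ_apply _ _ _
  have hxj : θ (fun i : Fin j => x (Fin.castLE (by omega) i)) = x jj := by
    have := hθφ 1
    have hφ1 : φ (1 : ↥A) = fun i : Fin j => x (Fin.castLE (by omega) i) := by
      ext i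
      simp only [φ, LinearMap.pi_apply, LinearMap.toSpanSingleton_apply, one_smul]
    rw [hφ1] at this
    rw [this]
    show (1 : ↥A) • x jj = x jj
    rw [one_smul]
  -- decompose θ into coordinates
  have hdecomp : x jj = ∑ i : Fin j,
      (θ.comp (LinearMap.single ↥A (fun _ : Fin j => D) i)) (x (Fin.castLE (by omega) i)) := by
    rw [← hxj]
    rw [show (fun i : Fin j => x (Fin.castLE (by omega) i)) =
      ∑ i : Fin j, Pi.single i (x (Fin.castLE (by omega) i)) from (Finset.univ_sum_single _).symm]
    rw [map_sum]
    rfl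
  -- each coordinate map is right multiplication by a centralizing element
  have hcoord : ∀ i : Fin j, ∃ c : D, c ∈ Subring.centralizer ({β} : Set D) ∧
      ∀ y, (θ.comp (LinearMap.single ↥A (fun _ : Fin j => D) i)) y = y * c := by
    intro i
    obtain ⟨hc, hform⟩ := opRing_end β n a hn ha hβr
      (θ.comp (LinearMap.single ↥A (fun _ : Fin j => D) i))
    exact ⟨_, hc, hform⟩
  choose c hc hcform using hcoord
  -- contradiction with linear independence
  have hjj_not : jj ∉ {i : Fin (n + 1) | (i : ℕ) < j} := by simp [hjj]
  refine hx.notMem_span_image hjj_not ?_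
  have hspan : x jj ∈ Submodule.span (↥(cenSubfield β))ᵐᵒᵖ
      (x '' {i : Fin (n + 1) | (i : ℕ) < j}) := by
    rw [hdecomp]
    refine Submodule.sum_mem _ fun i _ => ?_
    rw [hcform i]
    have : x (Fin.castLE (by omega) i) * c i = (op (⟨c i, hc i⟩ : ↥(cenSubfield β))) •
        x (Fin.castLE (by omega) i) := rfl
    rw [this]
    refine Submodule.smul_mem _ _ (Submodule.subset_span ?_)
    exact ⟨Fin.castLE (by omega) i, by simpa using i.2, rfl⟩
  exact hspan


end Aux

theorem stmt_15 (D : Type*) [DivisionRing D]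
    (β : D) (hβ : β ∉ Subring.center D)
    (halg : ∃ (n : ℕ) (c : ℕ → D), (∀ i, c i ∈ Subring.center D) ∧
      (∃ i ≤ n, c i ≠ 0) ∧ ∑ i ∈ Finset.range (n + 1), c i * β ^ i = 0) :
    ∃ R : Subring D, R ≠ ⊤ ∧ ∀ S : Subring D, R < S → S = ⊤ := by
  classical
  obtain ⟨N, c, hcc, ⟨i0, hi0N, hi0⟩, hsum⟩ := halg
  set P := (Finset.range (N + 1)).filter (fun i => c i ≠ 0) with hP
  have hPne : P.Nonempty :=
    ⟨i0, Finset.mem_filter.mpr ⟨Finset.mem_range.mpr (by omega), hi0⟩⟩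
  set j := P.max' hPne with hj
  have hjmem : j ∈ P := P.max'_mem hPne
  have hjN : j ≤ N := by
    have := (Finset.mem_filter.mp hjmem).1
    simp only [Finset.mem_range] at this; omega
  have hcj : c j ≠ 0 := (Finset.mem_filter.mp hjmem).2
  have hzero : ∀ i, i ≤ N → j < i → c i = 0 := by
    intro i hiN hji
    by_contra hne
    have hmem : i ∈ P := Finset.mem_filter.mpr ⟨Finset.mem_range.mpr (by omega), hne⟩
    have := P.le_max' i hmem
    omega
  have hsplit : ∑ i ∈ Finset.range (j + 1), c i * β ^ i = 0 := by
    rw [← hsum]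
    refine Finset.sum_subset ?_ ?_
    · intro i hi
      simp only [Finset.mem_range] at hi ⊢; omega
    · intro i hiN hij
      simp only [Finset.mem_range, not_lt] at hiN hij
      rw [hzero i (by omega) (by omega), zero_mul]
  have hj1 : 0 < j := by
    rcases Nat.eq_zero_or_pos j with h0 | h
    · exfalso
      apply hcj
      rw [h0] at hsplit ⊢
      simpa using hsplit
    · exact h
  have hrel : c j * β ^ j = - ∑ i ∈ Finset.range j, c i * β ^ i := by
    rw [Finset.sum_range_succ] at hsplit
    exact eq_neg_of_add_eq_zero_right hsplit
  have hinvc : (c j)⁻¹ ∈ Subring.center D := by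
    have hz := hcc j
    rw [Subring.mem_center_iff] at hz ⊢
    intro g
    have h1 : (c j)⁻¹ * (g * c j) = (c j)⁻¹ * (c j * g) := by rw [hz g]
    rw [← mul_assoc, ← mul_assoc, inv_mul_cancel₀ hcj, one_mul] at h1
    calc g * (c j)⁻¹ = ((c j)⁻¹ * g * c j) * (c j)⁻¹ := by rw [h1]
      _ = (c j)⁻¹ * g * (c j * (c j)⁻¹) := by rw [mul_assoc]
      _ = (c j)⁻¹ * g := by rw [mul_inv_cancel₀ hcj, mul_one]
  set a : Fin j → D := fun i => -((c j)⁻¹ * c (i : ℕ)) with haa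
  have ha : ∀ i, a i ∈ Subring.center D := fun i =>
    Subring.neg_mem _ (Subring.mul_mem _ hinvc (hcc _))
  have hβr : β ^ j = ∑ i : Fin j, a i * β ^ (i : ℕ) := by
    have h2 : (c j)⁻¹ * (c j * β ^ j) = β ^ j := by
      rw [← mul_assoc, inv_mul_cancel₀ hcj, one_mul]
    rw [← h2, hrel, mul_neg, Finset.mul_sum]
    rw [← Fin.sum_univ_eq_sum_range (fun i => (c j)⁻¹ * (c i * β ^ i)) j]
    rw [← Finset.sum_neg_distrib]
    refine Finset.sum_congr rfl fun i _ => ?_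
    rw [haa]
    simp only [neg_mul, mul_assoc]
  haveI hfin : Module.Finite (↥(cenSubfield β))ᵐᵒᵖ D := main_finite β j a hj1 ha hβr
  -- the maximality argument
  have hcen_ne : (Subring.centralizer ({β} : Set D)) ≠ ⊤ := by
    intro htop
    apply hβ
    rw [Subring.mem_center_iff]
    intro g
    have : g ∈ Subring.centralizer ({β} : Set D) := htop ▸ Subring.mem_top g
    exact (Subring.mem_centralizer_iff.mp this β rfl).symm
  set S : Set ℕ := {m | ∃ R : Subring D, ∃ h : Subring.centralizer ({β} : Set D) ≤ R,
    R ≠ ⊤ ∧ m = Module.finrank (↥(cenSubfield β))ᵐᵒᵖ ↥(subringToM β R h)} with hS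
  have hSne : S.Nonempty :=
    ⟨_, Subring.centralizer ({β} : Set D), le_refl _, hcen_ne, rfl⟩
  have hSbdd : BddAbove S := by
    refine ⟨Module.finrank (↥(cenSubfield β))ᵐᵒᵖ D, ?_⟩
    rintro m ⟨R, h, hne, rfl⟩
    exact Submodule.finrank_le _
  have hmax := Nat.sSup_mem hSne hSbdd
  obtain ⟨R, hle, hne, hmeq⟩ := hmax
  refine ⟨R, hne, ?_⟩
  intro T hRT
  by_contra hTne
  have hleT : Subring.centralizer ({β} : Set D) ≤ T := hle.trans hRT.le
  have hmemT : Module.finrank (↥(cenSubfield β))ᵐᵒᵖ ↥(subringToM β T hleT) ∈ S :=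
    ⟨T, hleT, hTne, rfl⟩
  have hlt : subringToM β R hle < subringToM β T hleT := by
    rw [SetLike.lt_iff_le_and_exists]
    constructor
    · intro x hx
      exact hRT.le hx
    · obtain ⟨x, hxT, hxR⟩ := SetLike.exists_of_lt hRT
      exact ⟨x, hxT, hxR⟩
  have hrankl : Module.finrank (↥(cenSubfield β))ᵐᵒᵖ ↥(subringToM β R hle) <
      Module.finrank (↥(cenSubfield β))ᵐᵒᵖ ↥(subringToM β T hleT) :=
    Submodule.finrank_lt_finrank_of_lt hlt
  have : Module.finrank (↥(cenSubfield β))ᵐᵒᵖ ↥(subringToM β T hleT) ≤ sSup S :=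
    le_csSup hSbdd hmemT
  omega
end

section
/- Let D be a division ring with a maximal subring R which is a left duo ring and not a division ring. Then R is a valuation ring for D: for every nonzero x ∈ D, either x ∈ R or x⁻¹ ∈ R. -/
namespace Stmt17

variable {D : Type*} [DivisionRing D]

lemma conj_mul_aux (z x y : D) (hz : z ≠ 0) :
    z * (x * y) * z⁻¹ = (z * x * z⁻¹) * (z * y * z⁻¹) := by
  simp [mul_assoc, inv_mul_cancel_left₀, hz]

lemma term_conj {z : D} (hz : z ≠ 0) (c t : D) :
    c * z * t = c * (z * t * z⁻¹) * z := by
  simp [mul_assoc, inv_mul_cancel₀ hz]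

section
variable {R : Subring D}

lemma conjA (hduo : ∀ a ∈ R, ∀ r ∈ R, ∃ s ∈ R, a * r = s * a)
    {r t : D} (hr : r ∈ R) (ht : t ∈ R) : r * t * r⁻¹ ∈ R := by
  rcases eq_or_ne r 0 with h0 | h0
  · simpa [h0] using R.zero_mem
  · obtain ⟨s, hs, hrt⟩ := hduo r hr t ht
    have h : r * t * r⁻¹ = s := by rw [hrt, mul_inv_cancel_right₀ h0]
    rw [h]; exact hs

lemma conjB (hmax : ∀ S : Subring D, R < S → S = ⊤)
    (hduo : ∀ a ∈ R, ∀ r ∈ R, ∃ s ∈ R, a * r = s * a)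
    {r t : D} (hr : r ∈ R) (ht : t ∈ R) (hr0 : r ≠ 0) :
    r⁻¹ * t * r ∈ R := by
  by_cases hri : r⁻¹ ∈ R
  · have h := conjA hduo hri ht
    rwa [inv_inv] at h
  · have step : ∀ d : D, ∀ n : ℕ, r ^ n * d * (r ^ n)⁻¹ ∈ R →
        r ^ (n+1) * d * (r ^ (n+1))⁻¹ ∈ R := by
      intro d n h
      have e : r ^ (n+1) * d * (r ^ (n+1))⁻¹ = r * (r ^ n * d * (r ^ n)⁻¹) * r⁻¹ := by
        rw [pow_succ' r n, mul_inv_rev]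
        simp [mul_assoc]
      rw [e]
      exact conjA hduo hr h
    have mono : ∀ d : D, ∀ n mm : ℕ, n ≤ mm → r ^ n * d * (r ^ n)⁻¹ ∈ R →
        r ^ mm * d * (r ^ mm)⁻¹ ∈ R := by
      intro d n mm hnm h
      induction mm, hnm using Nat.le_induction with
      | base => exact h
      | succ k hk ih => exact step d k ih
    let U : Subring D :=
      { carrier := {d | ∃ n : ℕ, r ^ n * d * (r ^ n)⁻¹ ∈ R}
        zero_mem' := ⟨0, by simpa using R.zero_mem⟩
        one_mem' := ⟨0, by simpa using R.one_mem⟩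
        add_mem' := by
          rintro x y ⟨n, hn⟩ ⟨mm, hm⟩
          refine ⟨max n mm, ?_⟩
          have hx := mono x n (max n mm) (le_max_left _ _) hn
          have hy := mono y mm (max n mm) (le_max_right _ _) hm
          have e : r ^ (max n mm) * (x + y) * (r ^ (max n mm))⁻¹ =
              r ^ (max n mm) * x * (r ^ (max n mm))⁻¹ +
                r ^ (max n mm) * y * (r ^ (max n mm))⁻¹ := by
            rw [mul_add, add_mul]
          rw [e]; exact R.add_mem hx hy
        neg_mem' := by
          rintro x ⟨n, hn⟩
          exact ⟨n, by simpa using R.neg_mem hn⟩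
        mul_mem' := by
          rintro x y ⟨n, hn⟩ ⟨mm, hm⟩
          refine ⟨max n mm, ?_⟩
          have hx := mono x n (max n mm) (le_max_left _ _) hn
          have hy := mono y mm (max n mm) (le_max_right _ _) hm
          rw [conj_mul_aux _ _ _ (pow_ne_zero _ hr0)]
          exact R.mul_mem hx hy }
    have hRU : R ≤ U := fun z hz => ⟨0, by simpa using hz⟩
    have hrU : r⁻¹ ∉ U := by
      rintro ⟨n, hn⟩
      apply hri
      have e : r ^ n * r⁻¹ * (r ^ n)⁻¹ = r⁻¹ := by
        have hc : r⁻¹ * (r ^ n)⁻¹ = (r ^ n)⁻¹ * r⁻¹ := by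
          rw [← mul_inv_rev, ← mul_inv_rev, ← pow_succ, ← pow_succ']
        rw [mul_assoc, hc, ← mul_assoc, mul_inv_cancel₀ (pow_ne_zero _ hr0), one_mul]
      rwa [e] at hn
    have hU : U = R := by
      by_contra hne
      have hlt : R < U := lt_of_le_of_ne hRU (fun h => hne h.symm)
      exact hrU (by rw [hmax U hlt]; exact Subring.mem_top _)
    have hmem : r⁻¹ * t * r ∈ U := by
      refine ⟨1, ?_⟩
      have e : r ^ 1 * (r⁻¹ * t * r) * (r ^ 1)⁻¹ = t := by
        simp [mul_assoc, mul_inv_cancel₀ hr0, mul_inv_cancel_left₀ hr0]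
      rw [e]; exact ht
    rwa [hU] at hmem

lemma monoC {a : D} (ha : a ∈ R) {d : D} {n N : ℕ} (h : n ≤ N)
    (hd : a ^ n * d ∈ R) : a ^ N * d ∈ R := by
  induction N, h using Nat.le_induction with
  | base => exact hd
  | succ k hk ih =>
    have e : a ^ (k+1) * d = a * (a ^ k * d) := by rw [pow_succ', mul_assoc]
    rw [e]; exact R.mul_mem ha ih

lemma lemC (hmax : ∀ S : Subring D, R < S → S = ⊤)
    (hduo : ∀ a ∈ R, ∀ r ∈ R, ∃ s ∈ R, a * r = s * a)
    {a : D} (ha : a ∈ R) (ha0 : a ≠ 0) (hai : a⁻¹ ∉ R) :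
    ∀ d : D, ∃ n : ℕ, a ^ n * d ∈ R := by
  let W : Subring D :=
    { carrier := {d | ∃ n : ℕ, a ^ n * d ∈ R}
      zero_mem' := ⟨0, by simpa using R.zero_mem⟩
      one_mem' := ⟨0, by simpa using R.one_mem⟩
      add_mem' := by
        rintro x y ⟨n, hn⟩ ⟨mm, hm⟩
        refine ⟨max n mm, ?_⟩
        rw [mul_add]
        exact R.add_mem (monoC ha (le_max_left _ _) hn) (monoC ha (le_max_right _ _) hm)
      neg_mem' := by rintro x ⟨n, hn⟩; exact ⟨n, by simpa using R.neg_mem hn⟩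
      mul_mem' := by
        rintro x y ⟨n, hn⟩ ⟨mm, hm⟩
        refine ⟨mm + n, ?_⟩
        have e : (a ^ mm * (a ^ n * x) * (a ^ mm)⁻¹) * (a ^ mm * y) = a ^ (mm + n) * (x * y) := by
          rw [pow_add]
          simp [mul_assoc, inv_mul_cancel_left₀ (pow_ne_zero mm ha0)]
        rw [← e]
        exact R.mul_mem (conjA hduo (pow_mem ha mm) hn) hm }
  have hRW : R ≤ W := fun z hz => ⟨0, by simpa using hz⟩
  have haW : a⁻¹ ∈ W := ⟨1, by simpa [mul_inv_cancel₀ ha0] using R.one_mem⟩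
  have hlt : R < W := lt_of_le_of_ne hRW (fun h => hai (by rw [h]; exact haW))
  intro d
  have hd : d ∈ W := by rw [hmax W hlt]; exact Subring.mem_top d
  exact hd

lemma lemD (hmax : ∀ S : Subring D, R < S → S = ⊤)
    (hduo : ∀ a ∈ R, ∀ r ∈ R, ∃ s ∈ R, a * r = s * a)
    {a : D} (ha : a ∈ R) (ha0 : a ≠ 0) (hai : a⁻¹ ∉ R) :
    ∀ x : D, x ≠ 0 → ∀ t ∈ R, x * t * x⁻¹ ∈ R ∧ x⁻¹ * t * x ∈ R := by
  intro x hx0 t ht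
  obtain ⟨n, hu⟩ := lemC hmax hduo ha ha0 hai x
  have hu0 : a ^ n * x ≠ 0 := mul_ne_zero (pow_ne_zero _ ha0) hx0
  have hxu : x = (a ^ n)⁻¹ * (a ^ n * x) := by
    rw [← mul_assoc, inv_mul_cancel₀ (pow_ne_zero _ ha0), one_mul]
  have hxinv : x⁻¹ = (a ^ n * x)⁻¹ * a ^ n := by
    conv_lhs => rw [hxu]
    rw [mul_inv_rev, inv_inv]
  constructor
  · have h1 : (a ^ n * x) * t * (a ^ n * x)⁻¹ ∈ R := conjA hduo hu ht
    have h2 : (a ^ n)⁻¹ * ((a ^ n * x) * t * (a ^ n * x)⁻¹) * a ^ n ∈ R :=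
      conjB hmax hduo (pow_mem ha n) h1 (pow_ne_zero _ ha0)
    have e : x * t * x⁻¹ = (a ^ n)⁻¹ * ((a ^ n * x) * t * (a ^ n * x)⁻¹) * a ^ n := by
      rw [mul_inv_rev]
      simp [mul_assoc, inv_mul_cancel_left₀, inv_mul_cancel₀, pow_ne_zero n ha0]
    rw [e]; exact h2
  · have h1 : a ^ n * t * (a ^ n)⁻¹ ∈ R := conjA hduo (pow_mem ha n) ht
    have h2 : (a ^ n * x)⁻¹ * (a ^ n * t * (a ^ n)⁻¹) * (a ^ n * x) ∈ R :=
      conjB hmax hduo hu h1 hu0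
    have e : x⁻¹ * t * x = (a ^ n * x)⁻¹ * (a ^ n * t * (a ^ n)⁻¹) * (a ^ n * x) := by
      rw [mul_inv_rev]
      simp [mul_assoc, inv_mul_cancel_left₀, inv_mul_cancel₀, pow_ne_zero n ha0]
    rw [e]; exact h2


def PS (R : Subring D) (x : D) : Set D :=
  {d | ∃ (n : ℕ) (c : ℕ → D), (∀ i, c i ∈ R) ∧ d = ∑ i ∈ Finset.range n, c i * x ^ i}

lemma mem_PS {R : Subring D} {x d : D} :
    d ∈ PS R x ↔ ∃ (n : ℕ) (c : ℕ → D), (∀ i, c i ∈ R) ∧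
      d = ∑ i ∈ Finset.range n, c i * x ^ i := Iff.rfl

def PM (R : Subring D) (y : D) (m : ℕ) : Set D :=
  {d | ∃ e : ℕ → D, (∀ i, e i ∈ R) ∧ d = ∑ i ∈ Finset.range (m+1), e i * y ^ i}

lemma mem_PM {R : Subring D} {y d : D} {m : ℕ} :
    d ∈ PM R y m ↔ ∃ e : ℕ → D, (∀ i, e i ∈ R) ∧
      d = ∑ i ∈ Finset.range (m+1), e i * y ^ i := Iff.rfl

lemma key (hmax : ∀ S : Subring D, R < S → S = ⊤)
    (hduo : ∀ a ∈ R, ∀ r ∈ R, ∃ s ∈ R, a * r = s * a)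
    {a : D} (ha : a ∈ R) (ha0 : a ≠ 0) (hai : a⁻¹ ∉ R)
    {x : D} (hx0 : x ≠ 0) (hxR : x ∉ R) (hxiR : x⁻¹ ∉ R) : False := by
  classical
  have hC := lemC hmax hduo ha ha0 hai
  have hconj := lemD hmax hduo ha ha0 hai
  have hy0 : x⁻¹ ≠ 0 := inv_ne_zero hx0
  -- padding lemma
  have pad : ∀ (n N : ℕ) (c : ℕ → D), n ≤ N → (∀ i, c i ∈ R) →
      ∃ c' : ℕ → D, (∀ i, c' i ∈ R) ∧
        ∑ i ∈ Finset.range N, c' i * x ^ i = ∑ i ∈ Finset.range n, c i * x ^ i := by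
    intro n N c hnN hc
    refine ⟨fun i => if i < n then c i else 0, fun i => ?_, ?_⟩
    · by_cases h : i < n
      · simpa [h] using hc i
      · simp [h, R.zero_mem]
    · calc ∑ i ∈ Finset.range N, (if i < n then c i else 0) * x ^ i
          = ∑ i ∈ Finset.range n, (if i < n then c i else 0) * x ^ i :=
            (Finset.sum_subset (Finset.range_subset_range.2 hnN) (fun i _ hin => by
              rw [if_neg (fun h => hin (Finset.mem_range.2 h)), zero_mul])).symm
        _ = ∑ i ∈ Finset.range n, c i * x ^ i :=
            Finset.sum_congr rfl (fun i hi => by rw [if_pos (Finset.mem_range.1 hi)])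
  -- closure properties of PS R x
  have hQ_add : ∀ d ∈ PS R x, ∀ e ∈ PS R x, d + e ∈ PS R x := by
    rintro d hd e he
    obtain ⟨n, c, hc, rfl⟩ := mem_PS.1 hd
    obtain ⟨n2, c2, hc2, rfl⟩ := mem_PS.1 he
    obtain ⟨c', hc', hsum⟩ := pad n (max n n2) c (le_max_left _ _) hc
    obtain ⟨c2', hc2', hsum2⟩ := pad n2 (max n n2) c2 (le_max_right _ _) hc2
    refine mem_PS.2 ⟨max n n2, fun i => c' i + c2' i,
      fun i => R.add_mem (hc' i) (hc2' i), ?_⟩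
    rw [← hsum, ← hsum2, ← Finset.sum_add_distrib]
    exact Finset.sum_congr rfl fun i _ => (add_mul _ _ _).symm
  have hQ_zero : (0 : D) ∈ PS R x :=
    mem_PS.2 ⟨0, fun _ => 0, fun _ => R.zero_mem, by simp⟩
  have hQ_neg : ∀ d ∈ PS R x, -d ∈ PS R x := by
    rintro d hd
    obtain ⟨n, c, hc, rfl⟩ := mem_PS.1 hd
    refine mem_PS.2 ⟨n, fun i => -(c i), fun i => R.neg_mem (hc i), ?_⟩
    rw [← Finset.sum_neg_distrib]
    exact Finset.sum_congr rfl fun i _ => (neg_mul _ _).symm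
  have hQ_R : ∀ t ∈ R, t ∈ PS R x := by
    intro t ht
    exact mem_PS.2 ⟨1, fun _ => t, fun _ => ht, by simp⟩
  have hQ_x : x ∈ PS R x := by
    refine mem_PS.2 ⟨2, fun i => if i = 1 then 1 else 0, fun i => ?_, ?_⟩
    · by_cases h : i = 1 <;> simp [h, R.one_mem, R.zero_mem]
    · simp [Finset.sum_range_succ]
  have hQ_rmulR : ∀ d ∈ PS R x, ∀ t ∈ R, d * t ∈ PS R x := by
    rintro d hd t ht
    obtain ⟨n, c, hc, rfl⟩ := mem_PS.1 hd
    refine mem_PS.2 ⟨n, fun i => c i * (x ^ i * t * (x ^ i)⁻¹), fun i =>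
      R.mul_mem (hc i) ((hconj (x ^ i) (pow_ne_zero i hx0) t ht).1), ?_⟩
    rw [Finset.sum_mul]
    exact Finset.sum_congr rfl fun i _ => term_conj (pow_ne_zero i hx0) _ _
  have hQ_rmulx : ∀ d ∈ PS R x, d * x ∈ PS R x := by
    rintro d hd
    obtain ⟨n, c, hc, rfl⟩ := mem_PS.1 hd
    refine mem_PS.2 ⟨n + 1, fun i => if i = 0 then 0 else c (i - 1), fun i => ?_, ?_⟩
    · by_cases h : i = 0 <;> simp [h, R.zero_mem, hc]
    · rw [Finset.sum_mul]
      conv_rhs => rw [Finset.sum_range_succ']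
      simp only [Nat.succ_ne_zero, if_false, if_true, reduceIte, Nat.add_sub_cancel,
        zero_mul, add_zero]
      exact Finset.sum_congr rfl fun i _ => by rw [mul_assoc, ← pow_succ]
  have hQ_rmulxp : ∀ (j : ℕ), ∀ d ∈ PS R x, d * x ^ j ∈ PS R x := by
    intro j
    induction j with
    | zero => intro d hd; simpa using hd
    | succ j ih =>
      intro d hd
      rw [pow_succ, ← mul_assoc]
      exact hQ_rmulx _ (ih d hd)
  have hQ_sum : ∀ (s : Finset ℕ) (f : ℕ → D), (∀ j ∈ s, f j ∈ PS R x) →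
      (∑ j ∈ s, f j) ∈ PS R x := fun s f h =>
    Finset.sum_induction f (· ∈ PS R x) (fun u v hu hv => hQ_add u hu v hv) hQ_zero h
  have hQ_mul : ∀ d ∈ PS R x, ∀ e ∈ PS R x, d * e ∈ PS R x := by
    rintro d hd e he
    obtain ⟨n, c, hc, rfl⟩ := mem_PS.1 he
    rw [Finset.mul_sum]
    refine hQ_sum _ _ fun j hj => ?_
    rw [← mul_assoc]
    exact hQ_rmulxp j _ (hQ_rmulR d hd (c j) (hc j))
  -- the subring of polynomials in x
  let SS : Subring D :=
    { carrier := PS R x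
      zero_mem' := hQ_zero
      one_mem' := hQ_R 1 R.one_mem
      add_mem' := fun h1 h2 => hQ_add _ h1 _ h2
      neg_mem' := fun h => hQ_neg _ h
      mul_mem' := fun h1 h2 => hQ_mul _ h1 _ h2 }
  have hle : R ≤ SS := fun t ht => hQ_R t ht
  have hlt : R < SS := lt_of_le_of_ne hle (fun h => hxR (by rw [h]; exact hQ_x))
  have hSS : SS = ⊤ := hmax SS hlt
  have hyS : x⁻¹ ∈ PS R x := by
    have h : x⁻¹ ∈ SS := by rw [hSS]; exact Subring.mem_top _
    exact h
  obtain ⟨n0, c0, hc0, hyc0⟩ := mem_PS.1 hyS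
  rcases n0 with _ | m
  · rw [Finset.range_zero, Finset.sum_empty] at hyc0
    exact hy0 hyc0
  -- integral relation for y = x⁻¹
  have keyxy : ∀ i, i ≤ m → x ^ i * (x⁻¹) ^ m = (x⁻¹) ^ (m - i) := by
    intro i hi
    have h1 : (x⁻¹) ^ m = (x⁻¹) ^ i * (x⁻¹) ^ (m - i) := by
      rw [← pow_add, Nat.add_sub_cancel' hi]
    have h2 : x ^ i * (x⁻¹) ^ i = 1 := by
      rw [inv_pow, mul_inv_cancel₀ (pow_ne_zero i hx0)]
    rw [h1, ← mul_assoc, h2, one_mul]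
  have hrel : (x⁻¹) ^ (m + 1) = ∑ i ∈ Finset.range (m + 1), c0 i * (x⁻¹) ^ (m - i) := by
    calc (x⁻¹) ^ (m+1) = x⁻¹ * (x⁻¹) ^ m := pow_succ' _ m
      _ = (∑ i ∈ Finset.range (m+1), c0 i * x ^ i) * (x⁻¹) ^ m := by rw [← hyc0]
      _ = ∑ i ∈ Finset.range (m+1), c0 i * (x ^ i * (x⁻¹) ^ m) := by
          rw [Finset.sum_mul]
          exact Finset.sum_congr rfl fun i _ => mul_assoc _ _ _
      _ = ∑ i ∈ Finset.range (m+1), c0 i * (x⁻¹) ^ (m - i) :=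
          Finset.sum_congr rfl fun i hi => by
            rw [keyxy i (Nat.lt_succ_iff.1 (Finset.mem_range.1 hi))]
  -- closure properties of PM R x⁻¹ m
  have hP_add : ∀ d ∈ PM R x⁻¹ m, ∀ e ∈ PM R x⁻¹ m, d + e ∈ PM R x⁻¹ m := by
    rintro d hd e he
    obtain ⟨cd, hcd, rfl⟩ := mem_PM.1 hd
    obtain ⟨ce, hce, rfl⟩ := mem_PM.1 he
    refine mem_PM.2 ⟨fun i => cd i + ce i, fun i => R.add_mem (hcd i) (hce i), ?_⟩
    rw [← Finset.sum_add_distrib]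
    exact Finset.sum_congr rfl fun i _ => (add_mul _ _ _).symm
  have hP_zero : (0 : D) ∈ PM R x⁻¹ m :=
    mem_PM.2 ⟨fun _ => 0, fun _ => R.zero_mem, by simp⟩
  have hP_neg : ∀ d ∈ PM R x⁻¹ m, -d ∈ PM R x⁻¹ m := by
    rintro d hd
    obtain ⟨cd, hcd, rfl⟩ := mem_PM.1 hd
    refine mem_PM.2 ⟨fun i => -(cd i), fun i => R.neg_mem (hcd i), ?_⟩
    rw [← Finset.sum_neg_distrib]
    exact Finset.sum_congr rfl fun i _ => (neg_mul _ _).symm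
  have hP_lsmul : ∀ t ∈ R, ∀ d ∈ PM R x⁻¹ m, t * d ∈ PM R x⁻¹ m := by
    rintro t ht d hd
    obtain ⟨cd, hcd, rfl⟩ := mem_PM.1 hd
    refine mem_PM.2 ⟨fun i => t * cd i, fun i => R.mul_mem ht (hcd i), ?_⟩
    rw [Finset.mul_sum]
    exact Finset.sum_congr rfl fun i _ => (mul_assoc _ _ _).symm
  have hP_R : ∀ t ∈ R, t ∈ PM R x⁻¹ m := by
    intro t ht
    refine mem_PM.2 ⟨fun i => if i = 0 then t else 0, fun i => ?_, ?_⟩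
    · by_cases h : i = 0 <;> simp [h, ht, R.zero_mem]
    · have h0 : (0:ℕ) ∈ Finset.range (m+1) := Finset.mem_range.2 (Nat.succ_pos m)
      rw [Finset.sum_eq_single_of_mem 0 h0 (fun b _ hb => by simp [hb])]
      simp
  have hP_pow_top : (x⁻¹) ^ (m + 1) ∈ PM R x⁻¹ m := by
    refine mem_PM.2 ⟨fun j => c0 (m - j), fun j => hc0 _, ?_⟩
    rw [hrel]
    conv_rhs => rw [← Finset.sum_range_reflect]
    refine Finset.sum_congr rfl fun i hi => ?_
    have hi' : i ≤ m := Nat.lt_succ_iff.1 (Finset.mem_range.1 hi)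
    have e1 : m + 1 - 1 - i = m - i := by omega
    rw [e1]
    simp only [Nat.sub_sub_self hi']
  have hP_rmul_y : ∀ d ∈ PM R x⁻¹ m, d * x⁻¹ ∈ PM R x⁻¹ m := by
    rintro d hd
    obtain ⟨cd, hcd, rfl⟩ := mem_PM.1 hd
    have hsplit : (∑ i ∈ Finset.range (m+1), cd i * (x⁻¹) ^ i) * x⁻¹
        = (∑ i ∈ Finset.range m, cd i * (x⁻¹) ^ (i+1)) + cd m * (x⁻¹) ^ (m+1) := by
      rw [Finset.sum_mul, Finset.sum_range_succ]
      congr 1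
      · exact Finset.sum_congr rfl fun i _ => by rw [mul_assoc, ← pow_succ]
      · rw [mul_assoc, ← pow_succ]
    rw [hsplit]
    refine hP_add _ ?_ _ (hP_lsmul (cd m) (hcd m) _ hP_pow_top)
    refine mem_PM.2 ⟨fun j => if j = 0 then 0 else cd (j - 1), fun j => ?_, ?_⟩
    · by_cases h : j = 0 <;> simp [h, R.zero_mem, hcd]
    · conv_rhs => rw [Finset.sum_range_succ']
      simp only [Nat.succ_ne_zero, if_false, if_true, reduceIte, Nat.add_sub_cancel,
        zero_mul, add_zero]
  have hP_ypow : ∀ k : ℕ, (x⁻¹) ^ k ∈ PM R x⁻¹ m := by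
    intro k
    induction k with
    | zero => simpa using hP_R 1 R.one_mem
    | succ k ih =>
      rw [pow_succ]
      exact hP_rmul_y _ ih
  have hP_rmulR : ∀ d ∈ PM R x⁻¹ m, ∀ t ∈ R, d * t ∈ PM R x⁻¹ m := by
    rintro d hd t ht
    obtain ⟨cd, hcd, rfl⟩ := mem_PM.1 hd
    refine mem_PM.2 ⟨fun i => cd i * ((x⁻¹) ^ i * t * ((x⁻¹) ^ i)⁻¹), fun i =>
      R.mul_mem (hcd i) ((hconj ((x⁻¹) ^ i) (pow_ne_zero i hy0) t ht).1), ?_⟩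
    rw [Finset.sum_mul]
    exact Finset.sum_congr rfl fun i _ => term_conj (pow_ne_zero i hy0) _ _
  have hP_rmul_ypow : ∀ (j : ℕ), ∀ d ∈ PM R x⁻¹ m, d * (x⁻¹) ^ j ∈ PM R x⁻¹ m := by
    intro j
    induction j with
    | zero => intro d hd; simpa using hd
    | succ j ih =>
      intro d hd
      rw [pow_succ, ← mul_assoc]
      exact hP_rmul_y _ (ih d hd)
  have hP_sum : ∀ (s : Finset ℕ) (f : ℕ → D), (∀ j ∈ s, f j ∈ PM R x⁻¹ m) →
      (∑ j ∈ s, f j) ∈ PM R x⁻¹ m := fun s f h =>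
    Finset.sum_induction f (· ∈ PM R x⁻¹ m) (fun u v hu hv => hP_add u hu v hv) hP_zero h
  have hP_mul : ∀ d ∈ PM R x⁻¹ m, ∀ e ∈ PM R x⁻¹ m, d * e ∈ PM R x⁻¹ m := by
    rintro d hd e he
    obtain ⟨ce, hce, rfl⟩ := mem_PM.1 he
    rw [Finset.mul_sum]
    refine hP_sum _ _ fun j hj => ?_
    rw [← mul_assoc]
    exact hP_rmul_ypow j _ (hP_rmulR d hd (ce j) (hce j))
  let MM : Subring D :=
    { carrier := PM R x⁻¹ m
      zero_mem' := hP_zero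
      one_mem' := hP_R 1 R.one_mem
      add_mem' := fun h1 h2 => hP_add _ h1 _ h2
      neg_mem' := fun h => hP_neg _ h
      mul_mem' := fun h1 h2 => hP_mul _ h1 _ h2 }
  have hPy : x⁻¹ ∈ PM R x⁻¹ m := by simpa using hP_ypow 1
  have hleM : R ≤ MM := fun t ht => hP_R t ht
  have hltM : R < MM := lt_of_le_of_ne hleM (fun h => hxiR (by rw [h]; exact hPy))
  have hMM : MM = ⊤ := hmax MM hltM
  -- uniform power bound
  have hNex : ∀ k : ℕ, ∃ N : ℕ, ∀ i, i ≤ k → a ^ N * (x⁻¹) ^ i ∈ R := by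
    intro k
    induction k with
    | zero =>
      obtain ⟨N, hN⟩ := hC ((x⁻¹) ^ 0)
      exact ⟨N, fun i hi => by rw [Nat.le_zero.1 hi]; exact hN⟩
    | succ k ih =>
      obtain ⟨N1, h1⟩ := ih
      obtain ⟨N2, h2⟩ := hC ((x⁻¹) ^ (k+1))
      refine ⟨max N1 N2, fun i hi => ?_⟩
      by_cases h : i ≤ k
      · exact monoC ha (le_max_left _ _) (h1 i h)
      · have hik : i = k + 1 := by omega
        rw [hik]
        exact monoC ha (le_max_right _ _) h2
  obtain ⟨N, hN⟩ := hNex m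
  have hfin : (a ^ (N+1))⁻¹ ∈ PM R x⁻¹ m := by
    have h : (a ^ (N+1))⁻¹ ∈ MM := by rw [hMM]; exact Subring.mem_top _
    exact h
  obtain ⟨e, he, heq⟩ := mem_PM.1 hfin
  apply hai
  have e1 : a⁻¹ = a ^ N * (a ^ (N+1))⁻¹ := by
    rw [pow_succ' a N, mul_inv_rev, ← mul_assoc, mul_inv_cancel₀ (pow_ne_zero N ha0), one_mul]
  rw [e1, heq, Finset.mul_sum]
  refine R.sum_mem fun i hi => ?_
  have hterm : a ^ N * (e i * (x⁻¹) ^ i) =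
      (a ^ N * e i * (a ^ N)⁻¹) * (a ^ N * (x⁻¹) ^ i) := by
    simp [mul_assoc, inv_mul_cancel_left₀ (pow_ne_zero N ha0)]
  rw [hterm]
  exact R.mul_mem (conjA hduo (pow_mem ha N) (he i))
    (hN i (Nat.lt_succ_iff.1 (Finset.mem_range.1 hi)))

end
end Stmt17

theorem stmt_17 (D : Type*) [DivisionRing D]
    (R : Subring D) (hR : R ≠ ⊤) (hmax : ∀ S : Subring D, R < S → S = ⊤)
    (hduo : ∀ a ∈ R, ∀ r ∈ R, ∃ s ∈ R, a * r = s * a)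
    (hnd : ∃ a ∈ R, a ≠ 0 ∧ ¬∃ b ∈ R, a * b = 1 ∧ b * a = 1) :
    ∀ x : D, x ≠ 0 → x ∈ R ∨ x⁻¹ ∈ R := by
  obtain ⟨a, ha, ha0, hnu⟩ := hnd
  have hai : a⁻¹ ∉ R := fun h => hnu ⟨a⁻¹, h, mul_inv_cancel₀ ha0, inv_mul_cancel₀ ha0⟩
  intro x hx0
  by_cases hxR : x ∈ R
  · exact Or.inl hxR
  by_cases hxiR : x⁻¹ ∈ R
  · exact Or.inr hxiR
  exact absurd (Stmt17.key hmax hduo ha ha0 hai hx0 hxR hxiR) not_false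
end

section
/- Let D be a division ring with a maximal subring R which is a left duo ring and not a division ring. Then M = R \ U(R), the set of non-units of R, is the unique nonzero prime ideal of R, and it is simultaneously the unique maximal left ideal, the unique maximal right ideal, and the unique maximal two-sided ideal of R. Moreover dRd⁻¹ = R and dMd⁻¹ = M for every nonzero d ∈ D. -/
/-- `I` is a left ideal of the subring `R` of `D`, viewed as a set. -/
def IsLeftIdealOf {D : Type*} [DivisionRing D] (R : Subring D) (I : Set D) : Prop :=
  I ⊆ R ∧ (0 : D) ∈ I ∧ (∀ x ∈ I, ∀ y ∈ I, x + y ∈ I) ∧ (∀ x ∈ I, -x ∈ I) ∧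
    (∀ r ∈ R, ∀ x ∈ I, r * x ∈ I)

/-- `I` is a right ideal of the subring `R` of `D`, viewed as a set. -/
def IsRightIdealOf {D : Type*} [DivisionRing D] (R : Subring D) (I : Set D) : Prop :=
  I ⊆ R ∧ (0 : D) ∈ I ∧ (∀ x ∈ I, ∀ y ∈ I, x + y ∈ I) ∧ (∀ x ∈ I, -x ∈ I) ∧
    (∀ r ∈ R, ∀ x ∈ I, x * r ∈ I)

/-- `P` is a prime two-sided ideal of the subring `R` of `D`. -/
def IsPrimeIdealOf {D : Type*} [DivisionRing D] (R : Subring D) (P : Set D) : Prop :=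
  IsIdealOf R P ∧ P ≠ (R : Set D) ∧
    ∀ I J : Set D, IsIdealOf R I → IsIdealOf R J →
      (∀ x ∈ I, ∀ y ∈ J, x * y ∈ P) → I ⊆ P ∨ J ⊆ P

section Aux

variable {D : Type*} [DivisionRing D] {R : Subring D}

lemma unit_iff_aux (x : D) :
    (∃ b ∈ R, x * b = 1 ∧ b * x = 1) ↔ x ≠ 0 ∧ x⁻¹ ∈ R := by
  constructor
  · rintro ⟨b, hb, h1, _⟩
    have hx : x ≠ 0 := by
      rintro rfl
      simp only [zero_mul] at h1
      exact one_ne_zero h1.symm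
    have hbe : x⁻¹ = b := inv_eq_of_mul_eq_one_right h1
    exact ⟨hx, by rw [hbe]; exact hb⟩
  · rintro ⟨hx, hxi⟩
    exact ⟨x⁻¹, hxi, mul_inv_cancel₀ hx, inv_mul_cancel₀ hx⟩

lemma conj_mem_aux (hR : R ≠ ⊤) (hmax : ∀ S : Subring D, R < S → S = ⊤)
    (hduo : ∀ a ∈ R, ∀ r ∈ R, ∃ s ∈ R, a * r = s * a)
    {a : D} (ha : a ∈ R) (ha0 : a ≠ 0) :
    (∀ r ∈ R, a * r * a⁻¹ ∈ R) ∧ (∀ r ∈ R, a⁻¹ * r * a ∈ R) := by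
  have h1 : ∀ r ∈ R, a * r * a⁻¹ ∈ R := by
    intro r hr
    obtain ⟨s, hs, he⟩ := hduo a ha r hr
    have : a * r * a⁻¹ = s := by rw [he, mul_inv_cancel_right₀ ha0]
    rwa [this]
  let S : Subring D :=
    { carrier := {d | a * d * a⁻¹ ∈ R}
      one_mem' := by
        show a * 1 * a⁻¹ ∈ R
        rw [mul_one, mul_inv_cancel₀ ha0]; exact R.one_mem
      zero_mem' := by
        show a * 0 * a⁻¹ ∈ R
        rw [mul_zero, zero_mul]; exact R.zero_mem
      add_mem' := by
        intro x y hx hy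
        show a * (x + y) * a⁻¹ ∈ R
        have : a * (x + y) * a⁻¹ = a * x * a⁻¹ + a * y * a⁻¹ := by
          rw [mul_add, add_mul]
        rw [this]; exact R.add_mem hx hy
      neg_mem' := by
        intro x hx
        show a * (-x) * a⁻¹ ∈ R
        have : a * (-x) * a⁻¹ = -(a * x * a⁻¹) := by
          rw [mul_neg, neg_mul]
        rw [this]; exact R.neg_mem hx
      mul_mem' := by
        intro x y hx hy
        show a * (x * y) * a⁻¹ ∈ R
        have : a * (x * y) * a⁻¹ = (a * x * a⁻¹) * (a * y * a⁻¹) := by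
          simp [mul_assoc, inv_mul_cancel_left₀ ha0]
        rw [this]; exact R.mul_mem hx hy }
  have hRS : R ≤ S := fun r hr => h1 r hr
  have hSne : S ≠ ⊤ := by
    intro hS
    apply hR
    rw [Subring.eq_top_iff']
    intro x
    have hx : a⁻¹ * x * a ∈ S := by rw [hS]; exact Subring.mem_top _
    have hx' : a * (a⁻¹ * x * a) * a⁻¹ ∈ R := hx
    have : a * (a⁻¹ * x * a) * a⁻¹ = x := by
      simp [mul_assoc, mul_inv_cancel_left₀ ha0, mul_inv_cancel₀ ha0]
    rwa [this] at hx'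
  have hSR : S = R := by
    rcases hRS.lt_or_eq with h | h
    · exact absurd (hmax S h) hSne
    · exact h.symm
  refine ⟨h1, fun r hr => ?_⟩
  have hmem : a⁻¹ * r * a ∈ S := by
    show a * (a⁻¹ * r * a) * a⁻¹ ∈ R
    have : a * (a⁻¹ * r * a) * a⁻¹ = r := by
      simp [mul_assoc, mul_inv_cancel_left₀ ha0, mul_inv_cancel₀ ha0]
    rwa [this]
  rwa [hSR] at hmem

lemma reach_aux (hR : R ≠ ⊤) (hmax : ∀ S : Subring D, R < S → S = ⊤)
    (hduo : ∀ a ∈ R, ∀ r ∈ R, ∃ s ∈ R, a * r = s * a)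
    {m : D} (hm : m ∈ R) (hm0 : m ≠ 0) (hmi : m⁻¹ ∉ R) (d : D) :
    ∃ k : ℕ, m ^ k * d ∈ R := by
  have hconj : ∀ j : ℕ, ∀ r ∈ R, m ^ j * r * (m ^ j)⁻¹ ∈ R := fun j =>
    (conj_mem_aux hR hmax hduo (pow_mem hm j) (pow_ne_zero j hm0)).1
  let S : Subring D :=
    { carrier := {d : D | ∃ k : ℕ, m ^ k * d ∈ R}
      one_mem' := ⟨0, by simpa using R.one_mem⟩
      zero_mem' := ⟨0, by simpa using R.zero_mem⟩
      add_mem' := by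
        rintro x y ⟨k, hk⟩ ⟨j, hj⟩
        refine ⟨k + j, ?_⟩
        have e1 : m ^ (k + j) * x = m ^ j * (m ^ k * x) := by
          rw [← mul_assoc, ← pow_add, add_comm]
        have e2 : m ^ (k + j) * y = m ^ k * (m ^ j * y) := by
          rw [← mul_assoc, ← pow_add]
        have : m ^ (k + j) * (x + y) = m ^ j * (m ^ k * x) + m ^ k * (m ^ j * y) := by
          rw [mul_add, e1, e2]
        rw [this]
        exact R.add_mem (R.mul_mem (pow_mem hm j) hk) (R.mul_mem (pow_mem hm k) hj)
      neg_mem' := by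
        rintro x ⟨k, hk⟩
        exact ⟨k, by simpa [mul_neg] using R.neg_mem hk⟩
      mul_mem' := by
        rintro x y ⟨k, hk⟩ ⟨j, hj⟩
        refine ⟨j + k, ?_⟩
        have : m ^ (j + k) * (x * y) =
            (m ^ j * (m ^ k * x) * (m ^ j)⁻¹) * (m ^ j * y) := by
          simp [mul_assoc, inv_mul_cancel_left₀ (pow_ne_zero j hm0), pow_add]
        rw [this]
        exact R.mul_mem (hconj j _ hk) hj }
  have hms : m⁻¹ ∈ S := ⟨1, by rw [pow_one, mul_inv_cancel₀ hm0]; exact R.one_mem⟩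
  have hRS : R ≤ S := fun r hr => ⟨0, by simpa using hr⟩
  have hlt : R < S := lt_of_le_of_ne hRS (by
    intro h
    apply hmi
    rw [h]
    exact hms)
  have hd : d ∈ S := by rw [hmax S hlt]; exact Subring.mem_top d
  exact hd

lemma keylocal_aux (hR : R ≠ ⊤) (hmax : ∀ S : Subring D, R < S → S = ⊤)
    (hduo : ∀ a ∈ R, ∀ r ∈ R, ∃ s ∈ R, a * r = s * a)
    {m : D} (hm : m ∈ R) (hm0 : m ≠ 0) (hmi : m⁻¹ ∉ R)
    (hn0 : (1 : D) - m ≠ 0) (hni : ((1 : D) - m)⁻¹ ∉ R) : False := by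
  have key : m * (1 - m)⁻¹ = (1 - m)⁻¹ - 1 := by
    have e : m * (1 - m)⁻¹ = (1 - (1 - m)) * (1 - m)⁻¹ := by
      rw [sub_sub_cancel]
    rw [e, sub_mul, one_mul, mul_inv_cancel₀ hn0]
  have hdesc : ∀ k : ℕ, m ^ k * (1 - m)⁻¹ ∈ R → ((1 : D) - m)⁻¹ ∈ R := by
    intro k
    induction k with
    | zero => intro h; simpa using h
    | succ k ih =>
      intro h
      apply ih
      have e : m ^ k * (1 - m)⁻¹ = m ^ (k + 1) * (1 - m)⁻¹ + m ^ k := by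
        have e1 : m ^ (k + 1) * (1 - m)⁻¹ = m ^ k * (m * (1 - m)⁻¹) := by
          rw [pow_succ, mul_assoc]
        rw [e1, key, mul_sub, mul_one, sub_add_cancel]
      rw [e]
      exact R.add_mem h (pow_mem hm k)
  obtain ⟨k, hk⟩ := reach_aux hR hmax hduo hm hm0 hmi ((1 : D) - m)⁻¹
  exact hni (hdesc k hk)

end Aux

theorem stmt_18 (D : Type*) [DivisionRing D]
    (R : Subring D) (hR : R ≠ ⊤) (hmax : ∀ S : Subring D, R < S → S = ⊤)
    (hduo : ∀ a ∈ R, ∀ r ∈ R, ∃ s ∈ R, a * r = s * a)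
    (hnd : ∃ a ∈ R, a ≠ 0 ∧ ¬∃ b ∈ R, a * b = 1 ∧ b * a = 1)
    (M : Set D) (hM : M = {x : D | x ∈ R ∧ ¬∃ b ∈ R, x * b = 1 ∧ b * x = 1}) :
    (IsPrimeIdealOf R M ∧ (∃ x ∈ M, x ≠ 0) ∧
      ∀ P : Set D, IsPrimeIdealOf R P → (∃ x ∈ P, x ≠ 0) → P = M) ∧
    (IsLeftIdealOf R M ∧ M ≠ (R : Set D) ∧
      ∀ I : Set D, IsLeftIdealOf R I → I ≠ (R : Set D) → I ⊆ M) ∧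
    (IsRightIdealOf R M ∧ M ≠ (R : Set D) ∧
      ∀ I : Set D, IsRightIdealOf R I → I ≠ (R : Set D) → I ⊆ M) ∧
    (IsIdealOf R M ∧ M ≠ (R : Set D) ∧
      ∀ I : Set D, IsIdealOf R I → I ≠ (R : Set D) → I ⊆ M) ∧
    (∀ d : D, d ≠ 0 →
      (fun x => d * x * d⁻¹) '' (R : Set D) = (R : Set D) ∧
      (fun x => d * x * d⁻¹) '' M = M) := by
  -- characterization of M
  have hMc : ∀ x : D, x ∈ M ↔ x ∈ R ∧ (x = 0 ∨ x⁻¹ ∉ R) := by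
    intro x
    rw [hM]
    simp only [Set.mem_setOf_eq]
    constructor
    · rintro ⟨hx, hnu⟩
      refine ⟨hx, ?_⟩
      by_contra hc
      push_neg at hc
      exact hnu ((unit_iff_aux (R := R) x).2 ⟨hc.1, hc.2⟩)
    · rintro ⟨hx, h2⟩
      refine ⟨hx, fun hu => ?_⟩
      obtain ⟨hx0, hxi⟩ := (unit_iff_aux (R := R) x).1 hu
      rcases h2 with h | h
      · exact hx0 h
      · exact h hxi
  have hinv0 : ((0 : D))⁻¹ ∈ R := by simpa using R.zero_mem
  -- the distinguished nonzero nonunit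
  obtain ⟨a₀, ha₀R, ha₀0, ha₀nu⟩ := hnd
  have ha₀M : a₀ ∈ M := by rw [hM]; exact ⟨ha₀R, ha₀nu⟩
  have ha₀i : a₀⁻¹ ∉ R := by
    rcases ((hMc a₀).1 ha₀M).2 with h | h
    · exact absurd h ha₀0
    · exact h
  -- basic ideal structure of M
  have hMR : M ⊆ (R : Set D) := fun x hx => ((hMc x).1 hx).1
  have h0M : (0 : D) ∈ M := (hMc 0).2 ⟨R.zero_mem, Or.inl rfl⟩
  have hnegM : ∀ x ∈ M, -x ∈ M := by
    intro x hx
    obtain ⟨hxR, hx'⟩ := (hMc x).1 hx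
    refine (hMc _).2 ⟨R.neg_mem hxR, ?_⟩
    rcases hx' with rfl | h
    · exact Or.inl neg_zero
    · right; intro hc; apply h; rw [inv_neg] at hc; simpa using R.neg_mem hc
  have habs : ∀ r ∈ R, ∀ x ∈ M, r * x ∈ M ∧ x * r ∈ M := by
    intro r hr x hx
    obtain ⟨hxR, hx'⟩ := (hMc x).1 hx
    constructor
    · refine (hMc _).2 ⟨R.mul_mem hr hxR, ?_⟩
      rcases hx' with rfl | h
      · exact Or.inl (mul_zero r)
      · by_cases hz : r * x = 0
        · exact Or.inl hz
        right
        intro hc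
        apply h
        have hr0 : r ≠ 0 := fun h0 => hz (by rw [h0, zero_mul])
        have : (r * x)⁻¹ * r = x⁻¹ := by
          rw [mul_inv_rev, mul_assoc, inv_mul_cancel₀ hr0, mul_one]
        rw [← this]
        exact R.mul_mem hc hr
    · refine (hMc _).2 ⟨R.mul_mem hxR hr, ?_⟩
      rcases hx' with rfl | h
      · exact Or.inl (zero_mul r)
      · by_cases hz : x * r = 0
        · exact Or.inl hz
        right
        intro hc
        apply h
        have hr0 : r ≠ 0 := fun h0 => hz (by rw [h0, mul_zero])
        have : r * (x * r)⁻¹ = x⁻¹ := by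
          rw [mul_inv_rev, ← mul_assoc, mul_inv_cancel₀ hr0, one_mul]
        rw [← this]
        exact R.mul_mem hr hc
  have haddM : ∀ x ∈ M, ∀ y ∈ M, x + y ∈ M := by
    intro x hx y hy
    obtain ⟨hxR, hx'⟩ := (hMc x).1 hx
    obtain ⟨hyR, hy'⟩ := (hMc y).1 hy
    refine (hMc _).2 ⟨R.add_mem hxR hyR, ?_⟩
    by_contra hc
    push_neg at hc
    obtain ⟨hs0, hsi⟩ := hc
    have hu0 : (x + y)⁻¹ ≠ 0 := inv_ne_zero hs0
    set u := (x + y)⁻¹ with hu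
    have hmn : u * x + u * y = 1 := by rw [← mul_add]; exact inv_mul_cancel₀ hs0
    have hmR : u * x ∈ R := R.mul_mem hsi hxR
    have hnR : u * y ∈ R := R.mul_mem hsi hyR
    -- u * x is not a unit
    have hmnu : (u * x)⁻¹ ∉ R := by
      intro hinvR
      by_cases hz : u * x = 0
      · -- then x = 0 and y = x + y, contradicting y nonunit
        have hx0 : x = 0 := by
          rcases mul_eq_zero.1 hz with h | h
          · exact absurd h hu0
          · exact h
        have hyy : y = x + y := by rw [hx0, zero_add]
        rcases hy' with h | h
        · exact hs0 (by rw [← hyy, h])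
        · exact h (by rw [hyy]; exact hsi)
      · rcases hx' with h | h
        · exact hz (by rw [h, mul_zero])
        have hx0 : x ≠ 0 := fun h0 => hz (by rw [h0, mul_zero])
        apply h
        have e : (u * x)⁻¹ * u = x⁻¹ := by
          rw [mul_inv_rev, mul_assoc, inv_mul_cancel₀ hu0, mul_one]
        rw [← e]
        exact R.mul_mem hinvR hsi
    have hnnu : (u * y)⁻¹ ∉ R := by
      intro hinvR
      by_cases hz : u * y = 0
      · have hy0 : y = 0 := by
          rcases mul_eq_zero.1 hz with h | h
          · exact absurd h hu0
          · exact h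
        have hxx : x = x + y := by rw [hy0, add_zero]
        rcases hx' with h | h
        · exact hs0 (by rw [← hxx, h])
        · exact h (by rw [hxx]; exact hsi)
      · rcases hy' with h | h
        · exact hz (by rw [h, mul_zero])
        apply h
        have e : (u * y)⁻¹ * u = y⁻¹ := by
          rw [mul_inv_rev, mul_assoc, inv_mul_cancel₀ hu0, mul_one]
        rw [← e]
        exact R.mul_mem hinvR hsi
    have hm0 : u * x ≠ 0 := fun h0 => hmnu (by rw [h0]; exact hinv0)
    have hn0 : (1 : D) - u * x ≠ 0 := by
      have : (1 : D) - u * x = u * y := by rw [← hmn]; abel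
      rw [this]
      exact fun h0 => hnnu (by rw [h0]; exact hinv0)
    have hni : ((1 : D) - u * x)⁻¹ ∉ R := by
      have : (1 : D) - u * x = u * y := by rw [← hmn]; abel
      rw [this]
      exact hnnu
    exact keylocal_aux hR hmax hduo hmR hm0 hmnu hn0 hni
  have hMideal : IsIdealOf R M := ⟨hMR, h0M, haddM, hnegM, habs⟩
  -- M ≠ R
  have hMne : M ≠ (R : Set D) := by
    intro h
    have h1 : (1 : D) ∈ M := by rw [h]; exact R.one_mem
    rcases ((hMc 1).1 h1).2 with h2 | h2
    · exact one_ne_zero h2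
    · exact h2 (by rw [inv_one]; exact R.one_mem)
  -- every proper left ideal is inside M
  have hLsub : ∀ I : Set D, IsLeftIdealOf R I → I ≠ (R : Set D) → I ⊆ M := by
    rintro I ⟨hIR, h0, hadd, hneg, hsmul⟩ hne x hxI
    refine (hMc x).2 ⟨hIR hxI, ?_⟩
    by_contra hc
    push_neg at hc
    obtain ⟨hx0, hxi⟩ := hc
    have h1 : (1 : D) ∈ I := by
      have := hsmul x⁻¹ hxi x hxI
      rwa [inv_mul_cancel₀ hx0] at this
    apply hne
    apply Set.Subset.antisymm hIR
    intro r hr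
    have := hsmul r hr 1 h1
    rwa [mul_one] at this
  have hRsub : ∀ I : Set D, IsRightIdealOf R I → I ≠ (R : Set D) → I ⊆ M := by
    rintro I ⟨hIR, h0, hadd, hneg, hsmul⟩ hne x hxI
    refine (hMc x).2 ⟨hIR hxI, ?_⟩
    by_contra hc
    push_neg at hc
    obtain ⟨hx0, hxi⟩ := hc
    have h1 : (1 : D) ∈ I := by
      have := hsmul x⁻¹ hxi x hxI
      rwa [mul_inv_cancel₀ hx0] at this
    apply hne
    apply Set.Subset.antisymm hIR
    intro r hr
    have := hsmul r hr 1 h1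
    rwa [one_mul] at this
  have hIsub : ∀ I : Set D, IsIdealOf R I → I ≠ (R : Set D) → I ⊆ M := by
    rintro I ⟨hIR, h0, hadd, hneg, hsmul⟩ hne
    exact hLsub I ⟨hIR, h0, hadd, hneg, fun r hr x hx => (hsmul r hr x hx).1⟩ hne
  -- M is prime
  have hMprime : IsPrimeIdealOf R M := by
    refine ⟨hMideal, hMne, ?_⟩
    intro I J hI hJ hprod
    by_cases hIM : I ⊆ M
    · exact Or.inl hIM
    right
    have hIR : I = (R : Set D) := by
      by_contra h
      exact hIM (hIsub I hI h)
    intro y hy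
    have h1I : (1 : D) ∈ I := by rw [hIR]; exact R.one_mem
    have := hprod 1 h1I y hy
    rwa [one_mul] at this
  -- conjugation facts
  have hconj : ∀ a : D, a ∈ R → a ≠ 0 →
      (∀ r ∈ R, a * r * a⁻¹ ∈ R) ∧ (∀ r ∈ R, a⁻¹ * r * a ∈ R) :=
    fun a ha ha0 => conj_mem_aux hR hmax hduo ha ha0
  -- uniqueness of the nonzero prime
  have huniq : ∀ P : Set D, IsPrimeIdealOf R P → (∃ x ∈ P, x ≠ 0) → P = M := by
    rintro P ⟨⟨hPR, hP0, hPadd, hPneg, hPabs⟩, hPne, hPprime⟩ ⟨p, hpP, hp0⟩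
    have hPfull : ∀ q : D, (1 : D) ∈ P → False := by
      intro q h1
      apply hPne
      apply Set.Subset.antisymm hPR
      intro r hr
      have := (hPabs r hr 1 h1).1
      rwa [mul_one] at this
    have hPM : P ⊆ M := by
      intro x hxP
      refine (hMc x).2 ⟨hPR hxP, ?_⟩
      by_contra hc
      push_neg at hc
      have h1 : (1 : D) ∈ P := by
        have := (hPabs x⁻¹ hc.2 x hxP).1
        rwa [inv_mul_cancel₀ hc.1] at this
      exact hPfull 1 h1
    have hpinv : p⁻¹ ∉ R := by
      rcases ((hMc p).1 (hPM hpP)).2 with h | h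
      · exact absurd h hp0
      · exact h
    have hpR : p ∈ R := hPR hpP
    -- powers: x^(k+1) ∈ P implies x ∈ P
    have hpow : ∀ x : D, x ∈ R → x ≠ 0 → ∀ k : ℕ, x ^ (k + 1) ∈ P → x ∈ P := by
      intro x hxR hx0
      have hIdeal : ∀ j : ℕ, IsIdealOf R ((fun r => r * x ^ j) '' (R : Set D)) := by
        intro j
        have hxj0 : x ^ j ≠ 0 := pow_ne_zero j hx0
        refine ⟨?_, ?_, ?_, ?_, ?_⟩
        · rintro _ ⟨r, hr, rfl⟩
          exact R.mul_mem hr (pow_mem hxR j)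
        · exact ⟨0, R.zero_mem, by simp⟩
        · rintro _ ⟨r, hr, rfl⟩ _ ⟨s, hs, rfl⟩
          refine ⟨r + s, R.add_mem hr hs, ?_⟩
          simp [add_mul]
        · rintro _ ⟨r, hr, rfl⟩
          refine ⟨-r, R.neg_mem hr, ?_⟩
          simp [neg_mul]
        · rintro r hr _ ⟨s, hs, rfl⟩
          constructor
          · refine ⟨r * s, R.mul_mem hr hs, ?_⟩
            simp [mul_assoc]
          · refine ⟨s * (x ^ j * r * (x ^ j)⁻¹),
              R.mul_mem hs ((hconj (x ^ j) (pow_mem hxR j) hxj0).1 r hr), ?_⟩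
            show s * (x ^ j * r * (x ^ j)⁻¹) * x ^ j = s * x ^ j * r
            simp [mul_assoc, inv_mul_cancel_left₀ hxj0, inv_mul_cancel₀ hxj0]
      intro k
      induction k with
      | zero => intro h; simpa using h
      | succ k ih =>
        intro h
        have hmain := hPprime _ _ (hIdeal 1) (hIdeal (k + 1)) ?_
        · rcases hmain with hI | hJ
          · have : x ∈ (fun r => r * x ^ 1) '' (R : Set D) :=
              ⟨1, R.one_mem, by simp⟩
            exact hI this
          · apply ih
            have : x ^ (k + 1) ∈ (fun r => r * x ^ (k + 1)) '' (R : Set D) :=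
              ⟨1, R.one_mem, by simp⟩
            exact hJ this
        · rintro _ ⟨r, hr, rfl⟩ _ ⟨s, hs, rfl⟩
          have hxs : x * s * x⁻¹ ∈ R := (hconj x hxR hx0).1 s hs
          have e : (r * x ^ 1) * (s * x ^ (k + 1)) = (r * (x * s * x⁻¹)) * x ^ (k + 2) := by
            have : x ^ (k + 2) = x * x ^ (k + 1) := (pow_succ' x (k + 1))
            rw [this, pow_one]
            simp [mul_assoc, inv_mul_cancel_left₀ hx0]
          rw [e]
          exact (hPabs _ (R.mul_mem hr hxs) _ h).1
    have hMP : M ⊆ P := by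
      intro x hxM
      obtain ⟨hxR, hx'⟩ := (hMc x).1 hxM
      rcases hx' with rfl | hxi
      · exact hP0
      · have hx0 : x ≠ 0 := fun h => hxi (by rw [h]; exact hinv0)
        obtain ⟨k, hk⟩ := reach_aux hR hmax hduo hxR hx0 hxi p⁻¹
        have hxkP : x ^ k ∈ P := by
          have e : x ^ k = (x ^ k * p⁻¹) * p := by
            rw [mul_assoc, inv_mul_cancel₀ hp0, mul_one]
          rw [e]
          exact (hPabs _ hk p hpP).1
        cases k with
        | zero =>
          exfalso
          exact hPfull 1 (by simpa using hxkP)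
        | succ k => exact hpow x hxR hx0 k hxkP
    exact Set.Subset.antisymm hPM hMP
  -- global conjugation
  have hconjD : ∀ d : D, d ≠ 0 →
      (∀ x ∈ R, d * x * d⁻¹ ∈ R) ∧ (∀ x ∈ R, d⁻¹ * x * d ∈ R) := by
    intro d hd0
    obtain ⟨k, hk⟩ := reach_aux hR hmax hduo ha₀R ha₀0 ha₀i d
    have hp0 : a₀ ^ k ≠ 0 := pow_ne_zero k ha₀0
    set a := a₀ ^ k * d with ha
    have haR : a ∈ R := hk
    have ha0 : a ≠ 0 := mul_ne_zero hp0 hd0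
    have hd : d = (a₀ ^ k)⁻¹ * a := by
      rw [ha, inv_mul_cancel_left₀ hp0]
    have hdinv : d⁻¹ = a⁻¹ * a₀ ^ k := by
      rw [hd, mul_inv_rev, inv_inv]
    constructor
    · intro x hx
      have h1 := (hconj a haR ha0).1 x hx
      have h2 := (hconj (a₀ ^ k) (pow_mem ha₀R k) hp0).2 _ h1
      have e : d * x * d⁻¹ = (a₀ ^ k)⁻¹ * (a * x * a⁻¹) * a₀ ^ k := by
        rw [hdinv, hd]
        simp [mul_assoc]
      rwa [e]
    · intro x hx
      have h1 := (hconj (a₀ ^ k) (pow_mem ha₀R k) hp0).1 x hx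
      have h2 := (hconj a haR ha0).2 _ h1
      have e : d⁻¹ * x * d = a⁻¹ * (a₀ ^ k * x * (a₀ ^ k)⁻¹) * a := by
        rw [hdinv, hd]
        simp [mul_assoc]
      rwa [e]
  refine ⟨⟨hMprime, ⟨a₀, ha₀M, ha₀0⟩, huniq⟩,
    ⟨⟨hMR, h0M, haddM, hnegM, fun r hr x hx => (habs r hr x hx).1⟩, hMne, hLsub⟩,
    ⟨⟨hMR, h0M, haddM, hnegM, fun r hr x hx => (habs r hr x hx).2⟩, hMne, hRsub⟩,
    ⟨hMideal, hMne, hIsub⟩, ?_⟩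
  intro d hd0
  obtain ⟨hcd1, hcd2⟩ := hconjD d hd0
  have hfix : ∀ y : D, d * (d⁻¹ * y * d) * d⁻¹ = y := by
    intro y
    simp [mul_assoc, mul_inv_cancel_left₀ hd0, mul_inv_cancel₀ hd0]
  have hfix' : ∀ y : D, d⁻¹ * (d * y * d⁻¹) * d = y := by
    intro y
    simp [mul_assoc, inv_mul_cancel_left₀ hd0, inv_mul_cancel₀ hd0]
  constructor
  · apply Set.Subset.antisymm
    · rintro _ ⟨x, hx, rfl⟩
      exact hcd1 x hx
    · intro y hy
      exact ⟨d⁻¹ * y * d, hcd2 y hy, hfix y⟩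
  · apply Set.Subset.antisymm
    · rintro _ ⟨x, hx, rfl⟩
      obtain ⟨hxR, hx'⟩ := (hMc x).1 hx
      show d * x * d⁻¹ ∈ M
      refine (hMc _).2 ⟨hcd1 x hxR, ?_⟩
      rcases hx' with rfl | hxi
      · exact Or.inl (by rw [mul_zero, zero_mul])
      right
      intro hc
      apply hxi
      have hx0 : x ≠ 0 := fun h => hxi (by rw [h]; exact hinv0)
      have he : (d * x * d⁻¹)⁻¹ = d * x⁻¹ * d⁻¹ := by
        rw [mul_inv_rev, mul_inv_rev, inv_inv]
        simp [mul_assoc]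
      rw [he] at hc
      have := hcd2 _ hc
      rwa [hfix' x⁻¹] at this
    · intro y hy
      obtain ⟨hyR, hy'⟩ := (hMc y).1 hy
      refine ⟨d⁻¹ * y * d, ?_, hfix y⟩
      refine (hMc _).2 ⟨hcd2 y hyR, ?_⟩
      rcases hy' with rfl | hyi
      · exact Or.inl (by rw [mul_zero, zero_mul])
      right
      intro hc
      apply hyi
      have he : (d⁻¹ * y * d)⁻¹ = d⁻¹ * y⁻¹ * d := by
        rw [mul_inv_rev, mul_inv_rev, inv_inv]
        simp [mul_assoc]
      rw [he] at hc
      have := hcd1 _ hc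
      rwa [hfix y⁻¹] at this
end
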